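/- arXiv:math/0209191 — 6 statements merged into one kernel-verified Lean document; each statement's English description precedes it below -/
import Mathlib

section
/- For n ≥ 3, the group Aut(F_n) is the normal closure of a single element of order 2: there exists x ∈ Aut(F_n) with x ≠ 1 and x² = 1 such that the normal closure of {x} is all of Aut(F_n). -/
set_option linter.unusedSectionVars false

namespace AutFN
open FreeGroup List

variable {α : Type*} [DecidableEq α]

/-- The predicate that a letter pair (in this order) does not cancel. -/
def Ok (a b : α × Bool) : Prop := ¬(a.1 = b.1 ∧ a.2 = !b.2)

/-- A word is reduced. -/
def Rd (L : List (α × Bool)) : Prop := List.Chain' Ok L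

lemma rd_nil : Rd ([] : List (α × Bool)) := List.isChain_nil

lemma Rd.reduce_eq {L : List (α × Bool)} (h : Rd L) : reduce L = L := by
  induction L with
  | nil => rfl
  | cons x L ih =>
    have hL : Rd L := h.tail
    rw [reduce.cons, ih hL]
    cases L with
    | nil => rfl
    | cons b T =>
      have hok : Ok x b := List.isChain_cons_cons.mp h |>.1
      simp only [Ok] at hok
      simp only [if_neg hok]

lemma rd_reduce (L : List (α × Bool)) : Rd (reduce L) := by
  induction L with
  | nil => exact rd_nil
  | cons x L ih =>
    rw [reduce.cons]
    rcases hL : reduce L with _ | ⟨b, T⟩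
    · exact List.isChain_singleton x
    · rw [hL] at ih
      by_cases h : x.1 = b.1 ∧ x.2 = !b.2
      · simp only [if_pos h]
        exact ih.tail
      · simp only [if_neg h]
        exact List.isChain_cons_cons.mpr ⟨h, ih⟩

lemma rd_toWord (x : FreeGroup α) : Rd x.toWord := by
  rw [← reduce_toWord]
  exact rd_reduce _

lemma Rd.left {L₁ L₂ : List (α × Bool)} (h : Rd (L₁ ++ L₂)) : Rd L₁ :=
  (List.isChain_append.mp h).1

lemma Rd.right {L₁ L₂ : List (α × Bool)} (h : Rd (L₁ ++ L₂)) : Rd L₂ :=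
  (List.isChain_append.mp h).2.1

lemma rd_buffer {X Z W : List (α × Bool)} (h1 : Rd (X ++ Z)) (h2 : Rd (Z ++ W))
    (hZ : Z ≠ []) : Rd (X ++ Z ++ W) := by
  rw [List.append_assoc]
  rcases List.isChain_append.mp h1 with ⟨hX, hZ1, hj1⟩
  refine List.isChain_append.mpr ⟨hX, h2, ?_⟩
  intro x hx y hy
  apply hj1 x hx
  rcases Z with _ | ⟨z, Z'⟩
  · exact absurd rfl hZ
  · simpa using hy

/-- `mk` of a reduced word has that word as `toWord`. -/
lemma toWord_mk_rd {L : List (α × Bool)} (h : Rd L) : (mk L).toWord = L := by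
  rw [toWord_mk, h.reduce_eq]

lemma norm_mk_rd {L : List (α × Bool)} (h : Rd L) : FreeGroup.norm (mk L) = L.length := by
  rw [FreeGroup.norm, toWord_mk_rd h]

/-- inverse of a letter -/
def linv (a : α × Bool) : α × Bool := (a.1, !a.2)

lemma invRev_cons (a : α × Bool) (L : List (α × Bool)) :
    invRev (a :: L) = invRev L ++ [linv a] := by
  simp [invRev, linv]

lemma invRev_append (L₁ L₂ : List (α × Bool)) :
    invRev (L₁ ++ L₂) = invRev L₂ ++ invRev L₁ := by
  simp [invRev]

/-- Maximal cancellation decomposition for concatenation of two reduced words. -/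
lemma cancel_decomp : ∀ (L₁ : List (α × Bool)), ∀ {L₂ : List (α × Bool)},
    Rd L₁ → Rd L₂ → ∃ A B C : List (α × Bool),
      L₁ = A ++ invRev C ∧ L₂ = C ++ B ∧ Rd (A ++ B) := by
  intro L₁
  induction L₁ using List.reverseRecOn with
  | nil =>
    intro L₂ _ h2
    exact ⟨[], L₂, [], by simp [invRev], by simp, by simpa using h2⟩
  | append_singleton T a ih =>
    intro L₂ h1 h2
    rcases L₂ with _ | ⟨b, T₂⟩
    · exact ⟨T ++ [a], [], [], by simp [invRev], by simp, by simpa using h1⟩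
    · by_cases hc : a.1 = b.1 ∧ a.2 = !b.2
      · -- cancellation at the junction
        have hT : Rd T := h1.left
        have hT₂ : Rd T₂ := (show Rd ([b] ++ T₂) from h2).right
        obtain ⟨A, B, C, e1, e2, hAB⟩ := ih hT hT₂
        refine ⟨A, B, b :: C, ?_, ?_, hAB⟩
        · rw [invRev_cons, ← List.append_assoc, ← e1]
          have : linv b = a := by
            rcases a with ⟨a1, a2⟩; rcases b with ⟨b1, b2⟩
            obtain ⟨h1', h2'⟩ := hc
            simp only [linv]
            simp_all
          rw [this]
        · rw [List.cons_append, ← e2]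
      · refine ⟨T ++ [a], b :: T₂, [], by simp [invRev], by simp, ?_⟩
        refine List.isChain_append.mpr ⟨h1, h2, ?_⟩
        intro x hx y hy
        simp only [List.getLast?_concat, Option.mem_def, Option.some.injEq] at hx
        simp only [List.head?_cons, Option.mem_def, Option.some.injEq] at hy
        subst hx; subst hy
        exact hc

/-- Maximal cancellation decomposition, group version. -/
theorem mul_decomp (x y : FreeGroup α) :
    ∃ A B C : List (α × Bool), x.toWord = A ++ invRev C ∧ y.toWord = C ++ B ∧
      (x * y).toWord = A ++ B := by
  obtain ⟨A, B, C, e1, e2, hAB⟩ := cancel_decomp x.toWord (rd_toWord x) (rd_toWord y)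
  refine ⟨A, B, C, e1, e2, ?_⟩
  have hx : x = mk A * (mk C)⁻¹ := by
    rw [inv_mk, mul_mk, ← e1, mk_toWord]
  have hy : y = mk C * mk B := by
    rw [mul_mk, ← e2, mk_toWord]
  have : x * y = mk (A ++ B) := by
    rw [hx, hy, mul_assoc, ← mul_assoc (mk C)⁻¹, inv_mul_cancel, one_mul, mul_mk]
  rw [this, toWord_mk_rd hAB]



/-! ### Part 2: norm arithmetic, square lemma, collapse and triple lemmas -/

lemma appsplit {γ : Type*} {X Y Z W : List γ} (h : X ++ Y = Z ++ W)
    (hlen : W.length ≤ Y.length) : ∃ Y', Y = Y' ++ W ∧ Z = X ++ Y' := by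
  have hl : X.length + Y.length = Z.length + W.length := by
    have := congrArg List.length h; simpa using this
  have hXZ : X.length ≤ Z.length := by omega
  have hX : X = Z.take X.length := by
    have h2 := congrArg (List.take X.length) h
    rw [List.take_left] at h2
    rw [List.take_append, Nat.sub_eq_zero_of_le hXZ, List.take_zero,
      List.append_nil] at h2
    exact h2
  have hZ : Z = X ++ Z.drop X.length := by
    conv_lhs => rw [← List.take_append_drop X.length Z]
    rw [← hX]
  refine ⟨Z.drop X.length, ?_, hZ⟩
  rw [hZ, List.append_assoc] at h
  exact List.append_cancel_left h

lemma norm_eq_toWord_length (x : FreeGroup α) : FreeGroup.norm x = x.toWord.length := rfl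

lemma norm_pos {x : FreeGroup α} (h : x ≠ 1) : 1 ≤ FreeGroup.norm x := by
  rcases Nat.eq_zero_or_pos (FreeGroup.norm x) with h0 | h1
  · exact absurd (norm_eq_zero.mp h0) h
  · exact h1

/-- Twice the cancellation between `x` and `y`. -/
def cancel2 (x y : FreeGroup α) : ℕ := FreeGroup.norm x + FreeGroup.norm y - FreeGroup.norm (x * y)

/-- Full decomposition package. -/
lemma mul_decomp' (x y : FreeGroup α) :
    ∃ A B C : List (α × Bool), x.toWord = A ++ invRev C ∧ y.toWord = C ++ B ∧
      (x * y).toWord = A ++ B ∧ FreeGroup.norm x = A.length + C.length ∧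
      FreeGroup.norm y = C.length + B.length ∧ FreeGroup.norm (x * y) = A.length + B.length ∧
      cancel2 x y = 2 * C.length := by
  obtain ⟨A, B, C, e1, e2, e3⟩ := mul_decomp x y
  have h1 : FreeGroup.norm x = A.length + C.length := by
    rw [norm_eq_toWord_length, e1]
    rw [List.length_append, invRev_length]
  have h2 : FreeGroup.norm y = C.length + B.length := by
    rw [norm_eq_toWord_length, e2, List.length_append]
  have h3 : FreeGroup.norm (x * y) = A.length + B.length := by
    rw [norm_eq_toWord_length, e3, List.length_append]
  exact ⟨A, B, C, e1, e2, e3, h1, h2, h3, by unfold cancel2; omega⟩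

lemma cancel2_spec (x y : FreeGroup α) :
    FreeGroup.norm (x * y) + cancel2 x y = FreeGroup.norm x + FreeGroup.norm y := by
  obtain ⟨A, B, C, _, _, _, h1, h2, h3, h4⟩ := mul_decomp' x y
  omega

lemma mk_cancel_mid (X C Y : List (α × Bool)) :
    mk (X ++ invRev C) * mk (C ++ Y) = mk (X ++ Y) := by
  have hinv : mk (invRev C) = (mk C)⁻¹ := (inv_mk).symm
  rw [← mul_mk (L₁ := X), ← mul_mk (L₁ := C), hinv, mul_assoc,
    ← mul_assoc (mk C)⁻¹, inv_mul_cancel, one_mul, mul_mk]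

/-- A reduced word cannot have its inverse-prefix/suffix overlap past the middle. -/
lemma no_half_overlap {A B C : List (α × Bool)} (hrd : Rd (C ++ B))
    (heq : A ++ invRev C = C ++ B)
    (hlen : (C ++ B).length ≤ C.length + C.length) (hpos : C ++ B ≠ []) : False := by
  set W := C ++ B with hWdef
  set L := W.length with hL
  set k := C.length with hk
  have hA : A.length = L - k := by
    have := congrArg List.length heq
    simp only [List.length_append, invRev_length] at this
    omega
  have hkL : k ≤ L := by
    simp only [hL, hWdef, List.length_append, hk]; omega
  have hLpos : 1 ≤ L := by
    simp only [hL]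
    rcases W with _ | _
    · exact absurd rfl hpos
    · simp
  have hrel : ∀ j j' (hj : j < L) (hj' : j' < L), L - k ≤ j → j + j' + 1 = L →
      W[j]'(hj) = linv (W[j']'(hj')) := by
    intro j j' hj hj' hj2 hjj
    have hj3 : A.length ≤ j := by omega
    have t1 : W[j]'hj = (A ++ invRev C)[j]'(by
        have := congrArg List.length heq; omega) := List.getElem_of_eq heq.symm hj
    have t2 : (A ++ invRev C)[j]'(by have := congrArg List.length heq; omega)
        = (invRev C)[j - A.length]'(by
          simp only [invRev_length]
          have := congrArg List.length heq
          simp only [List.length_append, invRev_length] at this; omega) :=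
      List.getElem_append_right hj3
    have hidx : j - A.length < C.length := by omega
    have t3 : (invRev C)[j - A.length]'(by simpa [invRev_length] using hidx)
        = linv (C[C.length - 1 - (j - A.length)]'(by omega)) := by
      show ((C.map (fun g => (g.1, !g.2))).reverse)[j - A.length]'(by simpa using hidx) = _
      rw [List.getElem_reverse, List.getElem_map]
      simp [linv]
    have hidx2 : j' < C.length := by omega
    have t4 : W[j']'(by omega) = C[j']'hidx2 :=
      List.getElem_append_left hidx2
    rw [t1, t2, t3, t4]
    congr 2
    omega
  rcases Nat.even_or_odd L with hev | hodd
  · obtain ⟨m, hm⟩ := hev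
    have hm1 : 1 ≤ m := by omega
    have hrel2 := hrel m (m - 1) (by omega) (by omega) (by omega) (by omega)
    have hchain := (List.isChain_iff_getElem.mp hrd) (m - 1) (by
      show m - 1 + 1 < W.length; omega)
    have hmm : m - 1 + 1 = m := by omega
    simp only [hmm] at hchain
    -- hchain : Ok W[m-1] W[m]
    apply hchain
    rw [hrel2]
    exact ⟨rfl, by simp [linv]⟩
  · obtain ⟨m, hm⟩ := hodd
    have hrel2 := hrel m m (by omega) (by omega) (by omega) (by omega)
    have := congrArg Prod.snd hrel2
    simp [linv] at this

/-- In a free group, `‖x²‖ > ‖x‖` for `x ≠ 1`. -/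
lemma norm_lt_norm_sq {x : FreeGroup α} (hx : x ≠ 1) :
    FreeGroup.norm x < FreeGroup.norm (x * x) := by
  obtain ⟨A, B, C, e1, e2, e3, h1, h2, h3, _⟩ := mul_decomp' x x
  have key : 2 * C.length < FreeGroup.norm x := by
    by_contra hcon
    push_neg at hcon
    apply no_half_overlap (e2 ▸ rd_toWord x) (e1.symm.trans e2)
    · rw [← e2, ← norm_eq_toWord_length]; omega
    · rw [← e2]
      intro hnil
      exact hx (by rwa [toWord_eq_nil_iff] at hnil)
  omega

/-- If both cancellations are full (equal to `‖y‖`), the triple product collapses. -/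
lemma collapse {x y z : FreeGroup α} (h1 : cancel2 x y = FreeGroup.norm y)
    (h2 : cancel2 y z = FreeGroup.norm y) :
    FreeGroup.norm (x * y * z) + FreeGroup.norm y ≤ FreeGroup.norm x + FreeGroup.norm z := by
  obtain ⟨A₁, B₁, C₁, f1, f2, f3, g1, g2, g3, g4⟩ := mul_decomp' x y
  obtain ⟨A₂, B₂, C₂, f1', f2', f3', g1', g2', g3', g4'⟩ := mul_decomp' y z
  have hB₁ : B₁.length = C₁.length := by omega
  have hA₂ : A₂.length = C₂.length := by omega
  have hCC : C₁.length = C₂.length := by omega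
  have hyw : C₁ ++ B₁ = A₂ ++ invRev C₂ := by rw [← f2, ← f1']
  have hid : C₁ = A₂ ∧ B₁ = invRev C₂ := List.append_inj hyw (by omega)
  have hxyz : x * y * z = mk (A₁ ++ B₂) := by
    have hxy : x * y = mk (A₁ ++ invRev C₂) := by
      rw [← hid.2, ← f3, mk_toWord]
    have hz : z = mk (C₂ ++ B₂) := by rw [← f2', mk_toWord]
    rw [hxy, hz, mk_cancel_mid]
  have hle : FreeGroup.norm (x * y * z) ≤ A₁.length + B₂.length := by
    rw [hxyz]
    have := norm_mk_le (L₁ := A₁ ++ B₂)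
    rw [List.length_append] at this
    exact this
  omega

/-- If the two cancellations do not exhaust `y`, the Nielsen (N2) inequality holds. -/
lemma triple {x y z : FreeGroup α} (h : cancel2 x y + cancel2 y z < 2 * FreeGroup.norm y) :
    FreeGroup.norm x + FreeGroup.norm z
      < FreeGroup.norm (x * y * z) + FreeGroup.norm y := by
  obtain ⟨A₁, B₁, C₁, f1, f2, f3, g1, g2, g3, g4⟩ := mul_decomp' x y
  obtain ⟨A₂, B₂, C₂, f1', f2', f3', g1', g2', g3', g4'⟩ := mul_decomp' y z
  have hyw : C₁ ++ B₁ = A₂ ++ invRev C₂ := by rw [← f2, ← f1']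
  have hC₂B₁ : C₂.length < B₁.length := by omega
  obtain ⟨Mid, hMid1, hMid2⟩ := appsplit hyw (by rw [invRev_length]; omega)
  have hMidlen : 1 ≤ Mid.length := by
    have := congrArg List.length hMid1
    simp only [List.length_append, invRev_length] at this
    omega
  have hMidne : Mid ≠ [] := by
    rcases Mid with _ | _
    · simp at hMidlen
    · simp
  have hxyz : x * y * z = mk ((A₁ ++ Mid) ++ B₂) := by
    have hxy : x * y = mk ((A₁ ++ Mid) ++ invRev C₂) := by
      rw [← mk_toWord (x := x * y), f3, hMid1, ← List.append_assoc]
    have hz : z = mk (C₂ ++ B₂) := by rw [← f2', mk_toWord]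
    rw [hxy, hz, mk_cancel_mid]
  have hrd : Rd ((A₁ ++ Mid) ++ B₂) := by
    apply rd_buffer _ _ hMidne
    · have : Rd ((A₁ ++ Mid) ++ invRev C₂) := by
        rw [List.append_assoc, ← hMid1, ← f3]
        exact rd_toWord _
      exact this.left
    · have : Rd (C₁ ++ (Mid ++ B₂)) := by
        rw [← List.append_assoc, ← hMid2, ← f3']
        exact rd_toWord _
      exact this.right
  have hnorm : FreeGroup.norm (x * y * z) = A₁.length + Mid.length + B₂.length := by
    rw [hxyz, norm_mk_rd hrd]
    simp only [List.length_append]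
  have hy : FreeGroup.norm y = C₁.length + Mid.length + C₂.length := by
    have := congrArg List.length hMid2
    simp only [List.length_append] at this
    omega
  omega



/-! ### Part 3: the growth lemma for Nielsen-reduced tuples -/

/-- signed generator -/
def sgn (u : α → FreeGroup α) (p : α × Bool) : FreeGroup α := cond p.2 (u p.1) (u p.1)⁻¹

lemma sgn_linv (u : α → FreeGroup α) (p : α × Bool) : sgn u (linv p) = (sgn u p)⁻¹ := by
  rcases p with ⟨a, _ | _⟩ <;> simp [sgn, linv]

/-- product of a word over the tuple `u` -/
def wprod (u : α → FreeGroup α) (L : List (α × Bool)) : FreeGroup α := (L.map (sgn u)).prod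

lemma wprod_append (u : α → FreeGroup α) (L₁ L₂ : List (α × Bool)) :
    wprod u (L₁ ++ L₂) = wprod u L₁ * wprod u L₂ := by
  simp [wprod]

lemma wprod_singleton (u : α → FreeGroup α) (p : α × Bool) : wprod u [p] = sgn u p := by
  simp [wprod]

lemma lift_mk_eq_wprod (u : α → FreeGroup α) : ∀ L, lift u (mk L) = wprod u L := by
  intro L
  induction L with
  | nil =>
    rw [show mk ([] : List (α × Bool)) = 1 from rfl]
    simp [wprod]
  | cons p T ih =>
    have hsplit : mk (p :: T) = mk [p] * mk T := by rw [mul_mk]; rfl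
    have hsingle : lift u (mk [p]) = sgn u p := by
      rcases p with ⟨a, _ | _⟩
      · have h1 : mk [(a, false)] = (of a : FreeGroup α)⁻¹ := by
          rw [show (of a : FreeGroup α) = mk [(a, true)] from rfl, inv_mk]
          rfl
        rw [h1, _root_.map_inv, lift_apply_of]
        rfl
      · rw [show mk [(a, true)] = (of a : FreeGroup α) from rfl, lift_apply_of]
        rfl
    rw [hsplit, _root_.map_mul, ih, hsingle]
    simp [wprod]

lemma lift_eq_wprod (u : α → FreeGroup α) (x : FreeGroup α) :
    lift u x = wprod u x.toWord := by
  conv_lhs => rw [← mk_toWord (x := x)]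
  exact lift_mk_eq_wprod u _

section Growth

variable {u : α → FreeGroup α}

lemma growth_aux (hu : ∀ i, u i ≠ 1)
    (hne : ∀ p q : α × Bool, Ok p q → sgn u p * sgn u q ≠ 1)
    (HN1 : ∀ p q, sgn u p * sgn u q ≠ 1 →
      FreeGroup.norm (sgn u p) ≤ FreeGroup.norm (sgn u p * sgn u q) ∧
      FreeGroup.norm (sgn u q) ≤ FreeGroup.norm (sgn u p * sgn u q))
    (HN2 : ∀ p q r, sgn u p * sgn u q ≠ 1 → sgn u q * sgn u r ≠ 1 →
      FreeGroup.norm (sgn u p) + FreeGroup.norm (sgn u r) <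
        FreeGroup.norm (sgn u p * sgn u q * sgn u r) + FreeGroup.norm (sgn u q)) :
    ∀ L (q : α × Bool), Rd (L ++ [q]) → ∃ Y D E : List (α × Bool),
      (wprod u (L ++ [q])).toWord = Y ++ E ∧ (sgn u q).toWord = D ++ E ∧ E ≠ [] ∧
      (∀ r, sgn u q * sgn u r ≠ 1 →
        2 * D.length + cancel2 (sgn u q) (sgn u r) < 2 * FreeGroup.norm (sgn u q)) ∧
      L.length ≤ Y.length := by
  have hnz : ∀ p, sgn u p ≠ 1 := by
    intro p
    rcases p with ⟨a, _ | _⟩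
    · simpa [sgn] using inv_ne_one.mpr (hu a)
    · simpa [sgn] using hu a
  have hcan_le : ∀ p q, sgn u p * sgn u q ≠ 1 →
      cancel2 (sgn u p) (sgn u q) ≤ FreeGroup.norm (sgn u q) ∧
      cancel2 (sgn u p) (sgn u q) ≤ FreeGroup.norm (sgn u p) := by
    intro p q hpq
    have h1 := (HN1 p q hpq).1
    have h2 := (HN1 p q hpq).2
    have := cancel2_spec (sgn u p) (sgn u q)
    omega
  intro L
  induction L using List.reverseRecOn with
  | nil =>
    intro q _
    refine ⟨[], [], (sgn u q).toWord, ?_, rfl, ?_, ?_, by simp⟩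
    · rw [List.nil_append, wprod_singleton]; rfl
    · intro hnil
      exact hnz q (toWord_eq_nil_iff.mp hnil)
    · intro r hr
      have h1 := (hcan_le q r hr).1
      have h2 := (hcan_le q r hr).2
      have := norm_pos (hnz q)
      simp only [List.length_nil]
      omega
  | append_singleton M p ih =>
    intro q hrd
    have hMp : Rd (M ++ [p]) := by
      have : Rd ((M ++ [p]) ++ [q]) := hrd
      exact this.left
    obtain ⟨Y, D, E, hYE, hDE, hEne, hBound, hLen⟩ := ih p hMp
    have hOk : Ok p q := by
      rcases List.isChain_append.mp hrd with ⟨_, _, hj⟩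
      have h1 : p ∈ (M ++ [p]).getLast? := by
        rw [List.getLast?_concat]; rfl
      exact hj p h1 q (by simp)
    have hpq : sgn u p * sgn u q ≠ 1 := hne p q hOk
    obtain ⟨A₁, B₁, C₁, f1, f2, f3, g1, g2, g3, g4⟩ := mul_decomp' (sgn u p) (sgn u q)
    have hnormp : FreeGroup.norm (sgn u p) = D.length + E.length := by
      rw [norm_eq_toWord_length, hDE, List.length_append]
    have hC₁E : C₁.length < E.length := by
      have := hBound q hpq
      omega
    obtain ⟨E', hE'1, hE'2⟩ := appsplit (hDE.symm.trans f1) (by rw [invRev_length]; omega)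
    have hE'len : 1 ≤ E'.length := by
      have := congrArg List.length hE'1
      simp only [List.length_append, invRev_length] at this
      omega
    have hE'ne : E' ≠ [] := by
      rcases E' with _ | _
      · simp at hE'len
      · simp
    have hC₁B₁ : C₁.length ≤ B₁.length := by
      have := (HN1 p q hpq).1
      omega
    have hword : (wprod u ((M ++ [p]) ++ [q])).toWord = (Y ++ E') ++ B₁ := by
      have h1 : wprod u ((M ++ [p]) ++ [q]) = wprod u (M ++ [p]) * sgn u q := by
        rw [wprod_append, wprod_singleton]
      have h2 : wprod u (M ++ [p]) = mk ((Y ++ E') ++ invRev C₁) := by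
        rw [← mk_toWord (x := wprod u (M ++ [p])), hYE, hE'1, ← List.append_assoc]
      have h3 : sgn u q = mk (C₁ ++ B₁) := by rw [← f2, mk_toWord]
      have hrd2 : Rd ((Y ++ E') ++ B₁) := by
        apply rd_buffer _ _ hE'ne
        · have : Rd ((Y ++ E') ++ invRev C₁) := by
            rw [List.append_assoc, ← hE'1, ← hYE]
            exact rd_toWord _
          exact this.left
        · have : Rd (D ++ (E' ++ B₁)) := by
            rw [← List.append_assoc, ← hE'2, ← f3]
            exact rd_toWord _
          exact this.right
      rw [h1, h2, h3, mk_cancel_mid, toWord_mk_rd hrd2]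
    refine ⟨Y ++ E', C₁, B₁, hword, f2, ?_, ?_, ?_⟩
    · have hq1 := norm_pos (hnz q)
      intro hnil
      have : B₁.length = 0 := by rw [hnil]; rfl
      omega
    · intro s hs
      by_contra hcon
      push_neg at hcon
      have hc1 : cancel2 (sgn u q) (sgn u s) ≤ FreeGroup.norm (sgn u q) :=
        (hcan_le q s hs).2
      have hc2 : 2 * C₁.length ≤ FreeGroup.norm (sgn u q) := by omega
      have heq1 : cancel2 (sgn u p) (sgn u q) = FreeGroup.norm (sgn u q) := by omega
      have heq2 : cancel2 (sgn u q) (sgn u s) = FreeGroup.norm (sgn u q) := by omega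
      have := collapse heq1 heq2
      have := HN2 p q s hpq hs
      omega
    · simp only [List.length_append, List.length_singleton]
      omega

theorem growth (hu : ∀ i, u i ≠ 1)
    (hne : ∀ p q : α × Bool, Ok p q → sgn u p * sgn u q ≠ 1)
    (HN1 : ∀ p q, sgn u p * sgn u q ≠ 1 →
      FreeGroup.norm (sgn u p) ≤ FreeGroup.norm (sgn u p * sgn u q) ∧
      FreeGroup.norm (sgn u q) ≤ FreeGroup.norm (sgn u p * sgn u q))
    (HN2 : ∀ p q r, sgn u p * sgn u q ≠ 1 → sgn u q * sgn u r ≠ 1 →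
      FreeGroup.norm (sgn u p) + FreeGroup.norm (sgn u r) <
        FreeGroup.norm (sgn u p * sgn u q * sgn u r) + FreeGroup.norm (sgn u q)) :
    ∀ x : FreeGroup α, FreeGroup.norm x ≤ FreeGroup.norm (lift u x) := by
  intro x
  rcases eq_or_ne x 1 with rfl | hx
  · simp
  have hLne : x.toWord ≠ [] := fun h => hx (toWord_eq_nil_iff.mp h)
  obtain ⟨M, q, hMq⟩ := List.eq_nil_or_concat x.toWord |>.resolve_left hLne
  rw [List.concat_eq_append] at hMq
  have hrd : Rd (M ++ [q]) := hMq ▸ rd_toWord x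
  obtain ⟨Y, D, E, hYE, _, hEne, _, hLen⟩ := growth_aux hu hne HN1 HN2 M q hrd
  have hE1 : 1 ≤ E.length := by
    rcases E with _ | _
    · exact absurd rfl hEne
    · simp
  have : FreeGroup.norm (lift u x) = Y.length + E.length := by
    rw [lift_eq_wprod, hMq, norm_eq_toWord_length, hYE, List.length_append]
  have hxlen : FreeGroup.norm x = M.length + 1 := by
    rw [norm_eq_toWord_length, hMq, List.length_append]; rfl
  omega

end Growth



/-! ### Part 4: elementary automorphisms -/

lemma autext {F G : MulAut (FreeGroup α)} (h : ∀ a, F (of a) = G (of a)) : F = G := by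
  apply MulEquiv.ext
  intro x
  have h2 := FreeGroup.ext_hom (MulEquiv.toMonoidHom F) (MulEquiv.toMonoidHom G) h
  exact DFunLike.congr_fun h2 x

/-- Build an automorphism of a free group from substitution rules. -/
def mkAut (f g : α → FreeGroup α) (h₁ : ∀ a, lift f (g a) = of a)
    (h₂ : ∀ a, lift g (f a) = of a) : MulAut (FreeGroup α) where
  toFun := lift f
  invFun := lift g
  left_inv := by
    intro x
    have : (lift g).comp (lift f) = MonoidHom.id (FreeGroup α) := by
      apply FreeGroup.ext_hom
      intro a
      simp [lift_apply_of, h₂]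
    exact DFunLike.congr_fun this x
  right_inv := by
    intro x
    have : (lift f).comp (lift g) = MonoidHom.id (FreeGroup α) := by
      apply FreeGroup.ext_hom
      intro a
      simp [lift_apply_of, h₁]
    exact DFunLike.congr_fun this x
  map_mul' := _root_.map_mul _

@[simp] lemma mkAut_apply (f g : α → FreeGroup α) (h₁ h₂) (x : FreeGroup α) :
    mkAut f g h₁ h₂ x = lift f x := rfl

@[simp] lemma mkAut_inv_apply (f g : α → FreeGroup α) (h₁ h₂) (x : FreeGroup α) :
    (mkAut f g h₁ h₂)⁻¹ x = lift g x := rfl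

@[simp] lemma mkAut_symm_apply (f g : α → FreeGroup α) (h₁ h₂) (x : FreeGroup α) :
    (mkAut f g h₁ h₂).symm x = lift g x := rfl

/-- Inversion of one generator. -/
def Iaut (i : α) : MulAut (FreeGroup α) :=
  mkAut (fun j => if j = i then (of j)⁻¹ else of j) (fun j => if j = i then (of j)⁻¹ else of j)
    (by intro a; by_cases h : a = i <;> simp [h]) (by intro a; by_cases h : a = i <;> simp [h])

@[simp] lemma Iaut_of (i a : α) : Iaut i (of a) = if a = i then (of a)⁻¹ else of a := by
  by_cases h : a = i <;> simp [Iaut, h]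

@[simp] lemma Iaut_inv_of (i a : α) : (Iaut i)⁻¹ (of a) = if a = i then (of a)⁻¹ else of a := by
  by_cases h : a = i <;> simp [Iaut, h]

@[simp] lemma Iaut_symm_of (i a : α) : (Iaut i).symm (of a) = if a = i then (of a)⁻¹ else of a :=
  Iaut_inv_of i a

/-- Right transvection: `of i ↦ of i * of j`. -/
def Raut (i j : α) (hij : i ≠ j) : MulAut (FreeGroup α) :=
  mkAut (fun k => if k = i then of i * of j else of k)
    (fun k => if k = i then of i * (of j)⁻¹ else of k)
    (by
      intro a
      by_cases h : a = i
      · subst h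
        simp [lift_apply_of, hij.symm, if_neg (show j ≠ a from fun hh => hij hh.symm)]
      · simp [lift_apply_of, h])
    (by
      intro a
      by_cases h : a = i
      · subst h
        simp [lift_apply_of, hij.symm, if_neg (show j ≠ a from fun hh => hij hh.symm)]
      · simp [lift_apply_of, h])

@[simp] lemma Raut_of (i j : α) (hij) (a : α) :
    Raut i j hij (of a) = if a = i then of i * of j else of a := by
  by_cases h : a = i <;> simp [Raut, h]

@[simp] lemma Raut_inv_of (i j : α) (hij) (a : α) :
    (Raut i j hij)⁻¹ (of a) = if a = i then of i * (of j)⁻¹ else of a := by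
  by_cases h : a = i <;> simp [Raut, h]

@[simp] lemma Raut_symm_of (i j : α) (hij) (a : α) :
    (Raut i j hij).symm (of a) = if a = i then of i * (of j)⁻¹ else of a :=
  Raut_inv_of i j hij a

/-- Left transvection: `of i ↦ of j * of i`. -/
def Laut (i j : α) (hij : i ≠ j) : MulAut (FreeGroup α) :=
  mkAut (fun k => if k = i then of j * of i else of k)
    (fun k => if k = i then (of j)⁻¹ * of i else of k)
    (by
      intro a
      by_cases h : a = i
      · subst h
        simp [lift_apply_of, if_neg (show j ≠ a from fun hh => hij hh.symm)]
      · simp [lift_apply_of, h])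
    (by
      intro a
      by_cases h : a = i
      · subst h
        simp [lift_apply_of, if_neg (show j ≠ a from fun hh => hij hh.symm)]
      · simp [lift_apply_of, h])

@[simp] lemma Laut_of (i j : α) (hij) (a : α) :
    Laut i j hij (of a) = if a = i then of j * of i else of a := by
  by_cases h : a = i <;> simp [Laut, h]

@[simp] lemma Laut_inv_of (i j : α) (hij) (a : α) :
    (Laut i j hij)⁻¹ (of a) = if a = i then (of j)⁻¹ * of a else of a := by
  by_cases h : a = i <;> simp [Laut, h]

@[simp] lemma Laut_symm_of (i j : α) (hij) (a : α) :
    (Laut i j hij).symm (of a) = if a = i then (of j)⁻¹ * of a else of a :=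
  Laut_inv_of i j hij a

/-- Permutation automorphisms as a monoid hom. -/
def permAut : Equiv.Perm α →* MulAut (FreeGroup α) :=
  MonoidHom.mk' (fun σ => freeGroupCongr σ)
    (by
      intro σ ρ
      apply autext
      intro a
      simp)

@[simp] lemma permAut_of (σ : Equiv.Perm α) (a : α) : permAut σ (of a) = of (σ a) := by
  simp [permAut]

@[simp] lemma permAut_inv_of (σ : Equiv.Perm α) (a : α) :
    (permAut σ)⁻¹ (of a) = of (σ⁻¹ a) := by
  rw [← _root_.map_inv permAut σ]
  simp [permAut]

@[simp] lemma permAut_symm_of (σ : Equiv.Perm α) (a : α) :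
    (permAut σ).symm (of a) = of (σ⁻¹ a) :=
  permAut_inv_of σ a

lemma conj_Raut (σ : Equiv.Perm α) (i j : α) (hij : i ≠ j) :
    permAut σ * Raut i j hij * (permAut σ)⁻¹
      = Raut (σ i) (σ j) (fun h => hij (σ.injective h)) := by
  apply autext
  intro a
  by_cases h : a = σ i
  · subst h
    simp [MulAut.mul_apply, Equiv.symm_apply_apply]
  · have h2 : σ.symm a ≠ i := fun hh => h (by rw [← hh]; simp)
    simp [MulAut.mul_apply, h, h2]

lemma conj_Laut (σ : Equiv.Perm α) (i j : α) (hij : i ≠ j) :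
    permAut σ * Laut i j hij * (permAut σ)⁻¹
      = Laut (σ i) (σ j) (fun h => hij (σ.injective h)) := by
  apply autext
  intro a
  by_cases h : a = σ i
  · subst h
    simp [MulAut.mul_apply, Equiv.symm_apply_apply]
  · have h2 : σ.symm a ≠ i := fun hh => h (by rw [← hh]; simp)
    simp [MulAut.mul_apply, h, h2]

lemma conj_Iaut (σ : Equiv.Perm α) (i : α) :
    permAut σ * Iaut i * (permAut σ)⁻¹ = Iaut (σ i) := by
  apply autext
  intro a
  by_cases h : a = σ i
  · subst h
    simp [MulAut.mul_apply, Equiv.symm_apply_apply]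
  · have h2 : σ.symm a ≠ i := fun hh => h (by rw [← hh]; simp)
    simp [MulAut.mul_apply, h, h2]




/-! ### Part 5: membership of elementary automorphisms in the normal closure -/

lemma conj_Raut' (σ : Equiv.Perm α) {i j i' j' : α} (hij : i ≠ j) (hij' : i' ≠ j')
    (h1 : σ i = i') (h2 : σ j = j') :
    permAut σ * Raut i j hij * (permAut σ)⁻¹ = Raut i' j' hij' := by
  subst h1; subst h2
  exact conj_Raut σ i j hij

lemma conj_Laut' (σ : Equiv.Perm α) {i j i' j' : α} (hij : i ≠ j) (hij' : i' ≠ j')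
    (h1 : σ i = i') (h2 : σ j = j') :
    permAut σ * Laut i j hij * (permAut σ)⁻¹ = Laut i' j' hij' := by
  subst h1; subst h2
  exact conj_Laut σ i j hij

lemma conj_Iaut' (σ : Equiv.Perm α) {i i' : α} (h1 : σ i = i') :
    permAut σ * Iaut i * (permAut σ)⁻¹ = Iaut i' := by
  subst h1
  exact conj_Iaut σ i

/-- The normal closure of the basic transposition automorphism. -/
def Ncl (i₀ i₁ : α) : Subgroup (MulAut (FreeGroup α)) :=
  Subgroup.normalClosure {permAut (Equiv.swap i₀ i₁)}

lemma tau_mem (i₀ i₁ : α) : permAut (Equiv.swap i₀ i₁) ∈ Ncl i₀ i₁ :=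
  Subgroup.subset_normalClosure (Set.mem_singleton _)

lemma conj_mem' (i₀ i₁ : α) {g x : MulAut (FreeGroup α)} (hx : x ∈ Ncl i₀ i₁) :
    g * x * g⁻¹ ∈ Ncl i₀ i₁ :=
  (Subgroup.normalClosure_normal).conj_mem x hx g

lemma swap_mem (i₀ i₁ : α) (h01 : i₀ ≠ i₁) (x y : α) (hxy : x ≠ y) :
    permAut (Equiv.swap x y) ∈ Ncl i₀ i₁ := by
  obtain ⟨c, hc⟩ := isConj_iff.mp (Equiv.Perm.isConj_swap h01 hxy)
  have : permAut (Equiv.swap x y) = permAut c * permAut (Equiv.swap i₀ i₁) * (permAut c)⁻¹ := by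
    rw [← _root_.map_inv, ← _root_.map_mul, ← _root_.map_mul, hc]
  rw [this]
  exact conj_mem' i₀ i₁ (tau_mem i₀ i₁)

lemma perm_mem [Finite α] (i₀ i₁ : α) (h01 : i₀ ≠ i₁) (σ : Equiv.Perm α) :
    permAut σ ∈ Ncl i₀ i₁ := by
  refine Equiv.Perm.swap_induction_on σ ?_ ?_
  · rw [_root_.map_one]; exact Subgroup.one_mem _
  · intro f x y hxy ih
    rw [_root_.map_mul]
    exact Subgroup.mul_mem _ (swap_mem i₀ i₁ h01 x y hxy) ih

lemma Raut_base_mem (i₀ i₁ i₂ : α) (h01 : i₀ ≠ i₁) (h02 : i₀ ≠ i₂) (h12 : i₁ ≠ i₂) :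
    Raut i₂ i₀ h02.symm ∈ Ncl i₀ i₁ := by
  set τ := permAut (Equiv.swap i₀ i₁) with hτ
  set b := Raut i₂ i₀ h02.symm with hb
  have key : τ * b * τ⁻¹ = Raut i₂ i₁ h12.symm := by
    apply conj_Raut' _ _ _ (Equiv.swap_apply_of_ne_of_ne h02.symm h12.symm)
      (Equiv.swap_apply_left i₀ i₁)
  have hDmem : b * (Raut i₂ i₁ h12.symm)⁻¹ ∈ Ncl i₀ i₁ := by
    have heq : b * (Raut i₂ i₁ h12.symm)⁻¹ = (b * τ * b⁻¹) * τ⁻¹ := by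
      rw [← key]
      group
    rw [heq]
    exact Subgroup.mul_mem _ (conj_mem' i₀ i₁ (tau_mem i₀ i₁))
      (Subgroup.inv_mem _ (tau_mem i₀ i₁))
  have hconj : Raut i₀ i₁ h01 * (b * (Raut i₂ i₁ h12.symm)⁻¹) * (Raut i₀ i₁ h01)⁻¹ = b := by
    apply autext
    intro k
    rcases eq_or_ne k i₂ with rfl | hk2
    · simp [MulAut.mul_apply, hb, h02, h12, Ne.symm h02, Ne.symm h12, h01, Ne.symm h01]
      group
    · rcases eq_or_ne k i₀ with rfl | hk0
      · simp [MulAut.mul_apply, hb, h02, h12, Ne.symm h02, Ne.symm h12, h01, Ne.symm h01, hk2]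
      · simp [MulAut.mul_apply, hb, hk0, hk2]
  rw [← hconj]
  exact conj_mem' i₀ i₁ hDmem

lemma Raut_mem (i₀ i₁ i₂ : α) (h01 : i₀ ≠ i₁) (h02 : i₀ ≠ i₂) (h12 : i₁ ≠ i₂)
    (i j : α) (hij : i ≠ j) : Raut i j hij ∈ Ncl i₀ i₁ := by
  set j₀ := Equiv.swap i₂ i j with hj₀def
  have hj₀ : j₀ ≠ i₂ := by
    intro h
    apply hij
    have := congrArg (Equiv.swap i₂ i) h
    rw [hj₀def] at this
    simpa using this.symm
  set σ := Equiv.swap i₂ i * Equiv.swap i₀ j₀ with hσ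
  have hσ2 : σ i₂ = i := by
    rw [hσ]
    simp only [Equiv.Perm.mul_apply]
    rw [Equiv.swap_apply_of_ne_of_ne (Ne.symm h02) (Ne.symm hj₀)]
    simp
  have hσ0 : σ i₀ = j := by
    rw [hσ]
    simp only [Equiv.Perm.mul_apply]
    rw [Equiv.swap_apply_left, hj₀def]
    simp
  have hID := conj_Raut' σ h02.symm hij hσ2 hσ0
  rw [← hID]
  exact conj_mem' i₀ i₁ (Raut_base_mem i₀ i₁ i₂ h01 h02 h12)

lemma Laut_mem (i₀ i₁ i₂ : α) (h01 : i₀ ≠ i₁) (h02 : i₀ ≠ i₂) (h12 : i₁ ≠ i₂)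
    (i j : α) (hij : i ≠ j) : Laut i j hij ∈ Ncl i₀ i₁ := by
  have hconj : Iaut i * (Raut i j hij)⁻¹ * (Iaut i)⁻¹ = Laut i j hij := by
    apply autext
    intro k
    rcases eq_or_ne k i with rfl | hk
    · simp [MulAut.mul_apply, Ne.symm hij]
    · simp [MulAut.mul_apply, hk]
  rw [← hconj]
  exact conj_mem' i₀ i₁ (Subgroup.inv_mem _ (Raut_mem i₀ i₁ i₂ h01 h02 h12 i j hij))

lemma Iaut_base_mem (i₀ i₁ i₂ : α) (h01 : i₀ ≠ i₁) (h02 : i₀ ≠ i₂) (h12 : i₁ ≠ i₂) :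
    Iaut i₁ ∈ Ncl i₀ i₁ := by
  set τ := permAut (Equiv.swap i₀ i₁) with hτ
  set K := τ * (Raut i₀ i₁ h01 * (Raut i₁ i₀ (Ne.symm h01))⁻¹ * Raut i₀ i₁ h01) with hK
  have hKmem : K ∈ Ncl i₀ i₁ := by
    refine Subgroup.mul_mem _ (tau_mem i₀ i₁) ?_
    refine Subgroup.mul_mem _ (Subgroup.mul_mem _
      (Raut_mem i₀ i₁ i₂ h01 h02 h12 _ _ h01)
      (Subgroup.inv_mem _ (Raut_mem i₀ i₁ i₂ h01 h02 h12 _ _ (Ne.symm h01)))) ?_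
    exact Raut_mem i₀ i₁ i₂ h01 h02 h12 _ _ h01
  have hident : Laut i₀ i₁ h01 * (Raut i₀ i₁ h01)⁻¹ * Iaut i₁ = K := by
    apply autext
    intro k
    rcases eq_or_ne k i₀ with rfl | hk0
    · simp [MulAut.mul_apply, hK, hτ, h01, Ne.symm h01, Equiv.swap_apply_left,
        Equiv.swap_apply_right]
    · rcases eq_or_ne k i₁ with rfl | hk1
      · simp [MulAut.mul_apply, hK, hτ, h01, Ne.symm h01, Equiv.swap_apply_left,
          Equiv.swap_apply_right]
      · simp [MulAut.mul_apply, hK, hτ, hk0, hk1, Equiv.swap_apply_of_ne_of_ne hk0 hk1]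
  have hI : Iaut i₁ = Raut i₀ i₁ h01 * (Laut i₀ i₁ h01)⁻¹ * K := by
    rw [← hident]
    group
  rw [hI]
  refine Subgroup.mul_mem _ (Subgroup.mul_mem _
    (Raut_mem i₀ i₁ i₂ h01 h02 h12 _ _ h01)
    (Subgroup.inv_mem _ (Laut_mem i₀ i₁ i₂ h01 h02 h12 _ _ h01))) hKmem

lemma Iaut_mem (i₀ i₁ i₂ : α) (h01 : i₀ ≠ i₁) (h02 : i₀ ≠ i₂) (h12 : i₁ ≠ i₂) (i : α) :
    Iaut i ∈ Ncl i₀ i₁ := by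
  have hID := conj_Iaut' (Equiv.swap i₁ i) (Equiv.swap_apply_left i₁ i)
  rw [← hID]
  exact conj_mem' i₀ i₁ (Iaut_base_mem i₀ i₁ i₂ h01 h02 h12)



/-! ### Part 6: rigidity and signed permutations -/

lemma of_ne_inv (k k' : α) : (of k : FreeGroup α) ≠ (of k')⁻¹ := by
  intro h
  have h2 := congrArg toWord h
  rw [toWord_of, toWord_inv, toWord_of] at h2
  simp [invRev] at h2

lemma aut_apply_inv_self (φ : MulAut (FreeGroup α)) (x : FreeGroup α) : φ (φ⁻¹ x) = x := by
  rw [← MulAut.mul_apply, mul_inv_cancel]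
  rfl

lemma aut_eq_one_iff (φ : MulAut (FreeGroup α)) {x : FreeGroup α} : φ x = 1 ↔ x = 1 := by
  constructor
  · intro h
    have := φ.injective (a₁ := x) (a₂ := 1) (by simpa using h)
    exact this
  · rintro rfl; simp

lemma sgn_of_eq_mk (p : α × Bool) : sgn (fun a => (of a : FreeGroup α)) p = mk [p] := by
  rcases p with ⟨a, _ | _⟩
  · show (of a : FreeGroup α)⁻¹ = mk [(a, false)]
    rw [show (of a : FreeGroup α) = mk [(a, true)] from rfl, inv_mk]
    rfl
  · rfl

/-- automorphisms with all values single letters are in the normal closure -/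
lemma perm_like_mem [Fintype α] (i₀ i₁ : α) (h01 : i₀ ≠ i₁)
    (φ : MulAut (FreeGroup α)) (h : ∀ i, ∃ k, φ (of i) = of k) : φ ∈ Ncl i₀ i₁ := by
  choose π hπ using h
  have hinj : Function.Injective π := by
    intro i j hij
    have : φ (of i) = φ (of j) := by rw [hπ i, hπ j, hij]
    have := φ.injective this
    exact FreeGroup.of_injective this
  have hbij : Function.Bijective π := Finite.injective_iff_bijective.mp hinj
  set σ := Equiv.ofBijective π hbij with hσ
  have : φ = permAut σ := by
    apply autext
    intro a
    rw [hπ a, permAut_of]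
    rfl
  rw [this]
  exact perm_mem i₀ i₁ h01 σ

lemma signed_mem_aux [Fintype α] (i₀ i₁ i₂ : α) (h01 : i₀ ≠ i₁) (h02 : i₀ ≠ i₂)
    (h12 : i₁ ≠ i₂) : ∀ (m : ℕ) (φ : MulAut (FreeGroup α)),
    (Finset.univ.filter (fun i => ∃ k, φ (of i) = (of k)⁻¹)).card = m →
    (∀ i, ∃ k, φ (of i) = of k ∨ φ (of i) = (of k)⁻¹) → φ ∈ Ncl i₀ i₁ := by
  intro m
  induction m using Nat.strong_induction_on with
  | _ m ih =>
    intro φ hcard hh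
    rcases Nat.eq_zero_or_pos m with rfl | hpos
    · apply perm_like_mem i₀ i₁ h01
      intro i
      obtain ⟨k, hk | hk⟩ := hh i
      · exact ⟨k, hk⟩
      · exfalso
        have hi : i ∈ Finset.univ.filter (fun i => ∃ k, φ (of i) = (of k)⁻¹) := by
          simp only [Finset.mem_filter, Finset.mem_univ, true_and]
          exact ⟨k, hk⟩
        rw [Finset.card_eq_zero.mp hcard] at hi
        simp at hi
    · set T := Finset.univ.filter (fun i => ∃ k, φ (of i) = (of k)⁻¹) with hT
      obtain ⟨a, ha⟩ := Finset.card_pos.mp (hcard ▸ hpos)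
      obtain ⟨ka, hka⟩ := (Finset.mem_filter.mp ha).2
      set φ' := φ * Iaut a with hφ'
      have happ : ∀ j, φ' (of j) = if j = a then (φ (of j))⁻¹ else φ (of j) := by
        intro j
        rcases eq_or_ne j a with rfl | hj
        · simp [hφ', MulAut.mul_apply, _root_.map_inv]
        · simp [hφ', MulAut.mul_apply, hj]
      have hTφ' : Finset.univ.filter (fun i => ∃ k, φ' (of i) = (of k)⁻¹) = T.erase a := by
        ext j
        simp only [Finset.mem_filter, Finset.mem_univ, true_and, Finset.mem_erase, hT]
        rcases eq_or_ne j a with rfl | hj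
        · simp only [happ j, if_pos rfl]
          constructor
          · rintro ⟨k, hk⟩
            exfalso
            rw [hka] at hk
            simp only [inv_inv] at hk
            exact of_ne_inv ka k hk
          · rintro ⟨hfalse, -⟩
            exact absurd rfl hfalse
        · simp only [happ j, if_neg hj]
          tauto
      have hcard' : (Finset.univ.filter (fun i => ∃ k, φ' (of i) = (of k)⁻¹)).card = m - 1 := by
        rw [hTφ', Finset.card_erase_of_mem ha, hcard]
      have hh' : ∀ i, ∃ k, φ' (of i) = of k ∨ φ' (of i) = (of k)⁻¹ := by
        intro i
        rcases eq_or_ne i a with rfl | hi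
        · refine ⟨ka, Or.inl ?_⟩
          rw [happ, if_pos rfl, hka, inv_inv]
        · obtain ⟨k, hk⟩ := hh i
          refine ⟨k, ?_⟩
          rw [happ, if_neg hi]
          exact hk
      have hmem' : φ' ∈ Ncl i₀ i₁ := ih (m - 1) (by omega) φ' hcard' hh'
      have : φ = φ' * (Iaut a)⁻¹ := by rw [hφ', mul_assoc, mul_inv_cancel, mul_one]
      rw [this]
      exact Subgroup.mul_mem _ hmem'
        (Subgroup.inv_mem _ (Iaut_mem i₀ i₁ i₂ h01 h02 h12 a))

/-- Rigidity: a Nielsen-reduced automorphism tuple is a signed permutation. -/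
lemma rigid [Fintype α] (φ : MulAut (FreeGroup α))
    (HN1 : ∀ p q, sgn (fun i => φ (of i)) p * sgn (fun i => φ (of i)) q ≠ 1 →
      FreeGroup.norm (sgn (fun i => φ (of i)) p) ≤
        FreeGroup.norm (sgn (fun i => φ (of i)) p * sgn (fun i => φ (of i)) q) ∧
      FreeGroup.norm (sgn (fun i => φ (of i)) q) ≤
        FreeGroup.norm (sgn (fun i => φ (of i)) p * sgn (fun i => φ (of i)) q))
    (HN2 : ∀ p q r, sgn (fun i => φ (of i)) p * sgn (fun i => φ (of i)) q ≠ 1 →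
      sgn (fun i => φ (of i)) q * sgn (fun i => φ (of i)) r ≠ 1 →
      FreeGroup.norm (sgn (fun i => φ (of i)) p) + FreeGroup.norm (sgn (fun i => φ (of i)) r) <
        FreeGroup.norm (sgn (fun i => φ (of i)) p * sgn (fun i => φ (of i)) q *
          sgn (fun i => φ (of i)) r) + FreeGroup.norm (sgn (fun i => φ (of i)) q)) :
    ∀ i, ∃ k, φ (of i) = of k ∨ φ (of i) = (of k)⁻¹ := by
  set u : α → FreeGroup α := fun i => φ (of i) with hu_def
  have hsgn : ∀ p, sgn u p = φ (sgn (fun a => (of a : FreeGroup α)) p) := by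
    intro p
    rcases p with ⟨a, _ | _⟩
    · show (u a)⁻¹ = φ ((of a)⁻¹)
      rw [_root_.map_inv]
    · rfl
  have hu : ∀ i, u i ≠ 1 := by
    intro i h
    rw [hu_def] at h
    exact FreeGroup.of_ne_one i ((aut_eq_one_iff φ).mp h)
  have hlift : ∀ x, lift u x = φ x := by
    intro x
    have : lift u = MulEquiv.toMonoidHom φ := by
      apply FreeGroup.ext_hom
      intro a
      simp only [lift_apply_of]
      rfl
    rw [this]
    rfl
  have hne : ∀ p q : α × Bool, Ok p q → sgn u p * sgn u q ≠ 1 := by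
    intro p q hok h1
    rw [hsgn, hsgn, ← _root_.map_mul] at h1
    have h2 : sgn (fun a => (of a : FreeGroup α)) p * sgn (fun a => (of a : FreeGroup α)) q
        = mk [p, q] := by
      rw [sgn_of_eq_mk, sgn_of_eq_mk, mul_mk]
      rfl
    rw [h2] at h1
    have h3 : (mk [p, q] : FreeGroup α) = 1 := (aut_eq_one_iff φ).mp h1
    have hrd : Rd [p, q] := List.isChain_cons_cons.mpr ⟨hok, List.isChain_singleton q⟩
    have := toWord_mk_rd hrd
    rw [h3] at this
    simp at this
  have hg : ∀ x, FreeGroup.norm x ≤ FreeGroup.norm (φ x) := by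
    intro x
    have := growth hu hne HN1 HN2 x
    rwa [hlift] at this
  -- every generator is a signed value
  have hkey : ∀ k, ∃ p : α × Bool, sgn u p = of k := by
    intro k
    set z := φ⁻¹ (of k) with hz
    have hφz : φ z = of k := aut_apply_inv_self φ _
    have hz1 : z ≠ 1 := by
      intro h
      rw [h] at hφz
      simp at hφz
    have hnorm : FreeGroup.norm z = 1 := by
      have h1 := hg z
      rw [hφz] at h1
      have := norm_pos hz1
      simp only [norm_of] at h1
      omega
    have hlen1 : z.toWord.length = 1 := by rw [← norm_eq_toWord_length]; exact hnorm
    obtain ⟨p, hp⟩ := List.length_eq_one_iff.mp hlen1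
    refine ⟨p, ?_⟩
    rw [hsgn, sgn_of_eq_mk, ← hp, mk_toWord]
    exact hφz
  choose θ hθ using hkey
  have hinj : Function.Injective (fun k => (θ k).1) := by
    intro k k' h
    simp only at h
    have h1 := hθ k
    have h2 := hθ k'
    rcases hb : (θ k).2 with _ | _ <;> rcases hb' : (θ k').2 with _ | _
    · -- both false
      have e1 : (u (θ k).1)⁻¹ = of k := by
        rw [← h1]; show _ = sgn u (θ k); rcases hθk : θ k with ⟨a, c⟩
        rw [hθk] at hb; cases hb; rfl
      have e2 : (u (θ k').1)⁻¹ = of k' := by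
        rw [← h2]; show _ = sgn u (θ k'); rcases hθk : θ k' with ⟨a, c⟩
        rw [hθk] at hb'; cases hb'; rfl
      rw [h] at e1
      have := e1.symm.trans e2
      exact FreeGroup.of_injective this
    · -- k false, k' true
      exfalso
      have e1 : (u (θ k).1)⁻¹ = of k := by
        rw [← h1]; rcases hθk : θ k with ⟨a, c⟩
        rw [hθk] at hb; cases hb; rfl
      have e2 : u (θ k').1 = of k' := by
        rw [← h2]; rcases hθk : θ k' with ⟨a, c⟩
        rw [hθk] at hb'; cases hb'; rfl
      rw [h] at e1
      rw [e2] at e1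
      exact of_ne_inv k' k (by rw [← e1, inv_inv])
    · -- k true, k' false
      exfalso
      have e1 : u (θ k).1 = of k := by
        rw [← h1]; rcases hθk : θ k with ⟨a, c⟩
        rw [hθk] at hb; cases hb; rfl
      have e2 : (u (θ k').1)⁻¹ = of k' := by
        rw [← h2]; rcases hθk : θ k' with ⟨a, c⟩
        rw [hθk] at hb'; cases hb'; rfl
      rw [← h] at e2
      rw [e1] at e2
      exact of_ne_inv k k' (by rw [← e2, inv_inv])
    · -- both true
      have e1 : u (θ k).1 = of k := by
        rw [← h1]; rcases hθk : θ k with ⟨a, c⟩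
        rw [hθk] at hb; cases hb; rfl
      have e2 : u (θ k').1 = of k' := by
        rw [← h2]; rcases hθk : θ k' with ⟨a, c⟩
        rw [hθk] at hb'; cases hb'; rfl
      rw [h] at e1
      exact FreeGroup.of_injective (e1.symm.trans e2)
  have hsurj : Function.Surjective (fun k => (θ k).1) :=
    Finite.injective_iff_surjective.mp hinj
  intro i
  obtain ⟨k, hk⟩ := hsurj i
  simp only at hk
  have h1 := hθ k
  rcases hb : (θ k).2 with _ | _
  · refine ⟨k, Or.inr ?_⟩
    have e1 : (u (θ k).1)⁻¹ = of k := by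
      rw [← h1]; rcases hθk : θ k with ⟨a, c⟩
      rw [hθk] at hb; cases hb; rfl
    rw [hk] at e1
    show u i = (of k)⁻¹
    rw [← e1, inv_inv]
  · refine ⟨k, Or.inl ?_⟩
    have e1 : u (θ k).1 = of k := by
      rw [← h1]; rcases hθk : θ k with ⟨a, c⟩
      rw [hθk] at hb; cases hb; rfl
    rw [hk] at e1
    exact e1



/-! ### Part 7a: valuation of words (tie-breaking measure) -/

section Valuation

variable [Fintype α]

/-- numeric encoding of a letter -/
noncomputable def enc (p : α × Bool) : ℕ := 2 * ((Fintype.equivFin α) p.1 : ℕ) + (cond p.2 1 0)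

/-- the base for valuations -/
def BB (α : Type*) [Fintype α] : ℕ := 2 * Fintype.card α + 1

lemma enc_lt (p : α × Bool) : enc p + 2 ≤ BB α := by
  rcases p with ⟨a, b⟩
  have := ((Fintype.equivFin α) a).2
  cases b <;> simp [enc, BB] <;> omega

lemma enc_inj {p q : α × Bool} (h : enc p = enc q) : p = q := by
  rcases p with ⟨a, b⟩
  rcases q with ⟨a', b'⟩
  have hval : ((Fintype.equivFin α) a : ℕ) = ((Fintype.equivFin α) a' : ℕ) ∧ b = b' := by
    cases b <;> cases b' <;> simp [enc] at h ⊢ <;> omega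
  have ha : a = a' := (Fintype.equivFin α).injective (Fin.val_injective hval.1)
  rw [ha, hval.2]

/-- valuation of a word -/
noncomputable def val (L : List (α × Bool)) : ℕ := L.foldl (fun acc p => acc * BB α + (enc p + 1)) 0

lemma val_foldl (a : ℕ) (Y : List (α × Bool)) :
    Y.foldl (fun acc p => acc * BB α + (enc p + 1)) a = a * (BB α) ^ Y.length + val Y := by
  induction Y generalizing a with
  | nil => simp [val]
  | cons p T ih =>
    show T.foldl _ (a * BB α + (enc p + 1)) = _
    rw [ih (a * BB α + (enc p + 1))]
    have hv : val (p :: T) = (enc p + 1) * (BB α) ^ T.length + val T := by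
      show T.foldl _ (0 * BB α + (enc p + 1)) = _
      rw [ih (0 * BB α + (enc p + 1))]
      ring
    rw [hv]
    simp [List.length_cons, pow_succ]
    ring

lemma val_append (X Y : List (α × Bool)) :
    val (X ++ Y) = val X * (BB α) ^ Y.length + val Y := by
  unfold val
  rw [List.foldl_append]
  exact val_foldl _ _

lemma val_lt (Y : List (α × Bool)) : val Y < (BB α) ^ Y.length := by
  induction Y with
  | nil => simp [val]
  | cons p T ih =>
    have hv : val (p :: T) = (enc p + 1) * (BB α) ^ T.length + val T := by
      have := val_append [p] T
      simpa [val] using this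
    rw [hv, List.length_cons, pow_succ]
    have h1 : (enc p + 1) * (BB α) ^ T.length + val T < (enc p + 2) * (BB α) ^ T.length := by
      have : (enc p + 2) * (BB α) ^ T.length
          = (enc p + 1) * (BB α) ^ T.length + (BB α) ^ T.length := by ring
      omega
    have h2 : (enc p + 2) * (BB α) ^ T.length ≤ BB α * (BB α) ^ T.length :=
      Nat.mul_le_mul_right _ (enc_lt p)
    calc (enc p + 1) * (BB α) ^ T.length + val T
        < (enc p + 2) * (BB α) ^ T.length := h1
      _ ≤ BB α * (BB α) ^ T.length := h2
      _ = (BB α) ^ T.length * BB α := by ring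

lemma digit_unique {M d1 d2 v1 v2 : ℕ} (h1 : v1 < M) (h2 : v2 < M)
    (h : d1 * M + v1 = d2 * M + v2) : d1 = d2 ∧ v1 = v2 := by
  rcases lt_trichotomy d1 d2 with hd | hd | hd
  · exfalso
    have : (d1 + 1) * M ≤ d2 * M := Nat.mul_le_mul_right _ (by omega)
    have h3 : (d1 + 1) * M = d1 * M + M := by ring
    omega
  · subst hd
    omega
  · exfalso
    have : (d2 + 1) * M ≤ d1 * M := Nat.mul_le_mul_right _ (by omega)
    have h3 : (d2 + 1) * M = d2 * M + M := by ring
    omega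

lemma val_inj : ∀ {X Y : List (α × Bool)}, X.length = Y.length → val X = val Y → X = Y := by
  intro X
  induction X with
  | nil =>
    intro Y hlen _
    have hY : Y.length = 0 := by simpa using hlen.symm
    exact (List.length_eq_zero_iff.mp hY).symm
  | cons p T ih =>
    intro Y hlen hval
    rcases Y with _ | ⟨q, S⟩
    · simp at hlen
    · have hTS : T.length = S.length := by simpa using hlen
      have hv1 : val (p :: T) = (enc p + 1) * (BB α) ^ T.length + val T := by
        have := val_append [p] T
        simpa [val] using this
      have hv2 : val (q :: S) = (enc q + 1) * (BB α) ^ S.length + val S := by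
        have := val_append [q] S
        simpa [val] using this
      rw [hv1, hv2, ← hTS] at hval
      have hvS : val S < (BB α) ^ T.length := by rw [hTS]; exact val_lt S
      obtain ⟨hd, hv⟩ := digit_unique (val_lt T) hvS hval
      have hpq : p = q := enc_inj (by omega)
      rw [hpq, ih hTS hv]

/-- half-word -/
def halfw (L : List (α × Bool)) : List (α × Bool) := L.take ((L.length + 1) / 2)

/-- key of a free group element -/
noncomputable def keyv (x : FreeGroup α) : ℕ := val (halfw x.toWord) + val (halfw (invRev x.toWord))

lemma keyv_inv (x : FreeGroup α) : keyv x⁻¹ = keyv x := by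
  unfold keyv
  rw [toWord_inv, invRev_invRev]
  omega

lemma keychange {A C C' : List (α × Bool)} (hlen : C.length = C'.length)
    (hle : C.length ≤ A.length) (hval : val C' < val C) :
    val (halfw (A ++ invRev C')) + val (halfw (C' ++ invRev A)) <
      val (halfw (A ++ invRev C)) + val (halfw (C ++ invRev A)) := by
  set h := (A.length + C.length + 1) / 2 with hh
  have hhA : h ≤ A.length := by omega
  have hhC : C.length ≤ h := by omega
  have first : ∀ Z : List (α × Bool), Z.length = C.length →
      halfw (A ++ invRev Z) = A.take h := by
    intro Z hZ
    unfold halfw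
    rw [List.length_append, invRev_length, hZ, ← hh, List.take_append,
      Nat.sub_eq_zero_of_le hhA, List.take_zero, List.append_nil]
  have second : ∀ Z : List (α × Bool), Z.length = C.length →
      halfw (Z ++ invRev A) = Z ++ (invRev A).take (h - C.length) := by
    intro Z hZ
    unfold halfw
    rw [List.length_append, invRev_length, hZ]
    have : (C.length + A.length + 1) / 2 = h := by omega
    rw [this, List.take_append, List.take_of_length_le (by omega), hZ]
  rw [first C rfl, first C' hlen.symm, second C rfl, second C' hlen.symm]
  rw [val_append, val_append]
  have hpos : 0 < (BB α) ^ ((invRev A).take (h - C.length)).length := by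
    apply Nat.pow_pos
    simp [BB]
  have := Nat.mul_lt_mul_of_lt_of_le hval (le_refl ((BB α) ^ ((invRev A).take (h - C.length)).length)) hpos
  omega

end Valuation

/-- A word followed by its formal inverse is not reduced. -/
lemma rd_not_cancel_pal {C : List (α × Bool)} (hC : C ≠ []) : ¬ Rd (C ++ invRev C) := by
  intro h
  obtain ⟨T, c, rfl⟩ := List.eq_nil_or_concat C |>.resolve_left hC
  rw [List.concat_eq_append] at *
  rcases List.isChain_append.mp h with ⟨-, -, hj⟩
  have h1 : c ∈ (T ++ [c]).getLast? := by rw [List.getLast?_concat]; rfl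
  have h2 : linv c ∈ (invRev (T ++ [c])).head? := by
    rw [invRev_append]
    show linv c ∈ (invRev [c] ++ invRev T).head?
    have : invRev [c] = [linv c] := by simp [invRev, linv]
    rw [this]
    rfl
  have := hj c h1 (linv c) h2
  exact this ⟨rfl, by simp [linv]⟩

/-- Replacing one slot of an automorphism by an elementary move. -/
lemma replace_slot (i₀ i₁ i₂ : α) (h01 : i₀ ≠ i₁) (h02 : i₀ ≠ i₂) (h12 : i₁ ≠ i₂)
    (φ : MulAut (FreeGroup α)) (i j : α) (hij : i ≠ j) (w : FreeGroup α)
    (hw : w = φ (of i) * φ (of j) ∨ w = φ (of i) * (φ (of j))⁻¹ ∨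
          w = φ (of j) * φ (of i) ∨ w = (φ (of j))⁻¹ * φ (of i)) :
    ∃ e : MulAut (FreeGroup α), e ∈ Ncl i₀ i₁ ∧ (φ * e) (of i) = w ∧
      (∀ k, k ≠ i → (φ * e) (of k) = φ (of k)) := by
  rcases hw with hw | hw | hw | hw
  · refine ⟨Raut i j hij, Raut_mem i₀ i₁ i₂ h01 h02 h12 i j hij, ?_, ?_⟩
    · rw [MulAut.mul_apply, Raut_of, if_pos rfl, _root_.map_mul, hw]
    · intro k hk
      rw [MulAut.mul_apply, Raut_of, if_neg hk]
  · refine ⟨(Raut i j hij)⁻¹,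
      Subgroup.inv_mem _ (Raut_mem i₀ i₁ i₂ h01 h02 h12 i j hij), ?_, ?_⟩
    · rw [MulAut.mul_apply, Raut_inv_of, if_pos rfl, _root_.map_mul, _root_.map_inv, hw]
    · intro k hk
      rw [MulAut.mul_apply, Raut_inv_of, if_neg hk]
  · refine ⟨Laut i j hij, Laut_mem i₀ i₁ i₂ h01 h02 h12 i j hij, ?_, ?_⟩
    · rw [MulAut.mul_apply, Laut_of, if_pos rfl, _root_.map_mul, hw]
    · intro k hk
      rw [MulAut.mul_apply, Laut_of, if_neg hk]
  · refine ⟨(Laut i j hij)⁻¹,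
      Subgroup.inv_mem _ (Laut_mem i₀ i₁ i₂ h01 h02 h12 i j hij), ?_, ?_⟩
    · rw [MulAut.mul_apply, Laut_inv_of, if_pos rfl, _root_.map_mul, _root_.map_inv, hw]
    · intro k hk
      rw [MulAut.mul_apply, Laut_inv_of, if_neg hk]



/-! ### Part 7c: descent -/

lemma sum_lt_of_slot [Fintype α] {f g : α → ℕ} (i : α) (hle : ∀ k, k ≠ i → f k = g k)
    (hlt : f i < g i) : ∑ k, f k < ∑ k, g k := by
  apply Finset.sum_lt_sum
  · intro k _
    rcases eq_or_ne k i with rfl | h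
    · exact hlt.le
    · exact (hle k h).le
  · exact ⟨i, Finset.mem_univ i, hlt⟩

lemma sum_eq_of_slot [Fintype α] {f g : α → ℕ} (i : α) (hle : ∀ k, k ≠ i → f k = g k)
    (heq : f i = g i) : ∑ k, f k = ∑ k, g k := by
  apply Finset.sum_congr rfl
  intro k _
  rcases eq_or_ne k i with rfl | h
  · exact heq
  · exact hle k h

lemma slot_form (u : α → FreeGroup α) (p q : α × Bool) :
    (cond p.2 (sgn u p * sgn u q) ((sgn u p * sgn u q)⁻¹)) = u p.1 * u q.1 ∨
    (cond p.2 (sgn u p * sgn u q) ((sgn u p * sgn u q)⁻¹)) = u p.1 * (u q.1)⁻¹ ∨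
    (cond p.2 (sgn u p * sgn u q) ((sgn u p * sgn u q)⁻¹)) = u q.1 * u p.1 ∨
    (cond p.2 (sgn u p * sgn u q) ((sgn u p * sgn u q)⁻¹)) = (u q.1)⁻¹ * u p.1 := by
  rcases p with ⟨i, _ | _⟩ <;> rcases q with ⟨j, _ | _⟩
  · exact Or.inr (Or.inr (Or.inl (by simp [sgn, mul_inv_rev])))
  · exact Or.inr (Or.inr (Or.inr (by simp [sgn, mul_inv_rev])))
  · exact Or.inr (Or.inl (by simp [sgn]))
  · exact Or.inl (by simp [sgn])

lemma slot_form_left (u : α → FreeGroup α) (p q : α × Bool) :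
    (cond q.2 (sgn u p * sgn u q) ((sgn u p * sgn u q)⁻¹)) = u q.1 * u p.1 ∨
    (cond q.2 (sgn u p * sgn u q) ((sgn u p * sgn u q)⁻¹)) = u q.1 * (u p.1)⁻¹ ∨
    (cond q.2 (sgn u p * sgn u q) ((sgn u p * sgn u q)⁻¹)) = u p.1 * u q.1 ∨
    (cond q.2 (sgn u p * sgn u q) ((sgn u p * sgn u q)⁻¹)) = (u p.1)⁻¹ * u q.1 := by
  rcases p with ⟨i, _ | _⟩ <;> rcases q with ⟨j, _ | _⟩
  · exact Or.inl (by simp [sgn, mul_inv_rev])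
  · exact Or.inr (Or.inr (Or.inr (by simp [sgn, mul_inv_rev])))
  · exact Or.inr (Or.inl (by simp [sgn, mul_inv_rev]))
  · exact Or.inr (Or.inr (Or.inl (by simp [sgn])))

lemma norm_cond (b : Bool) (x : FreeGroup α) :
    FreeGroup.norm (cond b x x⁻¹) = FreeGroup.norm x := by
  cases b <;> simp

lemma keyv_cond [Fintype α] (b : Bool) (x : FreeGroup α) : keyv (cond b x x⁻¹) = keyv x := by
  cases b <;> simp [keyv_inv]

lemma norm_sgn (u : α → FreeGroup α) (p : α × Bool) :
    FreeGroup.norm (sgn u p) = FreeGroup.norm (u p.1) := by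
  rcases p with ⟨i, _ | _⟩ <;> simp [sgn]

lemma keyv_sgn [Fintype α] (u : α → FreeGroup α) (p : α × Bool) :
    keyv (sgn u p) = keyv (u p.1) := by
  rcases p with ⟨i, _ | _⟩ <;> simp [sgn, keyv_inv]

lemma sgn_ne_one {u : α → FreeGroup α} (hu : ∀ i, u i ≠ 1) (p : α × Bool) : sgn u p ≠ 1 := by
  rcases p with ⟨i, _ | _⟩
  · simpa [sgn] using inv_ne_one.mpr (hu i)
  · simpa [sgn] using hu i

/-- letter-level structure: if the slots agree, signed letters are equal or inverse -/
lemma letters_cases {p q : α × Bool} (h : p.1 = q.1) : q = p ∨ q = linv p := by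
  rcases p with ⟨i, b⟩
  rcases q with ⟨j, c⟩
  simp only at h
  subst h
  cases b <;> cases c <;> simp [linv]

theorem aut_mem_ncl [Fintype α] (i₀ i₁ i₂ : α) (h01 : i₀ ≠ i₁) (h02 : i₀ ≠ i₂)
    (h12 : i₁ ≠ i₂) (φ : MulAut (FreeGroup α)) : φ ∈ Ncl i₀ i₁ := by
  suffices H : ∀ a b (ψ : MulAut (FreeGroup α)),
      (∑ i, FreeGroup.norm (ψ (of i))) = a → (∑ i, keyv (ψ (of i))) = b → ψ ∈ Ncl i₀ i₁ by
    exact H _ _ φ rfl rfl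
  intro a
  induction a using Nat.strong_induction_on with
  | _ a ihA =>
    intro b
    induction b using Nat.strong_induction_on with
    | _ b ihB =>
      intro φ ha hb
      -- basic facts about the tuple
      have hu : ∀ i, φ (of i) ≠ 1 := by
        intro i h
        exact FreeGroup.of_ne_one i ((aut_eq_one_iff φ).mp h)
      have hnz : ∀ p, sgn (fun i => φ (of i)) p ≠ 1 := sgn_ne_one hu
      have hsgn : ∀ p, sgn (fun i => φ (of i)) p = φ (sgn (fun a => (of a : FreeGroup α)) p) := by
        intro p
        rcases p with ⟨i, _ | _⟩
        · show (φ (of i))⁻¹ = φ ((of i)⁻¹)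
          rw [_root_.map_inv]
        · rfl
      set g : α × Bool → FreeGroup α := sgn (fun i => φ (of i)) with hgdef
      have hlinv : ∀ p, g (linv p) = (g p)⁻¹ := by
        intro p
        rw [hgdef]
        exact sgn_linv _ p
      have hnormsgn : ∀ p : α × Bool, FreeGroup.norm (g p) = FreeGroup.norm (φ (of p.1)) :=
        fun p => norm_sgn (fun i => φ (of i)) p
      have hkeysgn : ∀ p : α × Bool, keyv (g p) = keyv (φ (of p.1)) :=
        fun p => keyv_sgn (fun i => φ (of i)) p
      by_cases HN1 : ∀ p q, g p * g q ≠ 1 →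
          FreeGroup.norm (g p) ≤ FreeGroup.norm (g p * g q) ∧
          FreeGroup.norm (g q) ≤ FreeGroup.norm (g p * g q)
      · by_cases HN2 : ∀ p q r, g p * g q ≠ 1 → g q * g r ≠ 1 →
            FreeGroup.norm (g p) + FreeGroup.norm (g r) <
              FreeGroup.norm (g p * g q * g r) + FreeGroup.norm (g q)
        · -- Nielsen reduced: signed permutation
          exact signed_mem_aux i₀ i₁ i₂ h01 h02 h12 _ φ rfl (rigid φ HN1 HN2)
        · -- (N2) fails: tie-breaking move
          push_neg at HN2
          obtain ⟨p, q, r, hpq, hqr, hfail⟩ := HN2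
          obtain ⟨A₁, B₁, C₁, f1, f2, f3, g1, g2, g3, g4⟩ := mul_decomp' (g p) (g q)
          obtain ⟨A₂, B₂, C₂, f1', f2', f3', g1', g2', g3', g4'⟩ := mul_decomp' (g q) (g r)
          obtain ⟨hb1a, hb1b⟩ := HN1 p q hpq
          obtain ⟨hb2a, hb2b⟩ := HN1 q r hqr
          have hC₁B₁ : C₁.length ≤ B₁.length := by omega
          have hC₁A₁ : C₁.length ≤ A₁.length := by omega
          have hC₂A₂ : C₂.length ≤ A₂.length := by omega
          have hC₂B₂ : C₂.length ≤ B₂.length := by omega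
          have hsum : 2 * FreeGroup.norm (g q) ≤ cancel2 (g p) (g q) + cancel2 (g q) (g r) := by
            by_contra hc
            push_neg at hc
            have := triple hc
            omega
          have hB₁len : B₁.length = C₁.length := by omega
          have hA₂len : A₂.length = C₂.length := by omega
          have hCC : C₁.length = C₂.length := by omega
          have hqword : C₁ ++ B₁ = A₂ ++ invRev C₂ := f2.symm.trans f1'
          obtain ⟨hidA, hidB⟩ := List.append_inj hqword (by omega)
          have hC₁ne : C₁ ≠ [] := by
            intro h
            have h0 : C₁.length = 0 := by rw [h]; rfl
            have : FreeGroup.norm (g q) = 0 := by omega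
            exact hnz q (norm_eq_zero.mp this)
          have hC₂ne : C₂ ≠ [] := by
            intro h
            have h0 : C₂.length = 0 := by rw [h]; rfl
            have : FreeGroup.norm (g q) = 0 := by omega
            exact hnz q (norm_eq_zero.mp this)
          -- slot distinctness
          have hqp : q.1 ≠ p.1 := by
            intro h
            rcases letters_cases h.symm with hq | hq
            · have hgg : g p = g q := by rw [hq]
              have hww : A₁ ++ invRev C₁ = C₁ ++ B₁ := by rw [← f1, ← f2, hgg]
              have hA₁len : A₁.length = C₁.length := by
                have hnn : FreeGroup.norm (g p) = FreeGroup.norm (g q) := by rw [hgg]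
                omega
              obtain ⟨e1, e2⟩ := List.append_inj hww (by omega)
              refine rd_not_cancel_pal hC₁ne ?_
              have hrd2 : Rd (C₁ ++ B₁) := by rw [← f2]; exact rd_toWord _
              rwa [← e2] at hrd2
            · refine hpq ?_
              have hq2 : g q = (g p)⁻¹ := by rw [hq]; exact hlinv p
              rw [hq2, mul_inv_cancel]
          have hrq : r.1 ≠ q.1 := by
            intro h
            rcases letters_cases h.symm with hr | hr
            · have hgg : g q = g r := by rw [hr]
              have hww : A₂ ++ invRev C₂ = C₂ ++ B₂ := by rw [← f1', ← f2', hgg]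
              have hB₂len : B₂.length = C₂.length := by
                have hnn : FreeGroup.norm (g q) = FreeGroup.norm (g r) := by rw [hgg]
                omega
              obtain ⟨e1, e2⟩ := List.append_inj hww (by omega)
              refine rd_not_cancel_pal hC₂ne ?_
              have hrd2 : Rd (A₂ ++ invRev C₂) := by rw [← f1']; exact rd_toWord _
              rwa [e1] at hrd2
            · refine hqr ?_
              have hr2 : g r = (g q)⁻¹ := by rw [hr]; exact hlinv q
              rw [hr2, mul_inv_cancel]
          rcases lt_trichotomy (val C₂) (val C₁) with hv | hv | hv
          · -- U move on slot p.1
            have hforms := slot_form (fun i => φ (of i)) p q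
            obtain ⟨e, he, happ1, happ2⟩ :=
              replace_slot i₀ i₁ i₂ h01 h02 h12 φ p.1 q.1 (Ne.symm hqp) _ hforms
            have happ1' : (φ * e) (of p.1) = cond p.2 (g p * g q) ((g p * g q)⁻¹) := happ1
            have hnormeq : FreeGroup.norm (g p * g q) = FreeGroup.norm (g p) := by omega
            have hm1 : (∑ i, FreeGroup.norm ((φ * e) (of i))) = a := by
              rw [← ha]
              apply sum_eq_of_slot p.1
              · intro k hk; rw [happ2 k hk]
              · rw [happ1', norm_cond, hnormeq, hnormsgn p]
            have hkey : keyv ((φ * e) (of p.1)) < keyv (φ (of p.1)) := by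
              rw [happ1', keyv_cond, ← hkeysgn p]
              unfold keyv
              rw [f3, f1, hidB]
              simp only [invRev_append, invRev_invRev]
              exact keychange hCC hC₁A₁ hv
            have hm2 : (∑ i, keyv ((φ * e) (of i))) < b := by
              rw [← hb]
              apply sum_lt_of_slot p.1
              · intro k hk; rw [happ2 k hk]
              · exact hkey
            have hmem := ihB _ hm2 (φ * e) hm1 rfl
            have hφ : φ = (φ * e) * e⁻¹ := by group
            rw [hφ]
            exact Subgroup.mul_mem _ hmem (Subgroup.inv_mem _ he)
          · -- val equal: contradiction
            have hC : C₁ = C₂ := val_inj hCC hv.symm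
            refine absurd ?_ (rd_not_cancel_pal hC₁ne)
            have hrd2 : Rd (C₁ ++ B₁) := by rw [← f2]; exact rd_toWord _
            rwa [hidB, ← hC] at hrd2
          · -- W move on slot r.1
            have hforms := slot_form_left (fun i => φ (of i)) q r
            obtain ⟨e, he, happ1, happ2⟩ :=
              replace_slot i₀ i₁ i₂ h01 h02 h12 φ r.1 q.1 hrq _ hforms
            have happ1' : (φ * e) (of r.1) = cond r.2 (g q * g r) ((g q * g r)⁻¹) := happ1
            have hnormeq : FreeGroup.norm (g q * g r) = FreeGroup.norm (g r) := by omega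
            have hm1 : (∑ i, FreeGroup.norm ((φ * e) (of i))) = a := by
              rw [← ha]
              apply sum_eq_of_slot r.1
              · intro k hk; rw [happ2 k hk]
              · rw [happ1', norm_cond, hnormeq, hnormsgn r]
            have hkc := keychange (A := invRev B₂) (C := C₂) (C' := C₁) hCC.symm
              (by rw [invRev_length]; exact hC₂B₂) hv
            rw [invRev_invRev] at hkc
            have e1 : keyv (g q * g r) =
                val (halfw (invRev B₂ ++ invRev C₁)) + val (halfw (C₁ ++ B₂)) := by
              rw [← keyv_inv]
              unfold keyv
              rw [toWord_inv, f3', ← hidA]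
              simp only [invRev_append, invRev_invRev]
            have e2 : keyv (g r) =
                val (halfw (invRev B₂ ++ invRev C₂)) + val (halfw (C₂ ++ B₂)) := by
              rw [← keyv_inv]
              unfold keyv
              rw [toWord_inv, f2']
              simp only [invRev_append, invRev_invRev]
            have hkey : keyv ((φ * e) (of r.1)) < keyv (φ (of r.1)) := by
              rw [happ1', keyv_cond, ← hkeysgn r, e1, e2]
              exact hkc
            have hm2 : (∑ i, keyv ((φ * e) (of i))) < b := by
              rw [← hb]
              apply sum_lt_of_slot r.1
              · intro k hk; rw [happ2 k hk]
              · exact hkey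
            have hmem := ihB _ hm2 (φ * e) hm1 rfl
            have hφ : φ = (φ * e) * e⁻¹ := by group
            rw [hφ]
            exact Subgroup.mul_mem _ hmem (Subgroup.inv_mem _ he)
      · -- (N1) fails: a length-reducing move
        push_neg at HN1
        obtain ⟨p, q, hpq, hviol⟩ := HN1
        have hslots : q.1 ≠ p.1 := by
          intro h
          rcases letters_cases h.symm with hq | hq
          · -- q = p : contradict ‖x²‖ > ‖x‖
            rw [hq] at hviol hpq
            have hsq := norm_lt_norm_sq (hnz p)
            have := hviol hsq.le
            omega
          · refine hpq ?_
            have hq2 : g q = (g p)⁻¹ := by rw [hq]; exact hlinv p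
            rw [hq2, mul_inv_cancel]
        by_cases hA : FreeGroup.norm (g p) ≤ FreeGroup.norm (g p * g q)
        · -- the second bound fails : move on slot q.1
          have hlt : FreeGroup.norm (g p * g q) < FreeGroup.norm (g q) := hviol hA
          have hforms := slot_form_left (fun i => φ (of i)) p q
          obtain ⟨e, he, happ1, happ2⟩ :=
            replace_slot i₀ i₁ i₂ h01 h02 h12 φ q.1 p.1 hslots _ hforms
          have happ1' : (φ * e) (of q.1) = cond q.2 (g p * g q) ((g p * g q)⁻¹) := happ1
          have hm1 : (∑ i, FreeGroup.norm ((φ * e) (of i))) < a := by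
            rw [← ha]
            apply sum_lt_of_slot q.1
            · intro k hk; rw [happ2 k hk]
            · rw [happ1', norm_cond, ← hnormsgn q]
              exact hlt
          have hmem := ihA _ hm1 _ (φ * e) rfl rfl
          have hφ : φ = (φ * e) * e⁻¹ := by group
          rw [hφ]
          exact Subgroup.mul_mem _ hmem (Subgroup.inv_mem _ he)
        · -- the first bound fails : move on slot p.1
          push_neg at hA
          have hforms := slot_form (fun i => φ (of i)) p q
          obtain ⟨e, he, happ1, happ2⟩ :=
            replace_slot i₀ i₁ i₂ h01 h02 h12 φ p.1 q.1 (Ne.symm hslots) _ hforms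
          have happ1' : (φ * e) (of p.1) = cond p.2 (g p * g q) ((g p * g q)⁻¹) := happ1
          have hm1 : (∑ i, FreeGroup.norm ((φ * e) (of i))) < a := by
            rw [← ha]
            apply sum_lt_of_slot p.1
            · intro k hk; rw [happ2 k hk]
            · rw [happ1', norm_cond, ← hnormsgn p]
              exact hA
          have hmem := ihA _ hm1 _ (φ * e) rfl rfl
          have hφ : φ = (φ * e) * e⁻¹ := by group
          rw [hφ]
          exact Subgroup.mul_mem _ hmem (Subgroup.inv_mem _ he)



end AutFN

/-- **Proposition D.** For `n ≥ 3`, the group `Aut(F_n)` is the normal closure of a single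
element of order 2: there is `x ∈ Aut(F_n)` with `x ≠ 1` and `x² = 1` whose normal closure
is the whole group. -/
theorem aut_free_normalClosure_of_involution (n : ℕ) (hn : 3 ≤ n) :
    ∃ x : MulAut (FreeGroup (Fin n)), x ≠ 1 ∧ x ^ 2 = 1 ∧
      Subgroup.normalClosure ({x} : Set (MulAut (FreeGroup (Fin n)))) = ⊤ := by
  set i₀ : Fin n := ⟨0, by omega⟩ with hi₀
  set i₁ : Fin n := ⟨1, by omega⟩ with hi₁
  set i₂ : Fin n := ⟨2, by omega⟩ with hi₂
  have h01 : i₀ ≠ i₁ := by simp [hi₀, hi₁, Fin.ext_iff]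
  have h02 : i₀ ≠ i₂ := by simp [hi₀, hi₂, Fin.ext_iff]
  have h12 : i₁ ≠ i₂ := by simp [hi₁, hi₂, Fin.ext_iff]
  refine ⟨AutFN.permAut (Equiv.swap i₀ i₁), ?_, ?_, ?_⟩
  · intro h
    have h2 : AutFN.permAut (Equiv.swap i₀ i₁) (FreeGroup.of i₀) = FreeGroup.of i₀ := by
      rw [h]; rfl
    rw [AutFN.permAut_of, Equiv.swap_apply_left] at h2
    exact h01 (FreeGroup.of_injective h2).symm
  · rw [pow_two, ← _root_.map_mul, Equiv.swap_mul_self, _root_.map_one]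
  · rw [Subgroup.eq_top_iff']
    intro φ
    exact AutFN.aut_mem_ncl i₀ i₁ i₂ h01 h02 h12 φ
end

section
/- Let n ≥ 3 and let φ : Aut(F_n) → G be a group homomorphism. If φ is not injective on the subgroup S_n of basis-permutation automorphisms, then φ is either trivial or has image of cardinality exactly 2. -/
/-- The homomorphism `S_n → Aut(F_n)` sending a permutation of the index set to the
corresponding basis-permutation automorphism of the free group. -/
def permToAut (n : ℕ) : Equiv.Perm (Fin n) →* MulAut (FreeGroup (Fin n)) where
  toFun σ := FreeGroup.freeGroupCongr σ
  map_one' := by ext x; simp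
  map_mul' σ τ := by ext x; simp [FreeGroup.freeGroupCongr, ← FreeGroup.map.comp]

namespace BV
open FreeGroup List

variable {α : Type*} [DecidableEq α]

def Rnc : (α × Bool) → (α × Bool) → Prop := fun x y => ¬(x.1 = y.1 ∧ x.2 = !y.2)

theorem reduce_eq_self_iff (L : List (α × Bool)) :
    reduce L = L ↔ List.IsChain (Rnc (α := α)) L := by
  induction L with
  | nil => simp
  | cons x L ih =>
    rw [reduce.cons]
    constructor
    · intro h
      cases hr : reduce L with
      | nil =>
        rw [hr] at h
        have : L = [] := by simpa using congrArg List.tail h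
        subst this; simp
      | cons hd tl =>
        rw [hr] at h
        dsimp only at h
        by_cases hc : x.1 = hd.1 ∧ x.2 = !hd.2
        · rw [if_pos hc] at h
          have h1 := FreeGroup.Red.length_le (FreeGroup.reduce.red (L := L))
          rw [hr, h] at h1
          simp at h1
        · rw [if_neg hc] at h
          have hL : L = hd :: tl := by simpa using (congrArg List.tail h).symm
          have hred : reduce L = L := by rw [hr, hL]
          have hch := ih.mp hred
          rw [hL]
          rw [hL] at hch
          exact List.isChain_cons_cons.mpr ⟨hc, hch⟩
    · intro h
      cases L with
      | nil => rfl
      | cons hd tl =>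
        have hch := List.isChain_cons_cons.mp h
        have hr : reduce (hd :: tl) = hd :: tl := ih.mpr hch.2
        rw [hr]
        simp only [if_neg hch.1]

theorem reduce_append {L₁ L₂ : List (α × Bool)} (h : reduce (L₁ ++ L₂) = L₁ ++ L₂) :
    reduce L₁ = L₁ ∧ reduce L₂ = L₂ := by
  rw [reduce_eq_self_iff] at h ⊢
  rw [List.isChain_append] at h
  exact ⟨h.1, by rw [reduce_eq_self_iff]; exact h.2.1⟩

theorem reduce_append_of {L₁ L₂ : List (α × Bool)} (h₁ : reduce L₁ = L₁) (h₂ : reduce L₂ = L₂)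
    (hj : ∀ x ∈ L₁.getLast?, ∀ y ∈ L₂.head?, Rnc x y) :
    reduce (L₁ ++ L₂) = L₁ ++ L₂ := by
  rw [reduce_eq_self_iff] at h₁ h₂ ⊢
  exact List.isChain_append.mpr ⟨h₁, h₂, hj⟩

omit [DecidableEq α] in
theorem invRev_concat (D : List (α × Bool)) (a : α × Bool) :
    invRev (D ++ [a]) = (a.1, !a.2) :: invRev D := by
  simp [invRev]

theorem exists_cancel_aux : ∀ (N : ℕ) (L₁ L₂ : List (α × Bool)), L₁.length ≤ N →
    reduce L₁ = L₁ → reduce L₂ = L₂ →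
    ∃ A D Q, L₁ = A ++ D ∧ L₂ = invRev D ++ Q ∧ reduce (L₁ ++ L₂) = A ++ Q := by
  intro N
  induction N with
  | zero =>
    intro L₁ L₂ hN h₁ h₂
    have : L₁ = [] := List.length_eq_zero_iff.mp (Nat.le_zero.mp hN)
    subst this
    exact ⟨[], [], L₂, by simp, by simp [invRev], by simpa using h₂⟩
  | succ N IH =>
    intro L₁ L₂ hN h₁ h₂
    rcases List.eq_nil_or_concat L₁ with rfl | ⟨M, a, rfl⟩
    on_goal 2 => simp only [List.concat_eq_append] at *
    · exact ⟨[], [], L₂, by simp, by simp [invRev], by simpa using h₂⟩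
    · cases L₂ with
      | nil => exact ⟨M ++ [a], [], [], by simp, by simp [invRev], by simpa using h₁⟩
      | cons b T =>
        by_cases hc : a.1 = b.1 ∧ a.2 = !b.2
        · have hb : b = (a.1, !a.2) := by
            obtain ⟨h3, h4⟩ := hc
            cases b; cases a; simp_all
          have hM : reduce M = M := (reduce_append h₁).1
          have hT : reduce T = T := (reduce_append (L₁ := [b]) (L₂ := T) h₂).2
          have hstep : Red.Step ((M ++ [a]) ++ (b :: T)) (M ++ T) := by
            have he : (M ++ [a]) ++ (b :: T) = M ++ (a.1, a.2) :: (a.1, !a.2) :: T := by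
              rw [hb]; simp
            rw [he]
            exact Red.Step.not
          have hred : reduce ((M ++ [a]) ++ (b :: T)) = reduce (M ++ T) :=
            FreeGroup.reduce.Step.eq hstep
          have hMN : M.length ≤ N := by
            have := hN; simp at this; omega
          obtain ⟨A, D, Q, e1, e2, e3⟩ := IH M T hMN hM hT
          refine ⟨A, D ++ [a], Q, by rw [e1]; simp, ?_, by rw [hred]; exact e3⟩
          rw [invRev_concat, ← hb, e2]; simp
        · refine ⟨M ++ [a], [], b :: T, by simp, by simp [invRev], ?_⟩
          apply reduce_append_of h₁ h₂
          intro x hx y hy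
          simp at hx hy
          subst hx; subst hy
          exact hc

theorem exists_cancel (L₁ L₂ : List (α × Bool)) (h₁ : reduce L₁ = L₁) (h₂ : reduce L₂ = L₂) :
    ∃ A D Q, L₁ = A ++ D ∧ L₂ = invRev D ++ Q ∧ reduce (L₁ ++ L₂) = A ++ Q :=
  exists_cancel_aux L₁.length L₁ L₂ le_rfl h₁ h₂

theorem norm_def (u : FreeGroup α) : norm u = u.toWord.length := rfl

theorem toWord_mul (u v : FreeGroup α) : (u*v).toWord = reduce (u.toWord ++ v.toWord) := by
  conv_lhs => rw [← mk_toWord (x := u), ← mk_toWord (x := v)]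
  rw [mul_mk, toWord_mk]

theorem exists_cancel_group (u v : FreeGroup α) :
    ∃ A D Q, u.toWord = A ++ D ∧ v.toWord = invRev D ++ Q ∧ (u*v).toWord = A ++ Q := by
  obtain ⟨A,D,Q,e1,e2,e3⟩ := exists_cancel u.toWord v.toWord (reduce_toWord u) (reduce_toWord v)
  exact ⟨A,D,Q,e1,e2, by rw [toWord_mul]; exact e3⟩

/-- cancellation amount -/
def cNum (u v : FreeGroup α) : ℕ := (norm u + norm v - norm (u*v))/2

theorem cancel_length {u v : FreeGroup α} {A D Q : List (α × Bool)}
    (e1 : u.toWord = A ++ D) (e2 : v.toWord = invRev D ++ Q) (e3 : (u*v).toWord = A ++ Q) :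
    D.length = cNum u v ∧ norm u = A.length + D.length ∧ norm v = D.length + Q.length ∧
      norm (u*v) = A.length + Q.length := by
  have h1 : norm u = A.length + D.length := by rw [norm_def, e1]; simp
  have h2 : norm v = D.length + Q.length := by rw [norm_def, e2]; simp [invRev_length]
  have h3 : norm (u*v) = A.length + Q.length := by rw [norm_def, e3]; simp
  refine ⟨?_, h1, h2, h3⟩
  rw [cNum, h1, h2, h3]; omega

theorem self_cancel {u : FreeGroup α} (hu : u ≠ 1) : 2 * cNum u u < norm u := by
  obtain ⟨A, D, Q, e1, e2, e3⟩ := exists_cancel_group u u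
  obtain ⟨hD, n1, n2, n3⟩ := cancel_length e1 e2 e3
  rw [← hD]
  by_contra hge
  push_neg at hge
  set L := u.toWord with hLdef
  set l := L.length with hldef
  set c := D.length with hcdef
  have hnorm : norm u = l := rfl
  have hl1 : 1 ≤ l := by
    rcases Nat.eq_zero_or_pos l with h0 | h
    · exact absurd (toWord_eq_nil_iff.mp (List.length_eq_zero_iff.mp h0)) hu
    · exact h
  have hcl : c ≤ l := by omega
  have hc1 : 1 ≤ c := by omega
  have hrel : ∀ p, p < c →
      L[p]? = (L[l-1-p]?).map (fun x => (x.1, !x.2)) := by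
    intro p hpc
    have hinvD : (invRev D).length = c := by rw [invRev_length]
    have h2 : L[p]? = (invRev D)[p]? := by
      rw [e2, List.getElem?_append_left (by omega)]
    have h4 : (invRev D)[p]? = (D[c-1-p]?).map (fun x => (x.1, !x.2)) := by
      rw [invRev, List.getElem?_reverse (by simp; omega), List.getElem?_map]
      simp only [List.length_map, hcdef]
    have h5 : D[c-1-p]? = L[l-1-p]? := by
      rw [e1, List.getElem?_append_right (by omega)]
      congr 1
      omega
    rw [h2, h4, h5]
  rcases Nat.even_or_odd l with ⟨m, hm⟩ | ⟨m, hm⟩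
  · -- l = 2m even : adjacent violation
    have hm1 : 1 ≤ m := by omega
    have hpe := hrel (m-1) (by omega)
    have hidx : l - 1 - (m - 1) = m := by omega
    rw [hidx] at hpe
    have hml : m < l := by omega
    have hm1l : m - 1 < l := by omega
    rw [List.getElem?_eq_getElem hm1l, List.getElem?_eq_getElem hml] at hpe
    simp only [Option.map_some] at hpe
    have hpe' := Option.some.inj hpe
    have hch := (reduce_eq_self_iff L).mp (reduce_toWord u)
    rw [List.isChain_iff_getElem] at hch
    have hc2 := hch (m-1) (by omega)
    apply hc2
    have hmm : m - 1 + 1 = m := by omega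
    simp only [hmm]
    exact ⟨by rw [hpe'], by rw [hpe']⟩
  · -- l = 2m+1 odd : self-flip
    have hpc : m < c := by omega
    have hpe := hrel m (by omega)
    have hidx : l - 1 - m = m := by omega
    rw [hidx] at hpe
    have hml : m < l := by omega
    rw [List.getElem?_eq_getElem hml] at hpe
    simp only [Option.map_some] at hpe
    have hpe' := Option.some.inj hpe
    have := congrArg Prod.snd hpe'
    simp at this

omit [DecidableEq α] in
theorem invRev_append (X Y : List (α × Bool)) : invRev (X ++ Y) = invRev Y ++ invRev X := by
  simp [invRev]

section Measure
variable [Fintype α]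

def Bc (α : Type*) [Fintype α] : ℕ := Fintype.card (α × Bool) + 1

noncomputable def pos (x : α × Bool) : ℕ := 1 + (Fintype.equivFin (α × Bool) x : ℕ)

theorem pos_lt (x : α × Bool) : pos x < Bc α := by
  have := (Fintype.equivFin (α × Bool) x).2
  unfold pos Bc; omega

theorem pos_pos (x : α × Bool) : 1 ≤ pos x := by simp [pos]

theorem pos_inj {x y : α × Bool} (h : pos x = pos y) : x = y := by
  have : (Fintype.equivFin (α × Bool)) x = (Fintype.equivFin (α × Bool)) y := by
    have hx := (Fintype.equivFin (α × Bool) x).2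
    have hy := (Fintype.equivFin (α × Bool) y).2
    simp [pos] at h
    exact Fin.ext h
  exact (Fintype.equivFin (α × Bool)).injective this

noncomputable def g (L : List (α × Bool)) : ℕ :=
  L.foldr (fun x r => pos x + Bc α * r) 0

@[simp] theorem g_nil : g ([] : List (α × Bool)) = 0 := rfl
theorem g_cons (x : α × Bool) (L : List (α × Bool)) : g (x :: L) = pos x + Bc α * g L := rfl

theorem Bc_ge (hα : Nonempty α) : 3 ≤ Bc α := by
  have : 1 ≤ Fintype.card α := Fintype.card_pos
  simp [Bc, Fintype.card_prod]
  omega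

variable [Nonempty α]

theorem g_lt (L : List (α × Bool)) : g L < (Bc α) ^ L.length := by
  induction L with
  | nil => simp
  | cons x L ih =>
    have h1 := pos_lt x
    have hB : 1 ≤ Bc α := by have := Bc_ge (α := α) ‹_›; omega
    simp only [g_cons, List.length_cons, pow_succ]
    calc pos x + Bc α * g L < Bc α + Bc α * g L := by omega
    _ ≤ Bc α * (Bc α ^ L.length) := by nlinarith
    _ = Bc α ^ L.length * Bc α := by ring

theorem g_ge (L : List (α × Bool)) (h : L ≠ []) : (Bc α) ^ (L.length - 1) ≤ g L := by
  induction L with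
  | nil => simp at h
  | cons x L ih =>
    cases L with
    | nil => simpa [g_cons] using pos_pos x
    | cons y M =>
      have hind := ih (by simp)
      have hB : 1 ≤ Bc α := by have := Bc_ge (α := α) ‹_›; omega
      have hstep : (x :: y :: M).length - 1 = ((y :: M).length - 1) + 1 := by simp
      rw [hstep, pow_succ, g_cons]
      calc (Bc α) ^ ((y :: M).length - 1) * Bc α ≤ g (y :: M) * Bc α :=
            Nat.mul_le_mul_right _ hind
      _ = Bc α * g (y :: M) := mul_comm _ _
      _ ≤ pos x + Bc α * g (y :: M) := Nat.le_add_left _ _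

theorem g_append (X Y : List (α × Bool)) : g (X ++ Y) = g X + (Bc α) ^ X.length * g Y := by
  induction X with
  | nil => simp
  | cons x X ih => simp [g_cons, ih, pow_succ]; ring

theorem g_inj : ∀ (X Y : List (α × Bool)), X.length = Y.length → g X = g Y → X = Y := by
  intro X
  induction X with
  | nil => intro Y h _; simp at h; exact (List.length_eq_zero_iff.mp h.symm).symm
  | cons x X ih =>
    intro Y h hg
    cases Y with
    | nil => simp at h
    | cons y Y =>
      simp only [List.length_cons] at h
      simp only [g_cons] at hg
      have hBx := pos_lt x
      have hBy := pos_lt y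
      have hmod : pos x % Bc α = pos y % Bc α := by
        have hq : (pos x + Bc α * g X) % Bc α = (pos y + Bc α * g Y) % Bc α := by rw [hg]
        simpa [Nat.add_mul_mod_self_left] using hq
      have hposeq : pos x = pos y := by
        rwa [Nat.mod_eq_of_lt hBx, Nat.mod_eq_of_lt hBy] at hmod
      have hgXY : g X = g Y := by
        have hBpos : 0 < Bc α := Nat.succ_pos _
        have hmm : Bc α * g X = Bc α * g Y := by omega
        exact Nat.eq_of_mul_eq_mul_left hBpos hmm
      rw [pos_inj hposeq, ih Y (by omega) hgXY]

noncomputable def mu (u : FreeGroup α) : ℕ := g u.toWord + g u⁻¹.toWord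

theorem mu_inv (u : FreeGroup α) : mu u⁻¹ = mu u := by
  simp [mu, add_comm]

theorem mu_lt_of_norm_lt {u v : FreeGroup α} (h : norm u < norm v) : mu u < mu v := by
  have hv1 : v ≠ 1 := by intro hv; rw [hv] at h; simp [FreeGroup.norm_one] at h
  have hvi : v⁻¹ ≠ 1 := by simpa using hv1
  have g1 := g_lt u.toWord
  have g2 := g_lt u⁻¹.toWord
  have g3 := g_ge v.toWord (fun hh => hv1 (toWord_eq_nil_iff.mp hh))
  have g4 := g_ge v⁻¹.toWord (fun hh => hvi (toWord_eq_nil_iff.mp hh))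
  have hn : (norm u) < norm v := h
  have e1 : u.toWord.length = norm u := rfl
  have e2 : u⁻¹.toWord.length = norm u := norm_inv_eq
  have e3 : v.toWord.length = norm v := rfl
  have e4 : v⁻¹.toWord.length = norm v := norm_inv_eq
  rw [e1] at g1; rw [e2] at g2; rw [e3] at g3; rw [e4] at g4
  have hB : 1 ≤ Bc α := by have := Bc_ge (α := α) ‹_›; omega
  have hmono : (Bc α) ^ (norm u) ≤ (Bc α) ^ (norm v - 1) :=
    Nat.pow_le_pow_right hB (by omega)
  unfold mu
  omega

theorem mu_scenario {u v : FreeGroup α} {A D Q : List (α × Bool)}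
    (e1 : u.toWord = A ++ D) (e2 : v.toWord = invRev D ++ Q) (e3 : (u*v).toWord = A ++ Q)
    (hlen : Q.length = D.length) (hAk : D.length ≤ A.length) (hg : g Q < g D) :
    mu (u*v) < mu u := by
  have i1 : (u*v)⁻¹.toWord = invRev Q ++ invRev A := by
    rw [toWord_inv, e3, invRev_append]
  have i2 : u⁻¹.toWord = invRev D ++ invRev A := by
    rw [toWord_inv, e1, invRev_append]
  have hB : 1 ≤ Bc α := by have := Bc_ge (α := α) ‹_›; omega
  have hQlt : g (invRev Q) < (Bc α) ^ D.length := by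
    rcases eq_or_ne Q [] with rfl | hQ
    · simp [invRev]; positivity
    · calc g (invRev Q) < (Bc α) ^ (invRev Q).length := g_lt _
      _ = (Bc α) ^ D.length := by rw [invRev_length, hlen]
  have hDmono : (Bc α) ^ D.length ≤ (Bc α) ^ A.length := Nat.pow_le_pow_right hB hAk
  unfold mu
  rw [e1, e3, i1, i2]
  simp only [g_append, invRev_length, hlen]
  have key : (Bc α) ^ A.length * g Q + g (invRev Q) < (Bc α) ^ A.length * g D + g (invRev D) := by
    calc (Bc α) ^ A.length * g Q + g (invRev Q)
        < (Bc α) ^ A.length * g Q + (Bc α) ^ D.length := by omega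
      _ ≤ (Bc α) ^ A.length * g Q + (Bc α) ^ A.length := by omega
      _ = (Bc α) ^ A.length * (g Q + 1) := by ring
      _ ≤ (Bc α) ^ A.length * g D := by
            apply Nat.mul_le_mul_left
            omega
      _ ≤ (Bc α) ^ A.length * g D + g (invRev D) := by omega
  omega

theorem no_double_half {u v w : FreeGroup α}
    (hv : v ≠ 1) (huv : u * v ≠ 1) (hvw : v * w ≠ 1)
    (h2 : 2 * cNum u v = norm v) (h3 : 2 * cNum v w = norm v)
    (h1u : 2 * cNum u v ≤ norm u) (h1w : 2 * cNum v w ≤ norm w) :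
    mu (u * v) < mu u ∨ mu (v * w) < mu w := by
  obtain ⟨A, D, Q, e1, e2, e3⟩ := exists_cancel_group u v
  obtain ⟨hD, nu1, nv1, nuv⟩ := cancel_length e1 e2 e3
  obtain ⟨A2, D2, W, f1, f2, f3⟩ := exists_cancel_group v w
  obtain ⟨hD2, nv2, nw2, nvw⟩ := cancel_length f1 f2 f3
  have hk2 : D2.length = D.length := by omega
  have hlenQ : Q.length = D.length := by omega
  have hk1 : 1 ≤ D.length := by
    by_contra h0
    have : norm v = 0 := by omega
    exact hv (norm_eq_zero.mp this)
  have hsplit : invRev D = A2 ∧ Q = D2 := by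
    have he : invRev D ++ Q = A2 ++ D2 := by rw [← e2, ← f1]
    apply List.append_inj he
    rw [invRev_length]
    omega
  have hQD : Q ≠ D := by
    intro hQDeq
    -- v.toWord = invRev D ++ D : junction violation
    have hvw2 : v.toWord = invRev D ++ D := by rw [e2, hQDeq]
    have hch := (reduce_eq_self_iff v.toWord).mp (reduce_toWord v)
    rw [List.isChain_iff_getElem] at hch
    set k := D.length
    have hlv : v.toWord.length = 2 * k := by
      have : v.toWord.length = norm v := rfl
      omega
    have hpair := hch (k-1) (by omega)
    apply hpair
    have q1 : v.toWord[k-1]? = (D[0]?).map (fun x => (x.1, !x.2)) := by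
      rw [hvw2, List.getElem?_append_left (by rw [invRev_length]; omega)]
      rw [invRev, List.getElem?_reverse (by simp; omega), List.getElem?_map]
      simp only [List.length_map]
      have hidx : D.length - 1 - (k-1) = 0 := by omega
      rw [hidx]
    have q2 : v.toWord[k-1+1]? = D[0]? := by
      rw [hvw2, List.getElem?_append_right (by rw [invRev_length]; omega)]
      have hidx : k - 1 + 1 - (invRev D).length = 0 := by rw [invRev_length]; omega
      rw [hidx]
    have hk0 : (0:ℕ) < D.length := by omega
    rw [List.getElem?_eq_getElem (by omega), List.getElem?_eq_getElem hk0] at q1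
    rw [List.getElem?_eq_getElem (by omega), List.getElem?_eq_getElem hk0] at q2
    simp only [Option.map_some] at q1
    have q1' := Option.some.inj q1
    have q2' := Option.some.inj q2
    rw [q1', q2']
    simp
  have hgne : g Q ≠ g D := fun hgeq => hQD (g_inj Q D hlenQ hgeq)
  rcases Nat.lt_or_ge (g Q) (g D) with hg | hg
  · left
    have h1u' : 2 * D.length ≤ norm u := by rw [hD]; exact h1u
    have hAD : D.length ≤ A.length := by omega
    exact mu_scenario e1 e2 e3 hlenQ hAD hg
  · right
    have hgg : g D < g Q := by omega
    have F1 : (w⁻¹).toWord = invRev W ++ Q := by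
      rw [toWord_inv, f2, invRev_append, ← hsplit.2, invRev_invRev]
    have F2 : (v⁻¹).toWord = invRev Q ++ D := by
      rw [toWord_inv, e2, invRev_append, invRev_invRev]
    have hmul : w⁻¹ * v⁻¹ = (v*w)⁻¹ := (mul_inv_rev v w).symm
    have F3 : (w⁻¹ * v⁻¹).toWord = invRev W ++ D := by
      rw [hmul, toWord_inv, f3, invRev_append, ← hsplit.1, invRev_invRev]
    have h1w' : 2 * D2.length ≤ norm w := by rw [hD2]; exact h1w
    have hWk : Q.length ≤ (invRev W).length := by rw [invRev_length]; omega
    have hres := mu_scenario F1 F2 F3 hlenQ.symm hWk hgg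
    rw [hmul, mu_inv, mu_inv] at hres
    exact hres

end Measure

theorem mk_append_cancel (P S D : List (α × Bool)) :
    mk (P ++ (D ++ (invRev D ++ S))) = mk (P ++ S) := by
  rw [← mul_mk, ← mul_mk, ← mul_mk, ← mul_mk, ← inv_mk]
  group

section Survival

variable {S : Set (FreeGroup α)}
variable (hS0 : ∀ u ∈ S, u ≠ 1)
variable (hH1 : ∀ u ∈ S, ∀ v ∈ S, u * v ≠ 1 → 2 * cNum u v ≤ norm u ∧ 2 * cNum u v ≤ norm v)
variable (hH2 : ∀ u ∈ S, ∀ v ∈ S, ∀ w ∈ S, u*v ≠ 1 → v*w ≠ 1 →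
    cNum u v + cNum v w + 1 ≤ norm v)

include hS0 hH1 hH2 in
theorem survival_aux (l : List (FreeGroup α)) : ∀ (v : FreeGroup α),
    (∀ u ∈ l, u ∈ S) → v ∈ S → (l ++ [v]).IsChain (fun a b => a * b ≠ 1) →
    ∃ T c, ((l ++ [v]).prod).toWord = T ++ v.toWord.drop c ∧ l.length ≤ T.length ∧
      (c = 0 ∨ ∃ v' ∈ S, v' * v ≠ 1 ∧ c = cNum v' v) := by
  induction l using List.reverseRecOn with
  | nil =>
    intro v _ hv _
    exact ⟨[], 0, by simp, by simp, Or.inl rfl⟩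
  | append_singleton l' u IH =>
    intro v hmem hv hchain
    have hchain' : (l' ++ [u]).IsChain (fun a b => a * b ≠ 1) ∧
        u * v ≠ 1 := by
      rw [List.isChain_append (l₁ := l' ++ [u]) (l₂ := [v])] at hchain
      refine ⟨hchain.1, ?_⟩
      have := hchain.2.2 u (by simp) v (by simp)
      exact this
    have hu : u ∈ S := hmem u (by simp)
    have hmem' : ∀ x ∈ l', x ∈ S := fun x hx => hmem x (by simp [hx])
    obtain ⟨T, c, hT, hTlen, hcert⟩ := IH u hmem' hu hchain'.1
    -- pair decomposition for (u,v)
    obtain ⟨A, D, Q, e1, e2, e3⟩ := exists_cancel_group u v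
    obtain ⟨hD, nu, nv, nuv⟩ := cancel_length e1 e2 e3
    -- bound : c + |D| < norm u
    have hbound : c + D.length < norm u := by
      rcases hcert with rfl | ⟨v', hv'S, hv'ne, rfl⟩
      · have h1 := (hH1 u hu v hv hchain'.2).1
        have hnu1 : 1 ≤ norm u := by
          rcases Nat.eq_zero_or_pos (norm u) with h0 | h; exact absurd (norm_eq_zero.mp h0) (hS0 u hu); exact h
        omega
      · have := hH2 v' hv'S u hu v hv hv'ne hchain'.2
        omega
    have hcA : c < A.length := by omega
    set M := A.drop c with hM
    have hMne : M ≠ [] := by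
      rw [hM]
      intro hnil
      have := List.drop_eq_nil_iff.mp hnil
      omega
    have hAsplit : A = A.take c ++ M := by rw [hM]; simp
    have hdropu : u.toWord.drop c = M ++ D := by
      rw [e1, List.drop_append_of_le_length (by omega)]
    -- total word for w := (l'++[u]).prod
    have hwword : ((l' ++ [u]).prod).toWord = (T ++ M) ++ D := by
      rw [hT, hdropu]; simp
    -- group computation
    have hprod : ((l' ++ [u] ++ [v]).prod) = mk ((T ++ M) ++ Q) := by
      have h1 : (l' ++ [u] ++ [v]).prod = (l' ++ [u]).prod * v := by
        rw [List.prod_append (l₁ := l' ++ [u]), List.prod_singleton]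
      rw [h1, ← mk_toWord (x := (l' ++ [u]).prod), ← mk_toWord (x := v), hwword, e2, mul_mk]
      have : (T ++ M ++ D) ++ (invRev D ++ Q) = (T ++ M) ++ (D ++ (invRev D ++ Q)) := by simp
      rw [this, mk_append_cancel]
    -- reducedness of T ++ M ++ Q
    have hredw : reduce ((T ++ M) ++ D) = (T ++ M) ++ D := by rw [← hwword]; exact reduce_toWord _
    have hreduv : reduce (A ++ Q) = A ++ Q := by rw [← e3]; exact reduce_toWord _
    have hchTM : List.IsChain Rnc (T ++ M) ∧ List.IsChain Rnc Q ∧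
        (∀ x ∈ (T ++ M).getLast?, ∀ y ∈ Q.head?, Rnc x y) := by
      have c1 := (reduce_eq_self_iff _).mp hredw
      rw [List.isChain_append] at c1
      have c2 := (reduce_eq_self_iff _).mp hreduv
      rw [List.isChain_append] at c2
      refine ⟨c1.1, c2.2.1, ?_⟩
      intro x hx y hy
      apply c2.2.2 x _ y hy
      -- getLast? (T ++ M) = getLast? A
      rw [List.getLast?_append_of_ne_nil (l₁ := T) hMne] at hx
      rw [hAsplit, List.getLast?_append_of_ne_nil (l₁ := A.take c) hMne]
      exact hx
    have hredTMQ : reduce ((T ++ M) ++ Q) = (T ++ M) ++ Q := by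
      rw [reduce_eq_self_iff, List.isChain_append]
      exact hchTM
    have htoword : ((l' ++ [u] ++ [v]).prod).toWord = (T ++ M) ++ Q := by
      rw [hprod, toWord_mk, hredTMQ]
    refine ⟨T ++ M, D.length, ?_, ?_, Or.inr ⟨u, hu, hchain'.2, hD⟩⟩
    · rw [htoword, e2, List.drop_left' invRev_length]
    · simp only [List.length_append, List.length_cons]
      have : 1 ≤ M.length := by
        rcases M with _ | ⟨m, Ms⟩; exact absurd rfl hMne; simp
      simp at hTlen ⊢
      omega

include hS0 hH1 hH2 in
theorem survival (l : List (FreeGroup α)) (hmem : ∀ u ∈ l, u ∈ S)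
    (hchain : l.IsChain (fun a b => a * b ≠ 1)) (hne : l ≠ []) :
    l.length ≤ norm l.prod := by
  rcases List.eq_nil_or_concat l with rfl | ⟨l', v, rfl⟩
  · exact absurd rfl hne
  simp only [List.concat_eq_append] at *
  have hv : v ∈ S := hmem v (by simp)
  obtain ⟨T, c, hT, hTlen, hcert⟩ := survival_aux hS0 hH1 hH2 l' v
    (fun x hx => hmem x (by simp [hx])) hv hchain
  have hnv : 1 ≤ norm v := by
    rcases Nat.eq_zero_or_pos (norm v) with h0 | h; exact absurd (norm_eq_zero.mp h0) (hS0 v hv); exact h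
  have hcb : c < norm v := by
    rcases hcert with rfl | ⟨v', hv'S, hv'ne, rfl⟩
    · omega
    · have := (hH1 v' hv'S v hv hv'ne).2
      omega
  have hlen := congrArg List.length hT
  rw [List.length_append, List.length_drop] at hlen
  have h1 : norm ((l' ++ [v]).prod) = T.length + (v.toWord.length - c) := hlen
  have h2 : v.toWord.length = norm v := rfl
  simp only [List.length_append, List.length_cons, List.length_nil]
  omega

end Survival

theorem autext {f g : MulAut (FreeGroup α)} (h : ∀ a, f (of a) = g (of a)) : f = g := by
  apply MulEquiv.ext
  intro x
  have h2 := FreeGroup.ext_hom (f : FreeGroup α →* FreeGroup α) (g : FreeGroup α →* FreeGroup α) h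
  exact DFunLike.congr_fun h2 x

/-- Build an automorphism of the free group from mutually inverse substitutions. -/
def mkAut (f g : α → FreeGroup α) (h1 : ∀ a, FreeGroup.lift g (f a) = of a)
    (h2 : ∀ a, FreeGroup.lift f (g a) = of a) : MulAut (FreeGroup α) where
  toFun := FreeGroup.lift f
  invFun := FreeGroup.lift g
  left_inv := fun x => by
    have hc : (FreeGroup.lift g).comp (FreeGroup.lift f) = MonoidHom.id _ :=
      FreeGroup.ext_hom _ _ (by intro a; simp [h1])
    simpa using DFunLike.congr_fun hc x
  right_inv := fun x => by
    have hc : (FreeGroup.lift f).comp (FreeGroup.lift g) = MonoidHom.id _ :=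
      FreeGroup.ext_hom _ _ (by intro a; simp [h2])
    simpa using DFunLike.congr_fun hc x
  map_mul' := map_mul _

@[simp] theorem mkAut_apply_of (f g h1 h2) (a : α) : mkAut f g h1 h2 (of a) = f a :=
  FreeGroup.lift_apply_of

def rtf (i j : α) (s : Bool) : α → FreeGroup α :=
  fun t => if t = i then of i * (cond s (of j) (of j)⁻¹) else of t

theorem rtf_inv_aux {i j : α} (hij : j ≠ i) (s : Bool) :
    ∀ a, FreeGroup.lift (rtf i j (!s)) (rtf i j s a) = of a := by
  intro a
  by_cases ha : a = i
  · subst ha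
    cases s <;> simp [rtf, hij, mul_assoc]
  · simp [rtf, ha]

/-- right transvection: `aᵢ ↦ aᵢ aⱼ^{±1}` -/
def rv (i j : α) (hij : j ≠ i) (s : Bool) : MulAut (FreeGroup α) :=
  mkAut (rtf i j s) (rtf i j (!s)) (rtf_inv_aux hij s)
    (by have := rtf_inv_aux hij (!s); simpa using this)

@[simp] theorem rv_apply_of (i j : α) (hij : j ≠ i) (s : Bool) (t : α) :
    rv i j hij s (of t) = if t = i then of i * (cond s (of j) (of j)⁻¹) else of t := by
  simp [rv, rtf]

def ltf (i j : α) (s : Bool) : α → FreeGroup α :=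
  fun t => if t = i then (cond s (of j) (of j)⁻¹) * of i else of t

theorem ltf_inv_aux {i j : α} (hij : j ≠ i) (s : Bool) :
    ∀ a, FreeGroup.lift (ltf i j (!s)) (ltf i j s a) = of a := by
  intro a
  by_cases ha : a = i
  · subst ha
    cases s <;> simp [ltf, hij, mul_assoc]
  · simp [ltf, ha]

/-- left transvection: `aᵢ ↦ aⱼ^{±1} aᵢ` -/
def lv (i j : α) (hij : j ≠ i) (s : Bool) : MulAut (FreeGroup α) :=
  mkAut (ltf i j s) (ltf i j (!s)) (ltf_inv_aux hij s)
    (by have := ltf_inv_aux hij (!s); simpa using this)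

@[simp] theorem lv_apply_of (i j : α) (hij : j ≠ i) (s : Bool) (t : α) :
    lv i j hij s (of t) = if t = i then (cond s (of j) (of j)⁻¹) * of i else of t := by
  simp [lv, ltf]

def ivf (f : α → Bool) : α → FreeGroup α := fun t => cond (f t) (of t)⁻¹ (of t)

theorem ivf_inv_aux (f : α → Bool) : ∀ a, FreeGroup.lift (ivf f) (ivf f a) = of a := by
  intro a
  by_cases ha : f a = true <;> simp [ivf, ha]

/-- inversion family: `aₜ ↦ aₜ^{±1}` according to `f` -/
def iv (f : α → Bool) : MulAut (FreeGroup α) :=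
  mkAut (ivf f) (ivf f) (ivf_inv_aux f) (ivf_inv_aux f)

@[simp] theorem iv_apply_of (f : α → Bool) (t : α) :
    iv f (of t) = cond (f t) (of t)⁻¹ (of t) := by
  simp [iv, ivf]

/-- permutation automorphism -/
def pA (σ : Equiv.Perm α) : MulAut (FreeGroup α) := FreeGroup.freeGroupCongr σ

@[simp] theorem pA_apply_of (σ : Equiv.Perm α) (t : α) : pA σ (of t) = of (σ t) := by
  simp [pA]

theorem pA_mul (σ τ : Equiv.Perm α) : pA (σ * τ) = pA σ * pA τ :=
  autext (by intro a; simp)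

theorem rv_mul_neg (i j : α) (hij : j ≠ i) (s : Bool) : rv i j hij s * rv i j hij (!s) = 1 := by
  apply autext
  intro a
  by_cases ha : a = i
  · subst ha
    cases s <;> simp [mul_assoc, hij]
  · simp [ha]

theorem rv_inv (i j : α) (hij : j ≠ i) (s : Bool) : (rv i j hij s)⁻¹ = rv i j hij (!s) := by
  apply inv_eq_of_mul_eq_one_right
  exact rv_mul_neg i j hij s

theorem lv_mul_neg (i j : α) (hij : j ≠ i) (s : Bool) : lv i j hij s * lv i j hij (!s) = 1 := by
  apply autext
  intro a
  by_cases ha : a = i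
  · subst ha
    cases s <;> simp [mul_assoc, hij]
  · simp [ha]

theorem lv_inv (i j : α) (hij : j ≠ i) (s : Bool) : (lv i j hij s)⁻¹ = lv i j hij (!s) := by
  apply inv_eq_of_mul_eq_one_right
  exact lv_mul_neg i j hij s

theorem iv_mul_self (f : α → Bool) : iv f * iv f = 1 := by
  apply autext
  intro a
  by_cases ha : f a = true <;> simp [ha]

theorem iv_inv (f : α → Bool) : (iv f)⁻¹ = iv f :=
  inv_eq_of_mul_eq_one_right (iv_mul_self f)

theorem pA_inv (σ : Equiv.Perm α) : (pA σ)⁻¹ = pA σ⁻¹ := by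
  apply inv_eq_of_mul_eq_one_right
  apply autext
  intro a
  simp

/-- conjugation of a transvection by a permutation -/
theorem pA_conj_rv (σ : Equiv.Perm α) (i j : α) (hij : j ≠ i) (s : Bool) :
    pA σ * rv i j hij s * (pA σ)⁻¹ = rv (σ i) (σ j) (fun h => hij (σ.injective h)) s := by
  rw [pA_inv]
  apply autext
  intro a
  simp only [MulAut.mul_apply, pA_apply_of, rv_apply_of]
  by_cases ha : σ⁻¹ a = i
  · have : a = σ i := by rw [← ha]; simp
    subst this
    simp [ha, map_mul]
    cases s <;> simp
  · have h2 : ¬(a = σ i) := by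
      intro hh; subst hh; simp at ha
    rw [Equiv.Perm.inv_def] at ha
    simp [ha, h2]

def sgl (j : α) : α → Bool := fun t => decide (t = j)
def pr (i j : α) : α → Bool := fun t => decide (t = i) || decide (t = j)

section Identities
variable {i j k m a b c : α}

/-- B1 : conjugating `rv i j s` by the inversion at `j` flips the sign. -/
theorem iv_conj_rv_target (hij : j ≠ i) (s : Bool) :
    iv (sgl j) * rv i j hij s * iv (sgl j) = rv i j hij (!s) := by
  apply autext
  intro t
  by_cases ht : t = i
  · subst ht
    cases s <;>
      simp [sgl, hij, MulAut.mul_apply, _root_.map_mul, _root_.map_inv, Ne.symm hij]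
  · by_cases htj : t = j
    · subst htj
      simp [sgl, ht, MulAut.mul_apply]
    · simp [sgl, ht, htj, MulAut.mul_apply]

/-- B2 : conjugating `rv i j s` by the inversion at `i` gives `lv i j (!s)`. -/
theorem iv_conj_rv_source (hij : j ≠ i) (s : Bool) :
    iv (sgl i) * rv i j hij s * iv (sgl i) = lv i j hij (!s) := by
  apply autext
  intro t
  by_cases ht : t = i
  · subst ht
    cases s <;>
      simp [sgl, hij, MulAut.mul_apply, _root_.map_mul, _root_.map_inv, Ne.symm hij, mul_assoc]
  · by_cases htj : t = j
    · subst htj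
      simp [sgl, ht, hij, MulAut.mul_apply]
    · simp [sgl, ht, htj, MulAut.mul_apply]

/-- B3 : conjugating `rv i j s` by the inversion at both `i,j` gives `lv i j s`. -/
theorem iv_conj_rv_both (hij : j ≠ i) (s : Bool) :
    iv (pr i j) * rv i j hij s * iv (pr i j) = lv i j hij s := by
  apply autext
  intro t
  by_cases ht : t = i
  · subst ht
    cases s <;>
      simp [pr, hij, MulAut.mul_apply, _root_.map_mul, _root_.map_inv, Ne.symm hij, mul_assoc]
  · by_cases htj : t = j
    · subst htj
      simp [pr, ht, hij, MulAut.mul_apply]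
    · simp [pr, ht, htj, MulAut.mul_apply]

/-- C : same-source commutator identity. -/
theorem id_same_source (hba : b ≠ a) (hca : c ≠ a) (hbc : b ≠ c) :
    (rv a b hba true * (rv a c hca true)⁻¹) * rv c b hbc true *
      (rv a b hba true * (rv a c hca true)⁻¹)⁻¹ =
    rv a b hba true * rv c b hbc true := by
  simp only [mul_inv_rev, rv_inv, lv_inv, Bool.not_true, Bool.not_false]
  apply autext
  intro t
  by_cases ht : t = a
  · subst ht
    simp [MulAut.mul_apply, _root_.map_mul, _root_.map_inv, hba, hca, hbc, Ne.symm hba, Ne.symm hca,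
      Ne.symm hbc, mul_assoc]
  · by_cases htc : t = c
    · subst htc
      simp [MulAut.mul_apply, _root_.map_mul, _root_.map_inv, hba, hca, hbc, Ne.symm hba, Ne.symm hca,
        Ne.symm hbc, hca.symm, mul_assoc]
    · by_cases htb : t = b
      · subst htb
        simp [MulAut.mul_apply, _root_.map_mul, _root_.map_inv, hba, hbc, Ne.symm hba, Ne.symm hca,
          Ne.symm hbc, mul_assoc, ht]
      · simp [MulAut.mul_apply, ht, htc, htb]

/-- D : disjoint commutator identity. -/
theorem id_disjoint (hmj : m ≠ j) (hki : k ≠ i) (hmk : m ≠ k) (hmi : m ≠ i)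
    (hji : j ≠ i) (hjk : j ≠ k) :
    (rv j m hmj true * (rv i k hki true)⁻¹) * rv k m hmk true *
      (rv j m hmj true * (rv i k hki true)⁻¹)⁻¹ =
    rv i m hmi true * rv k m hmk true := by
  simp only [mul_inv_rev, rv_inv, lv_inv, Bool.not_true, Bool.not_false]
  apply autext
  intro t
  by_cases ht : t = k
  · subst ht
    simp [MulAut.mul_apply, _root_.map_mul, _root_.map_inv, hmj, hki, hmk, hmi, hji, hjk,
      Ne.symm hmj, Ne.symm hki, Ne.symm hmk, Ne.symm hmi, Ne.symm hji, Ne.symm hjk, mul_assoc]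
  · by_cases hti : t = i
    · subst hti
      simp [MulAut.mul_apply, _root_.map_mul, _root_.map_inv, hmj, hki, hmk, hmi, hji, hjk,
        Ne.symm hmj, Ne.symm hki, Ne.symm hmk, Ne.symm hmi, Ne.symm hji, Ne.symm hjk, mul_assoc]
    · by_cases htj : t = j
      · subst htj
        simp [MulAut.mul_apply, _root_.map_mul, _root_.map_inv, hmj, hki, hmk, hmi, hji, hjk,
          Ne.symm hmj, Ne.symm hki, Ne.symm hmk, Ne.symm hmi, Ne.symm hji, Ne.symm hjk,
          mul_assoc, ht]
      · by_cases htm : t = m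
        · subst htm
          simp [MulAut.mul_apply, ht, hti, htj, hmj, hmk, hmi, _root_.map_mul, Ne.symm hmj]
        · simp [MulAut.mul_apply, ht, hti, htj, htm]

/-- E : chain commutator identity. -/
theorem id_chain (hki : k ≠ i) (hjk : j ≠ k) (hji : j ≠ i) :
    (rv i k hki true * (rv k j hjk true)⁻¹) * rv k j hjk true *
      (rv i k hki true * (rv k j hjk true)⁻¹)⁻¹ * (rv k j hjk true)⁻¹ =
    (lv j k (Ne.symm hjk) true * rv j k (Ne.symm hjk) false) * (rv i j hji true)⁻¹ *
      (lv j k (Ne.symm hjk) true * rv j k (Ne.symm hjk) false)⁻¹ := by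
  simp only [mul_inv_rev, rv_inv, lv_inv, Bool.not_true, Bool.not_false]
  apply autext
  intro t
  by_cases ht : t = i
  · subst ht
    simp [MulAut.mul_apply, _root_.map_mul, _root_.map_inv, hki, hjk, hji,
      Ne.symm hki, Ne.symm hjk, Ne.symm hji, mul_assoc]
  · by_cases htk : t = k
    · subst htk
      simp [MulAut.mul_apply, _root_.map_mul, _root_.map_inv, hki, hjk, hji,
        Ne.symm hki, Ne.symm hjk, Ne.symm hji, mul_assoc, ht]
    · by_cases htj : t = j
      · subst htj
        simp [MulAut.mul_apply, _root_.map_mul, _root_.map_inv, hki, hjk, hji,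
          Ne.symm hki, Ne.symm hjk, Ne.symm hji, mul_assoc, ht, htk]
      · simp [MulAut.mul_apply, ht, htk, htj]

/-- F : a transposition equals a product of transvections and one inversion (mod composition). -/
theorem id_swap (hab : a ≠ b) :
    pA (Equiv.swap a b) * (rv b a hab true * lv b a hab false) =
    (rv a b hab.symm true * lv b a hab false * rv a b hab.symm true) * iv (sgl b) := by
  apply autext
  intro t
  by_cases ht : t = a
  · subst ht
    simp [MulAut.mul_apply, _root_.map_mul, _root_.map_inv, sgl, hab, Ne.symm hab,
      Equiv.swap_apply_left, mul_assoc]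
  · by_cases htb : t = b
    · subst htb
      simp [MulAut.mul_apply, _root_.map_mul, _root_.map_inv, sgl, hab, Ne.symm hab,
        Equiv.swap_apply_right, mul_assoc]
    · simp [MulAut.mul_apply, ht, htb, sgl, Equiv.swap_apply_of_ne_of_ne ht htb]

end Identities

/-- signed element -/
def sg (η : Bool) (u : FreeGroup α) : FreeGroup α := cond η u u⁻¹

@[simp] theorem sg_true (u : FreeGroup α) : sg true u = u := rfl
@[simp] theorem sg_false (u : FreeGroup α) : sg false u = u⁻¹ := rfl

theorem mu_sg [Fintype α] [Nonempty α] (η : Bool) (u : FreeGroup α) : mu (sg η u) = mu u := by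
  cases η <;> simp [mu_inv]

theorem sg_map (F : MulAut (FreeGroup α)) (η : Bool) (u : FreeGroup α) :
    F (sg η u) = sg η (F u) := by
  cases η <;> simp [_root_.map_inv]

theorem sg_ne_one {u : FreeGroup α} (hu : u ≠ 1) (η : Bool) : sg η u ≠ 1 := by
  cases η <;> simp [hu]

theorem of_mul_of_ne_one {p q : α × Bool} (hR : Rnc p q) :
    sg p.2 (of p.1) * sg q.2 (of q.1) ≠ 1 := by
  have h1 : ∀ (a : α) (η : Bool), sg η (of a) = mk [(a, η)] := by
    intro a η
    cases η
    · show (of a)⁻¹ = _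
      rw [show (of a : FreeGroup α) = mk [(a, true)] from rfl, inv_mk]
      simp [invRev]
    · rfl
  intro hcon
  rw [h1, h1, mul_mk] at hcon
  have h2 : reduce ([(p.1, p.2)] ++ [(q.1, q.2)]) = [] := by
    have h3 := congrArg toWord hcon
    rw [toWord_mk, toWord_one] at h3
    exact h3
  simp only [List.cons_append, List.nil_append] at h2
  rw [reduce.cons] at h2
  simp only [reduce_singleton] at h2
  by_cases hc : p.1 = q.1 ∧ p.2 = !q.2
  · exact hR hc
  · rw [if_neg hc] at h2
    exact absurd h2 (by simp)

theorem cnum_bounds {u v : FreeGroup α} (h1 : norm u ≤ norm (u*v)) (h2 : norm v ≤ norm (u*v)) :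
    2 * cNum u v ≤ norm u ∧ 2 * cNum u v ≤ norm v := by
  obtain ⟨A, D, Q, e1, e2, e3⟩ := exists_cancel_group u v
  obtain ⟨hD, n1, n2, n3⟩ := cancel_length e1 e2 e3
  omega

/-- the element x, as combination of the letters of a word -/
theorem eq_prod_of_word (z : FreeGroup α) :
    z = (z.toWord.map (fun p => sg p.2 (of p.1))).prod := by
  conv_lhs => rw [← FreeGroup.lift_of_apply z, ← mk_toWord (x := z)]
  rw [FreeGroup.lift_mk]
  rfl

section Gen
variable [Fintype α] [Nonempty α]

def gens (α : Type*) [DecidableEq α] : Set (MulAut (FreeGroup α)) :=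
  {e | (∃ σ, e = pA σ) ∨ (∃ f, e = iv f) ∨ (∃ i j h s, e = rv i j h s) ∨
    (∃ i j h s, e = lv i j h s)}

theorem mem_closure_gens (β : MulAut (FreeGroup α)) : β ∈ Subgroup.closure (gens α) := by
  set E := Subgroup.closure (gens α) with hE
  -- minimisation
  set F : MulAut (FreeGroup α) → ℕ := fun ψ => ∑ t, mu (ψ (of t)) with hF
  have hVne : ∃ v, ∃ e ∈ E, F (β * e) = v := ⟨F (β * 1), 1, one_mem _, rfl⟩
  set V : Set ℕ := {v | ∃ e ∈ E, F (β * e) = v} with hV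
  obtain ⟨e₀, he₀E, he₀⟩ : ∃ e ∈ E, F (β * e) = sInf V := Nat.sInf_mem hVne
  have hmin : ∀ e ∈ E, F (β * e₀) ≤ F (β * e) := by
    intro e he
    rw [he₀]
    exact Nat.sInf_le ⟨e, he, rfl⟩
  set x : α → FreeGroup α := fun t => (β * e₀) (of t) with hx
  -- move lemma
  have hmove : ∀ g ∈ gens α, ∀ t0 : α, (∀ t, t ≠ t0 → g (of t) = of t) →
      mu (x t0) ≤ mu ((β * e₀) (g (of t0))) := by
    intro g hg t0 hfix
    have hEg : e₀ * g ∈ E := mul_mem he₀E (Subgroup.subset_closure hg)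
    have hs := hmin _ hEg
    have hev : ∀ t, (β * (e₀ * g)) (of t) = (β * e₀) (g (of t)) := by
      intro t
      rw [← mul_assoc]
      rfl
    have hsum : F (β * (e₀ * g)) = ∑ t, mu ((β * e₀) (g (of t))) := by
      apply Finset.sum_congr rfl
      intro t _
      rw [hev]
    rw [hsum] at hs
    have hs1 : ∑ t ∈ Finset.univ.erase t0, mu (x t) + mu (x t0) ≤
        ∑ t ∈ Finset.univ.erase t0, mu ((β * e₀) (g (of t))) +
          mu ((β * e₀) (g (of t0))) := by
      rw [Finset.sum_erase_add _ _ (Finset.mem_univ t0),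
        Finset.sum_erase_add _ _ (Finset.mem_univ t0)]
      exact hs
    have hs2 : ∀ t ∈ Finset.univ.erase t0, mu ((β * e₀) (g (of t))) = mu (x t) := by
      intro t ht
      rw [hfix t (Finset.mem_erase.mp ht).1]
    rw [Finset.sum_congr rfl hs2] at hs1
    omega
  -- specialised moves
  have key_r : ∀ (t0 ti : α) (h : ti ≠ t0) (s : Bool),
      mu (x t0) ≤ mu (x t0 * sg s (x ti)) := by
    intro t0 ti h s
    have := hmove (rv t0 ti h s) (Or.inr (Or.inr (Or.inl ⟨t0, ti, h, s, rfl⟩)))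
      t0 (by intro t ht; simp [ht])
    simpa [hx, _root_.map_mul, _root_.map_inv, sg, Bool.cond_eq_ite, apply_ite] using this
  have key_l : ∀ (t0 ti : α) (h : ti ≠ t0) (s : Bool),
      mu (x t0) ≤ mu (sg s (x ti) * x t0) := by
    intro t0 ti h s
    have := hmove (lv t0 ti h s) (Or.inr (Or.inr (Or.inr ⟨t0, ti, h, s, rfl⟩)))
      t0 (by intro t ht; simp [ht])
    simpa [hx, _root_.map_mul, _root_.map_inv, sg, Bool.cond_eq_ite, apply_ite] using this
  -- the symmetrised set
  set S : Set (FreeGroup α) := {u | ∃ t η, u = sg η (x t)} with hS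
  have hxne : ∀ t, x t ≠ 1 := by
    intro t hcon
    rw [hx] at hcon
    simp only [EmbeddingLike.map_eq_one_iff] at hcon
    exact FreeGroup.of_ne_one t hcon
  have hS0 : ∀ u ∈ S, u ≠ 1 := by
    rintro u ⟨t, η, rfl⟩
    exact sg_ne_one (hxne t) η
  -- mu bound for pairs with distinct indices
  have hmu1 : ∀ (tu tv : α), tv ≠ tu → ∀ (ηu ηv : Bool),
      mu (x tu) ≤ mu (sg ηu (x tu) * sg ηv (x tv)) := by
    intro tu tv h ηu ηv
    cases ηu
    · -- u = (x tu)⁻¹ : use left move with inverse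
      have h1 := key_l tu tv h (!ηv)
      have : (sg (!ηv) (x tv) * x tu)⁻¹ = sg false (x tu) * sg ηv (x tv) := by
        cases ηv <;> simp [sg]
      rw [← mu_inv (sg (!ηv) (x tv) * x tu), this] at h1
      exact h1
    · have h1 := key_r tu tv h ηv
      simpa [sg] using h1
  have hmu2 : ∀ (tu tv : α), tv ≠ tu → ∀ (ηu ηv : Bool),
      mu (x tv) ≤ mu (sg ηu (x tu) * sg ηv (x tv)) := by
    intro tu tv h ηu ηv
    cases ηv
    · have h1 := key_r tv tu (fun hh => h hh.symm) (!ηu)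
      have : (x tv * sg (!ηu) (x tu))⁻¹ = sg ηu (x tu) * sg false (x tv) := by
        cases ηu <;> simp [sg]
      rw [← mu_inv (x tv * sg (!ηu) (x tu)), this] at h1
      exact h1
    · have h1 := key_l tv tu (fun hh => h hh.symm) ηu
      simpa [sg] using h1
  -- same index pairs collapse
  have hsame : ∀ (t : α) (ηu ηv : Bool), sg ηu (x t) * sg ηv (x t) ≠ 1 → ηu = ηv := by
    intro t ηu ηv hne
    cases ηu <;> cases ηv <;> simp_all [sg]
  -- norm inequalities
  have hnormge : ∀ u ∈ S, ∀ v ∈ S, u * v ≠ 1 →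
      norm u ≤ norm (u * v) ∧ norm v ≤ norm (u * v) := by
    rintro u ⟨tu, ηu, rfl⟩ v ⟨tv, ηv, rfl⟩ hne1
    by_cases hsameidx : tv = tu
    · subst hsameidx
      have : ηu = ηv := hsame tv ηu ηv hne1
      subst this
      have huv : sg ηu (x tv) ≠ 1 := sg_ne_one (hxne tv) ηu
      obtain ⟨A, D, Q, e1, e2, e3⟩ := exists_cancel_group (sg ηu (x tv)) (sg ηu (x tv))
      obtain ⟨hD, n1, n2, n3⟩ := cancel_length e1 e2 e3
      have := self_cancel huv
      constructor <;> omega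
    · constructor
      · by_contra hlt
        push_neg at hlt
        have h2 : mu (sg ηu (x tu) * sg ηv (x tv)) < mu (sg ηu (x tu)) := mu_lt_of_norm_lt hlt
        rw [mu_sg] at h2
        exact absurd (hmu1 tu tv hsameidx ηu ηv) (by omega)
      · by_contra hlt
        push_neg at hlt
        have h2 : mu (sg ηu (x tu) * sg ηv (x tv)) < mu (sg ηv (x tv)) := mu_lt_of_norm_lt hlt
        rw [mu_sg] at h2
        exact absurd (hmu2 tu tv hsameidx ηu ηv) (by omega)
  have hH1 : ∀ u ∈ S, ∀ v ∈ S, u * v ≠ 1 → 2 * cNum u v ≤ norm u ∧ 2 * cNum u v ≤ norm v := by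
    intro u hu v hv hne1
    obtain ⟨g1, g2⟩ := hnormge u hu v hv hne1
    exact cnum_bounds g1 g2
  have hH2 : ∀ u ∈ S, ∀ v ∈ S, ∀ w ∈ S, u*v ≠ 1 → v*w ≠ 1 →
      cNum u v + cNum v w + 1 ≤ norm v := by
    intro u hu v hv w hw huv hvw
    have b1 := (hH1 u hu v hv huv).2
    have b2 := (hH1 v hv w hw hvw).1
    by_contra hcon
    push_neg at hcon
    have heq1 : 2 * cNum u v = norm v := by omega
    have heq2 : 2 * cNum v w = norm v := by omega
    -- rule out same-element cases
    obtain ⟨tv, ηv, rfl⟩ := hv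
    obtain ⟨tu, ηu, rfl⟩ := hu
    obtain ⟨tw, ηw, rfl⟩ := hw
    have hvne : sg ηv (x tv) ≠ 1 := sg_ne_one (hxne tv) ηv
    have hne_uv : tv ≠ tu := by
      intro hh
      subst hh
      have := hsame tv ηu ηv huv
      subst this
      have := self_cancel hvne
      omega
    have hne_vw : tw ≠ tv := by
      intro hh
      subst hh
      have := hsame tw ηv ηw hvw
      subst this
      have := self_cancel hvne
      omega
    have hb1u := (hH1 _ ⟨tu, ηu, rfl⟩ _ ⟨tv, ηv, rfl⟩ huv).1
    have hb1w := (hH1 _ ⟨tv, ηv, rfl⟩ _ ⟨tw, ηw, rfl⟩ hvw).2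
    rcases no_double_half hvne huv hvw heq1 heq2 hb1u hb1w with hlt | hlt
    · exact absurd (hmu1 tu tv hne_uv ηu ηv) (by rw [← mu_sg ηu (x tu)]; omega)
    · exact absurd (hmu2 tv tw hne_vw ηv ηw) (by rw [← mu_sg ηw (x tw)]; omega)
  -- apply survival to each generator of the free group
  have hletter : ∀ t : α, ∃ s η, of t = sg η (x s) := by
    intro t
    set z := (β * e₀).symm (of t) with hz
    have hzne : z ≠ 1 := by
      intro hcon
      rw [hz] at hcon
      simp only [EmbeddingLike.map_eq_one_iff] at hcon
      exact FreeGroup.of_ne_one t hcon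
    set l : List (FreeGroup α) := z.toWord.map (fun p => sg p.2 (x p.1)) with hl
    have h3 : (β * e₀) ((z.toWord.map (fun p => sg p.2 (of p.1))).prod)
        = (z.toWord.map (fun p => (β * e₀) (sg p.2 (of p.1)))).prod := by
      rw [← MulEquiv.coe_toMonoidHom, map_list_prod, List.map_map]
      rfl
    have hprod : l.prod = of t := by
      have h1 : (β * e₀) z = of t := by simp [hz]
      have h2 := eq_prod_of_word z
      rw [← h1]
      conv_rhs => rw [h2]
      rw [h3, hl]
      congr 1
      apply List.map_congr_left
      intro p _
      rw [sg_map]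
    have hchain : l.IsChain (fun a b => a * b ≠ 1) := by
      rw [hl]
      apply List.isChain_map_of_isChain (R := Rnc)
      · intro p q hpq
        intro hcon
        apply of_mul_of_ne_one hpq
        apply (β * e₀).injective
        rw [_root_.map_mul, _root_.map_one, sg_map, sg_map]
        exact hcon
      · exact (reduce_eq_self_iff z.toWord).mp (reduce_toWord z)
    have hlne : l ≠ [] := by
      rw [hl]
      simp only [ne_eq, List.map_eq_nil_iff]
      intro hcon
      exact hzne (toWord_eq_nil_iff.mp hcon)
    have hmem : ∀ u ∈ l, u ∈ S := by
      intro u hu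
      rw [hl] at hu
      obtain ⟨p, _, rfl⟩ := List.mem_map.mp hu
      exact ⟨p.1, p.2, rfl⟩
    have hsurv := survival hS0 hH1 hH2 l hmem hchain hlne
    rw [hprod] at hsurv
    have hn1 : norm (of t) = 1 := norm_of t
    have hlen1 : l.length = 1 := by
      have : 1 ≤ l.length := by
        rcases l with _ | _
        · exact absurd rfl hlne
        · simp
      omega
    rw [hl] at hlen1
    simp only [List.length_map] at hlen1
    obtain ⟨p, hp⟩ := List.length_eq_one_iff.mp hlen1
    have : l = [sg p.2 (x p.1)] := by rw [hl, hp]; rfl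
    rw [this] at hprod
    simp at hprod
    exact ⟨p.1, p.2, hprod.symm⟩
  -- build the signed permutation
  choose sfun ηfun hsη using hletter
  have hinj : Function.Injective sfun := by
    intro t t' heq
    have h1 := hsη t
    have h2 := hsη t'
    rw [heq] at h1
    by_cases hη : ηfun t = ηfun t'
    · rw [hη] at h1
      exact FreeGroup.of_injective (h1.trans h2.symm)
    · exfalso
      have h3 : of t = (of t' : FreeGroup α)⁻¹ := by
        rw [h1, h2]
        cases hc : ηfun t <;> cases hc' : ηfun t'
        · exact absurd (hc.trans hc'.symm) hη
        · simp [sg]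
        · simp [sg]
        · exact absurd (hc.trans hc'.symm) hη
      have h4 := congrArg toWord h3
      rw [toWord_of, toWord_inv, toWord_of] at h4
      simp [invRev] at h4
  have hbij : Function.Bijective sfun := Finite.injective_iff_bijective.mp hinj
  set σ0 : Equiv.Perm α := Equiv.ofBijective sfun hbij with hσ0
  have hxval : ∀ s : α, x s = sg (ηfun (σ0.symm s)) (of (σ0.symm s)) := by
    intro s
    have h1 := hsη (σ0.symm s)
    have h2 : sfun (σ0.symm s) = s := σ0.apply_symm_apply s
    rw [h2] at h1
    cases hc : ηfun (σ0.symm s)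
    · rw [hc] at h1
      simp only [sg_false] at h1
      rw [sg_false, h1, inv_inv]
    · rw [hc] at h1
      simp only [sg_true] at h1
      rw [sg_true, ← h1]
  set cand : MulAut (FreeGroup α) := iv (fun u => !(ηfun u)) * pA σ0.symm with hcand
  have hcandeq : β * e₀ = cand := by
    apply autext
    intro s
    have hc2 : cand (of s) = sg (ηfun (σ0.symm s)) (of (σ0.symm s)) := by
      rw [hcand, MulAut.mul_apply, pA_apply_of, iv_apply_of]
      cases hc : ηfun (σ0.symm s) <;> simp [hc, sg]
    rw [hc2]
    exact hxval s
  have hcandE : cand ∈ E := by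
    apply mul_mem
    · exact Subgroup.subset_closure (Or.inr (Or.inl ⟨_, rfl⟩))
    · exact Subgroup.subset_closure (Or.inl ⟨_, rfl⟩)
  have : β = cand * e₀⁻¹ := by
    rw [← hcandeq]
    group
  rw [this]
  exact mul_mem hcandE (inv_mem he₀E)

theorem closure_gens_eq_top : Subgroup.closure (gens α) = ⊤ := by
  rw [Subgroup.eq_top_iff']
  exact mem_closure_gens

end Gen

section Kernel
variable {G : Type*} [Group G] (φ : MulAut (FreeGroup α) →* G)

theorem kernel_same_source {a b c : α} (hba : b ≠ a) (hca : c ≠ a) (hbc : b ≠ c)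
    (hx : φ (rv a b hba true * (rv a c hca true)⁻¹) = 1) : φ (rv a b hba true) = 1 := by
  have h1 := congrArg φ (id_same_source hba hca hbc)
  have hx' : φ (rv a b hba true) * (φ (rv a c hca true))⁻¹ = 1 := by
    rw [← _root_.map_inv, ← _root_.map_mul]; exact hx
  simp only [_root_.map_mul, _root_.map_inv] at h1
  set u := φ (rv a b hba true) with hu0
  set w := φ (rv a c hca true)
  set z := φ (rv c b hbc true)
  have hu : u = w := by rwa [mul_inv_eq_one] at hx'
  rw [hu] at h1 ⊢
  simp only [mul_inv_cancel, one_mul, inv_one, mul_one, mul_inv_rev, inv_inv] at h1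
  exact mul_eq_right.mp h1.symm

theorem kernel_disjoint {i j k m : α} (hmj : m ≠ j) (hki : k ≠ i) (hmk : m ≠ k) (hmi : m ≠ i)
    (hji : j ≠ i) (hjk : j ≠ k)
    (hx : φ (rv j m hmj true * (rv i k hki true)⁻¹) = 1) : φ (rv i m hmi true) = 1 := by
  have h1 := congrArg φ (id_disjoint hmj hki hmk hmi hji hjk)
  have hx' : φ (rv j m hmj true) * (φ (rv i k hki true))⁻¹ = 1 := by
    rw [← _root_.map_inv, ← _root_.map_mul]; exact hx
  simp only [_root_.map_mul, _root_.map_inv] at h1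
  set u := φ (rv j m hmj true)
  set w := φ (rv i k hki true)
  set z := φ (rv k m hmk true)
  have hu : u = w := by rwa [mul_inv_eq_one] at hx'
  rw [hu] at h1
  simp only [mul_inv_cancel, one_mul, inv_one, mul_one, mul_inv_rev, inv_inv] at h1
  exact mul_eq_right.mp h1.symm

theorem kernel_chain {i j k : α} (hki : k ≠ i) (hjk : j ≠ k) (hji : j ≠ i)
    (hx : φ (rv i k hki true * (rv k j hjk true)⁻¹) = 1) : φ (rv i j hji true) = 1 := by
  have h1 := congrArg φ (id_chain hki hjk hji)
  have hx' : φ (rv i k hki true) * (φ (rv k j hjk true))⁻¹ = 1 := by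
    rw [← _root_.map_inv, ← _root_.map_mul]; exact hx
  simp only [_root_.map_mul, _root_.map_inv] at h1
  set u := φ (rv i k hki true)
  set v := φ (rv k j hjk true)
  set g1 := φ (lv j k (Ne.symm hjk) true)
  set g2 := φ (rv j k (Ne.symm hjk) false)
  set r := φ (rv i j hji true)
  have hu : u = v := by rwa [mul_inv_eq_one] at hx'
  rw [hu] at h1
  -- h1 : v * v⁻¹ * v * (v * v⁻¹)⁻¹ * v⁻¹ = g1 * g2 * r⁻¹ * (g1 * g2)⁻¹ (up to assoc shape)
  have h2 : (1 : G) = g1 * g2 * r⁻¹ * (g1 * g2)⁻¹ := by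
    rw [← h1]
    group
  have h3 : r⁻¹ = 1 := by
    calc r⁻¹ = (g1 * g2)⁻¹ * (g1 * g2 * r⁻¹ * (g1 * g2)⁻¹) * (g1 * g2) := by group
    _ = (g1 * g2)⁻¹ * 1 * (g1 * g2) := by rw [← h2]
    _ = 1 := by group
  simpa using h3

end Kernel

theorem rv_congr {i j i' j' : α} {s : Bool} (hji : j ≠ i) (hj'i' : j' ≠ i')
    (hi : i = i') (hj : j = j') : rv i j hji s = rv i' j' hj'i' s := by
  subst hi; subst hj; rfl

theorem main (n : ℕ) (hn : 3 ≤ n)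
    (G : Type*) [Group G] (φ : MulAut (FreeGroup (Fin n)) →* G)
    (h : ¬ Function.Injective (φ.comp (_root_.permToAut n))) :
    (∀ x, φ x = 1) ∨ Nat.card φ.range = 2 := by
  haveI : Nonempty (Fin n) := ⟨⟨0, by omega⟩⟩
  obtain ⟨σ1, σ2, hφeq, hσne⟩ := Function.not_injective_iff.mp h
  set π : Equiv.Perm (Fin n) := σ1 * σ2⁻¹ with hπdef
  have hπ1 : π ≠ 1 := by
    intro hcon
    exact hσne (mul_inv_eq_one.mp hcon)
  have hcompat : ∀ σ : Equiv.Perm (Fin n), φ (pA σ) = (φ.comp (_root_.permToAut n)) σ :=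
    fun σ => rfl
  have hkπ : φ (pA π) = 1 := by
    rw [hcompat, hπdef, _root_.map_mul, _root_.map_inv, hφeq, mul_inv_cancel]
  -- conjugate transvections by π
  have hcomm : ∀ (a b a' b' : Fin n) (hba : b ≠ a) (hb'a' : b' ≠ a'),
      π a = a' → π b = b' → φ (rv a' b' hb'a' true * (rv a b hba true)⁻¹) = 1 := by
    intro a b a' b' hba hb'a' ha hb
    subst ha; subst hb
    have hid := pA_conj_rv π a b hba true
    have h2 : φ (rv (π a) (π b) hb'a' true) = φ (rv a b hba true) := by
      have h3 := congrArg φ hid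
      rw [_root_.map_mul, _root_.map_mul, _root_.map_inv, hkπ] at h3
      simpa using h3.symm
    rw [_root_.map_mul, _root_.map_inv, h2, mul_inv_cancel]
  obtain ⟨i, hi⟩ : ∃ i, π i ≠ i := by
    by_contra hc; push_neg at hc; exact hπ1 (Equiv.ext hc)
  -- harvest one transvection
  have hone : ∃ (a b : Fin n) (hba : b ≠ a), φ (rv a b hba true) = 1 := by
    set j := π i with hj
    have hji : j ≠ i := hi
    by_cases hpj : π j = i
    · obtain ⟨k, hki, hkj⟩ : ∃ k : Fin n, k ≠ i ∧ k ≠ j := by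
        by_contra hc
        push_neg at hc
        have hsub : (Finset.univ : Finset (Fin n)) ⊆ {i, j} := by
          intro k _
          simp only [Finset.mem_insert, Finset.mem_singleton]
          rcases eq_or_ne k i with hh | hh
          · exact Or.inl hh
          · exact Or.inr (hc k hh)
        have h2 := Finset.card_le_card hsub
        have h3 : ({i, j} : Finset (Fin n)).card ≤ 2 := by
          apply le_trans (Finset.card_insert_le i {j})
          simp
        rw [Finset.card_univ, Fintype.card_fin] at h2
        omega
      set m := π k with hm
      have hmi : m ≠ i := by
        intro hh
        exact hkj (π.injective (hh.trans hpj.symm))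
      have hmj : m ≠ j := by
        intro hh
        exact hki (π.injective (hh.trans hj.symm))
      by_cases hmk : m = k
      · refine ⟨k, j, Ne.symm hkj, ?_⟩
        apply kernel_same_source φ (Ne.symm hkj) (Ne.symm hki) hji
        exact hcomm k i k j (Ne.symm hki) (Ne.symm hkj) (hm.symm.trans hmk) hj.symm
      · refine ⟨i, m, hmi, ?_⟩
        apply kernel_disjoint φ hmj hki (fun hh => hmk hh) hmi hji (Ne.symm hkj)
        exact hcomm i k j m hki hmj hj.symm hm.symm
    · set p := π j with hp
      have hpi : p ≠ i := hpj
      have hpjne : p ≠ j := by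
        intro hh
        have h1 : π j = j := by rw [← hp, hh]
        have h2 : π i = π j := by rw [h1, ← hj]
        exact hji (π.injective h2).symm
      refine ⟨i, p, hpi, ?_⟩
      apply kernel_chain φ hji hpjne hpi
      have h5 := hcomm i j j p hji hpjne hj.symm hp.symm
      have h6 : φ ((rv j p hpjne true * (rv i j hji true)⁻¹)⁻¹) = 1 := by
        rw [_root_.map_inv, h5, inv_one]
      rw [mul_inv_rev, inv_inv] at h6
      exact h6
  -- all right transvections die
  obtain ⟨a, b, hba, hKab⟩ := hone
  have hrv_one : ∀ (i j : Fin n) (hji : j ≠ i), φ (rv i j hji true) = 1 := by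
    intro i j hji
    obtain ⟨σ, hσa, hσb⟩ : ∃ σ : Equiv.Perm (Fin n), σ a = i ∧ σ b = j := by
      set b' := Equiv.swap a i b with hb'
      have hb'i : b' ≠ i := by
        rw [hb']
        intro hh
        have h2 : Equiv.swap a i b = Equiv.swap a i a := by
          rw [hh, Equiv.swap_apply_left]
        exact hba ((Equiv.swap a i).injective h2)
      refine ⟨Equiv.swap b' j * Equiv.swap a i, ?_, ?_⟩
      · have h1 : (Equiv.swap b' j * Equiv.swap a i) a = Equiv.swap b' j i := by
          simp [Equiv.Perm.mul_apply, Equiv.swap_apply_left]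
        rw [h1]
        exact Equiv.swap_apply_of_ne_of_ne (Ne.symm hb'i) (Ne.symm hji)
      · have h1 : (Equiv.swap b' j * Equiv.swap a i) b = Equiv.swap b' j b' := by
          simp [Equiv.Perm.mul_apply, hb']
        rw [h1, Equiv.swap_apply_left]
    have hconj := pA_conj_rv σ a b hba true
    have h7 := congrArg φ hconj
    rw [_root_.map_mul, _root_.map_mul, _root_.map_inv, hKab] at h7
    have h8 : φ (rv (σ a) (σ b) (fun hh => hba (σ.injective hh)) true) = 1 := by
      rw [← h7]
      group
    rwa [rv_congr (fun hh => hba (σ.injective hh)) hji hσa hσb] at h8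
  have hrv_all : ∀ (i j : Fin n) (hji : j ≠ i) (s : Bool), φ (rv i j hji s) = 1 := by
    intro i j hji s
    cases s
    · have hid := iv_conj_rv_target hji true
      simp only [Bool.not_true] at hid
      calc φ (rv i j hji false) = φ (iv (sgl j) * rv i j hji true * iv (sgl j)) := by rw [hid]
      _ = φ (iv (sgl j)) * φ (rv i j hji true) * φ (iv (sgl j)) := by
            rw [_root_.map_mul, _root_.map_mul]
      _ = φ (iv (sgl j)) * φ (iv (sgl j)) := by rw [hrv_one i j hji, mul_one]
      _ = φ (iv (sgl j) * iv (sgl j)) := (_root_.map_mul φ _ _).symm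
      _ = 1 := by rw [iv_mul_self, _root_.map_one]
    · exact hrv_one i j hji
  have hlv_all : ∀ (i j : Fin n) (hji : j ≠ i) (s : Bool), φ (lv i j hji s) = 1 := by
    intro i j hji s
    cases s
    · have hid := iv_conj_rv_source hji true
      simp only [Bool.not_true] at hid
      calc φ (lv i j hji false) = φ (iv (sgl i) * rv i j hji true * iv (sgl i)) := by rw [hid]
      _ = φ (iv (sgl i)) * φ (rv i j hji true) * φ (iv (sgl i)) := by
            rw [_root_.map_mul, _root_.map_mul]
      _ = φ (iv (sgl i)) * φ (iv (sgl i)) := by rw [hrv_one i j hji, mul_one]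
      _ = φ (iv (sgl i) * iv (sgl i)) := (_root_.map_mul φ _ _).symm
      _ = 1 := by rw [iv_mul_self, _root_.map_one]
    · have hid := iv_conj_rv_both hji true
      calc φ (lv i j hji true) = φ (iv (pr i j) * rv i j hji true * iv (pr i j)) := by rw [hid]
      _ = φ (iv (pr i j)) * φ (rv i j hji true) * φ (iv (pr i j)) := by
            rw [_root_.map_mul, _root_.map_mul]
      _ = φ (iv (pr i j)) * φ (iv (pr i j)) := by rw [hrv_one i j hji, mul_one]
      _ = φ (iv (pr i j) * iv (pr i j)) := (_root_.map_mul φ _ _).symm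
      _ = 1 := by rw [iv_mul_self, _root_.map_one]
  -- swaps and inversions
  set i0 : Fin n := ⟨0, by omega⟩ with hi0
  have hswap_iv : ∀ (x y : Fin n) (hxy : x ≠ y), φ (pA (Equiv.swap x y)) = φ (iv (sgl y)) := by
    intro x y hxy
    have h7 := congrArg φ (id_swap hxy)
    simp only [_root_.map_mul] at h7
    simp only [hrv_all, hlv_all] at h7
    simpa using h7
  have hiv_eq : ∀ (j : Fin n), φ (iv (sgl j)) = φ (iv (sgl i0)) := by
    intro j
    by_cases hj : j = i0
    · rw [hj]
    · have h1 := hswap_iv i0 j (fun hh => hj hh.symm)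
      have h2 := hswap_iv j i0 hj
      rw [Equiv.swap_comm] at h1
      exact h1.symm.trans h2
  have ht2 : φ (iv (sgl i0)) * φ (iv (sgl i0)) = 1 := by
    rw [← _root_.map_mul, iv_mul_self, _root_.map_one]
  -- inversion family values
  have hiv_f : ∀ f : Fin n → Bool, φ (iv f) = 1 ∨ φ (iv f) = φ (iv (sgl i0)) := by
    have hsetcase : ∀ s : Finset (Fin n),
        φ (iv (fun t => decide (t ∈ s))) = 1 ∨
          φ (iv (fun t => decide (t ∈ s))) = φ (iv (sgl i0)) := by
      intro s
      induction s using Finset.induction_on with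
      | empty =>
        left
        have he : iv (fun t : Fin n => decide (t ∈ (∅ : Finset (Fin n)))) = 1 :=
          autext (by intro a; simp)
        rw [he, _root_.map_one]
      | @insert j s hjs ih =>
        have hsplit : iv (fun t => decide (t ∈ insert j s)) =
            iv (sgl j) * iv (fun t => decide (t ∈ s)) := by
          apply autext
          intro t
          by_cases hts : t ∈ s
          · have htj : t ≠ j := fun hh => hjs (hh ▸ hts)
            simp [MulAut.mul_apply, hts, htj, sgl]
          · by_cases htj : t = j
            · subst htj
              simp [MulAut.mul_apply, hts, sgl]
            · simp [MulAut.mul_apply, hts, htj, sgl]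
        rw [hsplit, _root_.map_mul, hiv_eq j]
        rcases ih with h | h
        · right; rw [h, mul_one]
        · left; rw [h, ht2]
    intro f
    have hf : f = fun t => decide (t ∈ Finset.univ.filter (fun t => f t)) := by
      funext t
      by_cases hft : f t <;> simp [hft]
    rw [hf]
    exact hsetcase _
  -- permutation values
  have hpA_val : ∀ σ : Equiv.Perm (Fin n), φ (pA σ) = 1 ∨ φ (pA σ) = φ (iv (sgl i0)) := by
    intro σ
    refine Equiv.Perm.swap_induction_on σ ?_ ?_
    · left
      have hone' : pA (1 : Equiv.Perm (Fin n)) = 1 := autext (by intro t; simp)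
      rw [hone', _root_.map_one]
    · intro f x y hxy ih
      rw [pA_mul, _root_.map_mul, hswap_iv x y hxy, hiv_eq y]
      rcases ih with hval | hval
      · right; rw [hval, mul_one]
      · left; rw [hval, ht2]
  -- all values
  have hval : ∀ β : MulAut (FreeGroup (Fin n)), φ β = 1 ∨ φ β = φ (iv (sgl i0)) := by
    intro β
    have hβ : β ∈ Subgroup.closure (gens (Fin n)) := by
      rw [closure_gens_eq_top]; trivial
    induction hβ using Subgroup.closure_induction with
    | mem e he =>
      rcases he with ⟨σ, rfl⟩ | ⟨f, rfl⟩ | ⟨i, j, hji, s, rfl⟩ | ⟨i, j, hji, s, rfl⟩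
      · exact hpA_val σ
      · exact hiv_f f
      · left; exact hrv_all i j hji s
      · left; exact hlv_all i j hji s
    | one => left; rw [_root_.map_one]
    | mul u v hu hv hu' hv' =>
      rw [_root_.map_mul]
      rcases hu' with h1 | h1 <;> rcases hv' with h2 | h2 <;> rw [h1, h2]
      · left; rw [mul_one]
      · right; rw [one_mul]
      · right; rw [mul_one]
      · left; exact ht2
    | inv u hu hu' =>
      rw [_root_.map_inv]
      rcases hu' with h1 | h1 <;> rw [h1]
      · left; rw [inv_one]
      · right; exact inv_eq_of_mul_eq_one_right ht2
  -- conclusion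
  set t0 := φ (iv (sgl i0)) with ht0
  by_cases htriv : t0 = 1
  · left
    intro β
    rcases hval β with hv | hv
    · exact hv
    · rw [hv, htriv]
  · right
    have hrange : (φ.range : Set G) = {1, t0} := by
      ext g
      constructor
      · rintro ⟨β, rfl⟩
        rcases hval β with hv | hv <;> simp [hv]
      · rintro (rfl | rfl)
        · exact ⟨1, _root_.map_one φ⟩
        · exact ⟨iv (sgl i0), rfl⟩
    have h9 : Nat.card φ.range = Nat.card ({1, t0} : Set G) :=
      Nat.card_congr (Equiv.setCongr hrange)
    rw [h9, Nat.card_coe_set_eq, Set.ncard_pair (Ne.symm htriv)]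


end BV

/-- **Proposition 1.** Let `n ≥ 3` and let `φ : Aut(F_n) → G` be a homomorphism. If `φ` is
not injective on the subgroup `S_n` of basis-permutation automorphisms, then `φ` is either
trivial or has image of cardinality exactly 2. -/
theorem aut_free_hom_not_injective_on_sn (n : ℕ) (hn : 3 ≤ n)
    (G : Type*) [Group G] (φ : MulAut (FreeGroup (Fin n)) →* G)
    (h : ¬ Function.Injective (φ.comp (permToAut n))) :
    (∀ x, φ x = 1) ∨ Nat.card φ.range = 2 :=
  BV.main n hn G φ h
end

section
/- For n ≥ 3, Aut(F_n) contains a symmetric group Σ ≅ S_{n+1} that intersects W_n in the visible copy of S_n: there exists an injective group homomorphism ψ : S_{n+1} → Aut(F_n) such that the intersection of the image of ψ with the subgroup W_n equals the subgroup of basis-permutation automorphisms S_n ⊂ Aut(F_n). -/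
/-- The automorphism `ε_i ∈ Aut(F_n)` sending `a_i` to `a_i⁻¹` and fixing the other
generators. -/
def epsilonAut {n : ℕ} (i : Fin n) : MulAut (FreeGroup (Fin n)) :=
  MonoidHom.toMulEquiv
    (FreeGroup.lift fun k => if k = i then (FreeGroup.of k)⁻¹ else FreeGroup.of k)
    (FreeGroup.lift fun k => if k = i then (FreeGroup.of k)⁻¹ else FreeGroup.of k)
    (by ext k; by_cases hk : k = i <;> simp [hk])
    (by ext k; by_cases hk : k = i <;> simp [hk])

/-- The subgroup `W_n ⊆ Aut(F_n)` generated by the involutions `ε_1, …, ε_n` together with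
the basis-permutation automorphisms; it is isomorphic to `(ℤ/2)^n ⋊ S_n`. -/
def Wsubgroup (n : ℕ) : Subgroup (MulAut (FreeGroup (Fin n))) :=
  Subgroup.closure (Set.range (epsilonAut (n := n)) ∪ Set.range (permToAut n))

/-!
Adjoin to the basis `a_i, i ∈ α`, of `F(α)` an extra letter `a_∗ := 1`. A permutation `σ` of
`α ⊔ {∗}` acts on `F(α)` by `a_o ↦ a_{σ o} a_{σ ∗}⁻¹` for every `o`; this formula is
multiplicative in `σ`, so it gives `ψ : S(α ⊔ {∗}) → Aut F(α)`, and `ψ` restricts to the basis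
permutations on the permutations fixing `∗`. Every element of `W` permutes the signed basis
`{a_i^{±1}}`, whose elements have exponent sum `±1`. If `σ ∗ = j ≠ ∗` and `σ i = k ≠ ∗`
(such an `i` exists once `|α| ≥ 2`), then `ψ σ (a_i) = a_k a_j⁻¹` has exponent sum `0`, so
`ψ σ ∉ W`. Hence `ψ σ ∈ W` forces `σ ∗ = ∗`, which gives both the intersection and, applied to
`ψ σ = 1`, the injectivity of `ψ`.
-/

open Equiv MulAction
open scoped Pointwise

lemma Equiv.Perm.exists_optionCongr_eq {α : Type*} {σ : Perm (Option α)} (h : σ none = none) :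
    ∃ π : Perm α, π.optionCongr = σ := by
  classical
  exact ⟨removeNone σ, by simp [h, Perm.one_def]⟩

namespace FreeGroup

variable {α β : Type*}

def ofOption : Option α → FreeGroup α := fun o => o.elim 1 of

@[simp] lemma ofOption_none : ofOption (none : Option α) = 1 := rfl

@[simp] lemma ofOption_some (a : α) : ofOption (some a) = of a := rfl

def exponentSum : FreeGroup α →* Multiplicative ℤ := lift fun _ => Multiplicative.ofAdd 1

@[simp] lemma exponentSum_of (a : α) : exponentSum (of a) = Multiplicative.ofAdd 1 :=
  lift_apply_of

def signedBasis (α : Type*) : Set (FreeGroup α) := {x | ∃ a, of a = x ∨ (of a)⁻¹ = x}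

lemma of_mem_signedBasis (a : α) : of a ∈ signedBasis α := ⟨a, .inl rfl⟩

lemma inv_of_mem_signedBasis (a : α) : (of a)⁻¹ ∈ signedBasis α := ⟨a, .inr rfl⟩

lemma of_mul_inv_of_notMem_signedBasis (a b : α) : of a * (of b)⁻¹ ∉ signedBasis α := by
  rintro ⟨c, h | h⟩ <;>
  · have := congrArg (Multiplicative.toAdd ∘ exponentSum) h
    simp at this

lemma map_mem_signedBasis {f : FreeGroup α →* FreeGroup β} (hf : ∀ a, f (of a) ∈ signedBasis β)
    {x : FreeGroup α} (hx : x ∈ signedBasis α) : f x ∈ signedBasis β := by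
  obtain ⟨a, rfl | rfl⟩ := hx
  · exact hf a
  · obtain ⟨b, h | h⟩ := hf a
    · rw [_root_.map_inv, ← h]; exact inv_of_mem_signedBasis b
    · rw [_root_.map_inv, ← h, inv_inv]; exact of_mem_signedBasis b

lemma mem_stabilizer_signedBasis {f : MulAut (FreeGroup α)}
    (hf : ∀ a, f (of a) ∈ signedBasis α) (hf' : ∀ a, f⁻¹ (of a) ∈ signedBasis α) :
    f ∈ stabilizer (MulAut (FreeGroup α)) (signedBasis α) := by
  refine mem_stabilizer_set.2 fun x => ⟨fun h => ?_, map_mem_signedBasis (f := f.toMonoidHom) hf⟩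
  simpa using map_mem_signedBasis (f := f⁻¹.toMonoidHom) hf' h

def freeGroupCongrHom (α : Type*) : Perm α →* MulAut (FreeGroup α) where
  toFun π := freeGroupCongr π
  map_one' := by ext; simp
  map_mul' π τ := by ext; simp [freeGroupCongr, ← map.comp]

@[simp] lemma freeGroupCongrHom_apply_of (π : Perm α) (a : α) :
    freeGroupCongrHom α π (of a) = of (π a) := by
  simp [freeGroupCongrHom]

lemma freeGroupCongrHom_mem_stabilizer (π : Perm α) :
    freeGroupCongrHom α π ∈ stabilizer (MulAut (FreeGroup α)) (signedBasis α) :=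
  mem_stabilizer_signedBasis (fun a => by simpa using of_mem_signedBasis (π a))
    (fun a => by rw [← _root_.map_inv, freeGroupCongrHom_apply_of]; exact of_mem_signedBasis _)

def symmOptionEnd (σ : Perm (Option α)) : FreeGroup α →* FreeGroup α :=
  lift fun a => ofOption (σ (some a)) * (ofOption (σ none))⁻¹

lemma symmOptionEnd_ofOption (σ : Perm (Option α)) (o : Option α) :
    symmOptionEnd σ (ofOption o) = ofOption (σ o) * (ofOption (σ none))⁻¹ := by
  cases o <;> simp [symmOptionEnd, lift_apply_of]

lemma symmOptionEnd_mul (σ τ : Perm (Option α)) :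
    symmOptionEnd (σ * τ) = (symmOptionEnd σ).comp (symmOptionEnd τ) := by
  refine ext_hom _ _ fun a => ?_
  rw [MonoidHom.comp_apply, ← ofOption_some, symmOptionEnd_ofOption, symmOptionEnd_ofOption,
    _root_.map_mul, _root_.map_inv, symmOptionEnd_ofOption, symmOptionEnd_ofOption]
  simp only [Perm.mul_apply]
  group

lemma symmOptionEnd_one : symmOptionEnd (1 : Perm (Option α)) = MonoidHom.id _ :=
  ext_hom _ _ fun a => by simp [symmOptionEnd, lift_apply_of]

def symmOptionAut (α : Type*) : Perm (Option α) →* MulAut (FreeGroup α) where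
  toFun σ := (symmOptionEnd σ).toMulEquiv (symmOptionEnd σ⁻¹)
    (by rw [← symmOptionEnd_mul, inv_mul_cancel, symmOptionEnd_one])
    (by rw [← symmOptionEnd_mul, mul_inv_cancel, symmOptionEnd_one])
  map_one' := MulEquiv.ext fun x => by simp [symmOptionEnd_one]
  map_mul' σ τ := MulEquiv.ext fun x => by simp [symmOptionEnd_mul]

lemma symmOptionAut_apply_of (σ : Perm (Option α)) (a : α) :
    symmOptionAut α σ (of a) = ofOption (σ (some a)) * (ofOption (σ none))⁻¹ :=
  symmOptionEnd_ofOption σ (some a)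

lemma symmOptionAut_optionCongr (π : Perm α) :
    symmOptionAut α π.optionCongr = freeGroupCongrHom α π :=
  MulEquiv.toMonoidHom_injective <| ext_hom _ _ fun a => by
    simp [symmOptionAut_apply_of]

lemma apply_none_eq_none_of_symmOptionAut_mem_stabilizer [Nontrivial α] {σ : Perm (Option α)}
    (hσ : symmOptionAut α σ ∈ stabilizer (MulAut (FreeGroup α)) (signedBasis α)) :
    σ none = none := by
  by_contra hmoved
  obtain ⟨j, hj⟩ := Option.ne_none_iff_exists'.1 hmoved
  obtain ⟨a, ha⟩ : ∃ a, σ (some a) ≠ none := by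
    obtain ⟨a, b, hab⟩ := exists_pair_ne α
    by_contra! h
    exact hab (Option.some_injective _ (σ.injective ((h a).trans (h b).symm)))
  obtain ⟨k, hk⟩ := Option.ne_none_iff_exists'.1 ha
  have hmem := (mem_stabilizer_set.1 hσ (of a)).2 (of_mem_signedBasis a)
  rw [MulAut.smul_def, symmOptionAut_apply_of, hj, hk] at hmem
  exact of_mul_inv_of_notMem_signedBasis k j hmem

theorem range_symmOptionAut_inf_eq [Nontrivial α] {H : Subgroup (MulAut (FreeGroup α))}
    (hH : H ≤ stabilizer (MulAut (FreeGroup α)) (signedBasis α))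
    (hperm : (freeGroupCongrHom α).range ≤ H) :
    (symmOptionAut α).range ⊓ H = (freeGroupCongrHom α).range := by
  refine le_antisymm ?_ fun f hf => ⟨?_, hperm hf⟩
  · rintro _ ⟨⟨σ, rfl⟩, hσ⟩
    obtain ⟨π, rfl⟩ :=
      Perm.exists_optionCongr_eq (apply_none_eq_none_of_symmOptionAut_mem_stabilizer (hH hσ))
    exact ⟨π, (symmOptionAut_optionCongr π).symm⟩
  · obtain ⟨π, rfl⟩ := hf
    exact ⟨π.optionCongr, symmOptionAut_optionCongr π⟩

theorem symmOptionAut_injective [Nontrivial α] : Function.Injective (symmOptionAut α) := by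
  refine (injective_iff_map_eq_one _).2 fun σ hσ => ?_
  obtain ⟨π, rfl⟩ := Perm.exists_optionCongr_eq
    (apply_none_eq_none_of_symmOptionAut_mem_stabilizer (hσ ▸ one_mem _))
  suffices π = 1 by rw [this, optionCongr_one]
  ext a
  exact of_injective (by simpa [symmOptionAut_optionCongr] using DFunLike.congr_fun hσ (of a))

end FreeGroup

open FreeGroup

lemma permToAut_eq_freeGroupCongrHom (n : ℕ) : permToAut n = freeGroupCongrHom (Fin n) := rfl

lemma epsilonAut_mem_stabilizer {n : ℕ} (i : Fin n) :
    epsilonAut i ∈ stabilizer (MulAut (FreeGroup (Fin n))) (signedBasis (Fin n)) := by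
  refine mem_stabilizer_signedBasis (fun k => ?_) (fun k => ?_) <;>
  by_cases hk : k = i <;>
  simp [epsilonAut, hk, of_mem_signedBasis, inv_of_mem_signedBasis]

lemma Wsubgroup_le_stabilizer (n : ℕ) :
    Wsubgroup n ≤ stabilizer (MulAut (FreeGroup (Fin n))) (signedBasis (Fin n)) := by
  rw [Wsubgroup, Subgroup.closure_le]
  rintro _ (⟨i, rfl⟩ | ⟨π, rfl⟩)
  · exact epsilonAut_mem_stabilizer i
  · exact freeGroupCongrHom_mem_stabilizer π

lemma range_permToAut_le_Wsubgroup (n : ℕ) : (permToAut n).range ≤ Wsubgroup n := by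
  rintro _ ⟨π, rfl⟩
  exact Subgroup.subset_closure (Or.inr ⟨π, rfl⟩)

/-- **Lemma 3.** For `n ≥ 3`, `Aut(F_n)` contains a symmetric group `Σ ≅ S_{n+1}` that
intersects `W_n` in the visible copy of `S_n`. -/
theorem aut_free_contains_symm_succ (n : ℕ) (hn : 3 ≤ n) :
    ∃ ψ : Equiv.Perm (Fin (n + 1)) →* MulAut (FreeGroup (Fin n)),
      Function.Injective ψ ∧ ψ.range ⊓ Wsubgroup n = (permToAut n).range := by
  have : Nontrivial (Fin n) := Fin.nontrivial_iff_two_le.2 (by omega)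
  let e := (finSuccEquiv n).permCongrHom
  refine ⟨(symmOptionAut (Fin n)).comp e.toMonoidHom, symmOptionAut_injective.comp e.injective, ?_⟩
  rw [MonoidHom.range_comp, MonoidHom.range_eq_top.2 e.surjective, ← MonoidHom.range_eq_map,
    permToAut_eq_freeGroupCongrHom]
  exact range_symmOptionAut_inf_eq (Wsubgroup_le_stabilizer n) (range_permToAut_le_Wsubgroup n)
end

section
/- Consider a semidirect product G = N ⋊ S_n, where N is an abelian group on which the symmetric group S_n acts, and suppose one of the following conditions holds: n ≥ 5; or n = 4 and N does not contain an S_n-invariant subgroup isomorphic to ℤ/2 × ℤ/2; or n = 3 and N does not contain an S_n-invariant subgroup of order 3. If φ : N ⋊ S_n → Q is a group homomorphism with non-trivial kernel K, then either K ∩ S_n or K ∩ N is non-trivial (where N and S_n are identified with their canonical images in the semidirect product). -/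
/-!
Suppose `K` is a nontrivial normal subgroup of `N ⋊ G` (`N` abelian) meeting both `N` and `G`
trivially. Then `[K, N] ⊆ K ∩ N = 1`, so `K` acts trivially on `N` and `g ↦ g.left` is a
homomorphism on `K`, injective because `K ∩ G = 1`; its image is a `G`-invariant subgroup of `N`
isomorphic to `K`. As `K ∩ N = 1`, the projection `g ↦ g.right` is injective on `K` as well, and
its image is a nontrivial normal abelian subgroup of `G` isomorphic to `K`. For `G = S_n` there
is no such subgroup when `n ≥ 5`, since it would contain the nonabelian group `A_n`; for `n = 4`
it is the Klein four-group and for `n = 3` it is `A_3`, of order `3`.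
-/

namespace SemidirectProduct

variable {N G : Type*} [CommGroup N] [Group G] {ψ : G →* MulAut N} {K : Subgroup (N ⋊[ψ] G)}

theorem eq_one_of_mem_of_right_eq_one (hN : K ⊓ inl.range = ⊥) {g : N ⋊[ψ] G} (hg : g ∈ K)
    (h : g.right = 1) : g = 1 := by
  have : g ∈ K ⊓ inl.range := ⟨hg, by rwa [range_inl_eq_ker_rightHom]⟩
  rwa [hN, Subgroup.mem_bot] at this

theorem eq_one_of_mem_of_left_eq_one (hG : K ⊓ inr.range = ⊥) {g : N ⋊[ψ] G} (hg : g ∈ K)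
    (h : g.left = 1) : g = 1 := by
  have : g ∈ K ⊓ inr.range := ⟨hg, g.right, by ext <;> simp [h]⟩
  rwa [hG, Subgroup.mem_bot] at this

theorem act_right_eq_self_of_mem [K.Normal] (hN : K ⊓ inl.range = ⊥) {g : N ⋊[ψ] G}
    (hg : g ∈ K) (a : N) : ψ g.right a = a := by
  have hinl : (inl : N →* N ⋊[ψ] G).range.Normal :=
    range_inl_eq_ker_rightHom (φ := ψ) ▸ rightHom.normal_ker
  have hcomm := congrArg left
    (Subgroup.commute_of_normal_of_disjoint _ _ ‹_› hinl (disjoint_iff.mpr hN) g (inl a) hg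
      ⟨a, rfl⟩).eq
  rw [mul_left, mul_left, left_inl, right_inl, map_one, MulAut.one_apply, mul_comm a] at hcomm
  exact mul_left_cancel hcomm

/-- `left` is multiplicative on `K` because `K` acts trivially on `N`. -/
def restrictLeft (K : Subgroup (N ⋊[ψ] G)) [K.Normal] (hN : K ⊓ inl.range = ⊥) : K →* N where
  toFun g := g.1.left
  map_one' := rfl
  map_mul' g h := by simp [mul_left, act_right_eq_self_of_mem hN g.2]

theorem restrictLeft_injective [K.Normal] (hN : K ⊓ inl.range = ⊥) (hG : K ⊓ inr.range = ⊥) :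
    Function.Injective (restrictLeft K hN) :=
  (injective_iff_map_eq_one _).mpr fun g hg ↦
    Subtype.ext (eq_one_of_mem_of_left_eq_one hG g.2 hg)

theorem act_mem_range_restrictLeft [K.Normal] (hN : K ⊓ inl.range = ⊥) (σ : G) {a : N}
    (ha : a ∈ (restrictLeft K hN).range) : ψ σ a ∈ (restrictLeft K hN).range := by
  obtain ⟨g, rfl⟩ := ha
  exact ⟨⟨inr σ * (g : N ⋊[ψ] G) * (inr σ)⁻¹, ‹K.Normal›.conj_mem _ g.2 (inr σ)⟩, by
    simp [restrictLeft]⟩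

theorem isMulCommutative_of_inf_eq_bot [K.Normal] (hN : K ⊓ inl.range = ⊥)
    (hG : K ⊓ inr.range = ⊥) : IsMulCommutative K :=
  ⟨⟨fun g h ↦ restrictLeft_injective hN hG (by simp only [map_mul, mul_comm])⟩⟩

theorem rightHom_domRestrict_injective (hN : K ⊓ inl.range = ⊥) :
    Function.Injective (rightHom.domRestrict K) :=
  (injective_iff_map_eq_one _).mpr fun g hg ↦
    Subtype.ext (eq_one_of_mem_of_right_eq_one hN g.2 hg)

theorem map_rightHom_ne_bot (hN : K ⊓ inl.range = ⊥) (hK : K ≠ ⊥) : K.map rightHom ≠ ⊥ := by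
  rw [Ne, Subgroup.map_eq_bot_iff, ← range_inl_eq_ker_rightHom, ← inf_eq_left, hN]
  exact hK.symm

noncomputable def rangeRestrictLeftEquivMapRightHom [K.Normal] (hN : K ⊓ inl.range = ⊥)
    (hG : K ⊓ inr.range = ⊥) : (restrictLeft K hN).range ≃* K.map rightHom :=
  (MonoidHom.ofInjective (restrictLeft_injective hN hG)).symm.trans
    ((MonoidHom.ofInjective (rightHom_domRestrict_injective hN)).trans
      (MulEquiv.subgroupCongr (MonoidHom.domRestrict_range _ _)))

end SemidirectProduct

def commutesWithConjugates (G : Type*) [Group G] : Set G :=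
  {g | ∀ h : G, g * (h * g * h⁻¹) = h * g * h⁻¹ * g}

instance {G : Type*} [Group G] [Fintype G] [DecidableEq G] (g : G) :
    Decidable (g ∈ commutesWithConjugates G) :=
  Fintype.decidableForallFintype

theorem Subgroup.coe_eq_commutesWithConjugates {G : Type*} [Group G]
    (hG : ∀ g₀ ∈ commutesWithConjugates G, ∀ g ∈ commutesWithConjugates G,
      g₀ = 1 ∨ g = 1 ∨ ∃ h, h * g₀ * h⁻¹ = g)
    (M : Subgroup G) [M.Normal] [IsMulCommutative M] (hM : M ≠ ⊥) :
    (M : Set G) = commutesWithConjugates G := by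
  have hsub : (M : Set G) ⊆ commutesWithConjugates G := fun g hg h ↦
    setLike_mul_comm hg (‹M.Normal›.conj_mem g hg h)
  obtain ⟨g₀, hg₀, hg₀1⟩ := M.bot_or_exists_ne_one.resolve_left hM
  refine hsub.antisymm fun g hg ↦ ?_
  obtain h | rfl | ⟨h, rfl⟩ := hG g₀ (hsub hg₀) g hg
  · exact absurd h hg₀1
  · exact M.one_mem
  · exact ‹M.Normal›.conj_mem g₀ hg₀ h

namespace Equiv.Perm

theorem eq_bot_of_normal_of_isMulCommutative {α : Type*} [DecidableEq α] [Fintype α]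
    (hα : 5 ≤ Nat.card α) (M : Subgroup (Perm α)) [M.Normal] [IsMulCommutative M] : M = ⊥ := by
  by_contra hM
  have hle := alternatingGroup_le_of_normal hα ((Subgroup.nontrivial_iff_ne_bot M).mpr hM)
  have : IsMulCommutative (alternatingGroup α) :=
    ⟨⟨fun a b ↦ Subtype.ext (setLike_mul_comm (hle a.2) (hle b.2))⟩⟩
  have := alternatingGroup.isMulCommutative_iff_card_le_three.mp this
  omega

theorem commutesWithConjugates_conj_fin_four :
    ∀ g₀ ∈ commutesWithConjugates (Perm (Fin 4)), ∀ g ∈ commutesWithConjugates (Perm (Fin 4)),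
      g₀ = 1 ∨ g = 1 ∨ ∃ h, h * g₀ * h⁻¹ = g := by
  decide +kernel

theorem sq_eq_one_of_mem_commutesWithConjugates_fin_four :
    ∀ g ∈ commutesWithConjugates (Perm (Fin 4)), g ^ 2 = 1 := by
  decide +kernel

theorem card_commutesWithConjugates_fin_four :
    Nat.card (commutesWithConjugates (Perm (Fin 4))) = 4 := by
  rw [Nat.card_eq_fintype_card]
  decide +kernel

theorem commutesWithConjugates_conj_fin_three :
    ∀ g₀ ∈ commutesWithConjugates (Perm (Fin 3)), ∀ g ∈ commutesWithConjugates (Perm (Fin 3)),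
      g₀ = 1 ∨ g = 1 ∨ ∃ h, h * g₀ * h⁻¹ = g := by
  decide +kernel

theorem card_commutesWithConjugates_fin_three :
    Nat.card (commutesWithConjugates (Perm (Fin 3))) = 3 := by
  rw [Nat.card_eq_fintype_card]
  decide +kernel

theorem isKleinFour_of_normal_of_isMulCommutative_fin_four (M : Subgroup (Perm (Fin 4)))
    [M.Normal] [IsMulCommutative M] (hM : M ≠ ⊥) : IsKleinFour M := by
  have hMC := M.coe_eq_commutesWithConjugates commutesWithConjugates_conj_fin_four hM
  have hcard : Nat.card M = 4 :=
    (Nat.card_congr (Equiv.setCongr hMC)).trans card_commutesWithConjugates_fin_four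
  have hdvd : Monoid.exponent M ∣ 2 := Monoid.exponent_dvd_of_forall_pow_eq_one fun g ↦
    Subtype.ext (sq_eq_one_of_mem_commutesWithConjugates_fin_four g (hMC ▸ g.2))
  have hne : Monoid.exponent M ≠ 1 := by
    rw [Ne, Monoid.exp_eq_one_iff, ← Finite.card_le_one_iff_subsingleton, hcard]
    decide
  exact ⟨hcard, ((Nat.dvd_prime Nat.prime_two).mp hdvd).resolve_left hne⟩

theorem card_eq_three_of_normal_of_isMulCommutative_fin_three (M : Subgroup (Perm (Fin 3)))
    [M.Normal] [IsMulCommutative M] (hM : M ≠ ⊥) : Nat.card M = 3 :=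
  (Nat.card_congr (Equiv.setCongr
    (M.coe_eq_commutesWithConjugates commutesWithConjugates_conj_fin_three hM))).trans
    card_commutesWithConjugates_fin_three

end Equiv.Perm

open Equiv SemidirectProduct in
/-- **Lemma 4.** Consider a semidirect product `N ⋊ S_n` where `N` is abelian, and suppose
one of the following holds: `n ≥ 5`; or `n = 4` and `N` has no `S_n`-invariant subgroup
isomorphic to `ℤ/2 × ℤ/2`; or `n = 3` and `N` has no `S_n`-invariant subgroup of order 3.
If `φ : N ⋊ S_n → Q` is a homomorphism with non-trivial kernel `K`, then either `K ∩ S_n`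
or `K ∩ N` is non-trivial. -/
theorem semidirect_kernel_meets_factor (n : ℕ) (N : Type*) [CommGroup N]
    (ψ : Equiv.Perm (Fin n) →* MulAut N)
    (hcond : 5 ≤ n ∨
      (n = 4 ∧ ¬ ∃ H : Subgroup N,
        (∀ σ : Equiv.Perm (Fin n), ∀ x ∈ H, ψ σ x ∈ H) ∧
        Nonempty (H ≃* Multiplicative (ZMod 2) × Multiplicative (ZMod 2))) ∨
      (n = 3 ∧ ¬ ∃ H : Subgroup N,
        (∀ σ : Equiv.Perm (Fin n), ∀ x ∈ H, ψ σ x ∈ H) ∧ Nat.card H = 3))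
    (Q : Type*) [Group Q]
    (φ : SemidirectProduct N (Equiv.Perm (Fin n)) ψ →* Q)
    (hK : φ.ker ≠ ⊥) :
    φ.ker ⊓ (SemidirectProduct.inr : Equiv.Perm (Fin n) →* _).range ≠ ⊥ ∨
    φ.ker ⊓ (SemidirectProduct.inl : N →* _).range ≠ ⊥ := by
  by_contra! ⟨hG, hN⟩
  have hM := map_rightHom_ne_bot hN hK
  have : (φ.ker.map rightHom).Normal := φ.normal_ker.map _ rightHom_surjective
  have : IsMulCommutative φ.ker := isMulCommutative_of_inf_eq_bot hN hG
  have e := rangeRestrictLeftEquivMapRightHom hN hG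
  have hH := act_mem_range_restrictLeft hN
  rcases hcond with h5 | ⟨rfl, hV⟩ | ⟨rfl, hC⟩
  · exact hM (Perm.eq_bot_of_normal_of_isMulCommutative (by simpa using h5) _)
  · have := Perm.isKleinFour_of_normal_of_isMulCommutative_fin_four _ hM
    exact hV ⟨_, hH, ⟨e.trans (IsKleinFour.nonempty_mulEquiv.some.trans
      (MulEquiv.prodMultiplicative _ _))⟩⟩
  · exact hC ⟨_, hH, (Nat.card_congr e.toEquiv).trans
      (Perm.card_eq_three_of_normal_of_isMulCommutative_fin_three _ hM)⟩
end

section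
/- Let n ≥ 3 and let G be a group that does not contain a free abelian group of rank n−1, i.e. there is no injective group homomorphism ℤ^{n−1} → G. Then every group homomorphism φ : Aut(F_n) → G factors through Q_{n,m} for some m ≥ 1; equivalently, there exists m ≥ 1 such that φ(λ_{ij})^m = 1 for all i ≠ j. -/
set_option maxHeartbeats 1000000


/-- The left Nielsen transformation `λ_{ij} ∈ Aut(F_n)`: the automorphism sending the
generator `a_i` to `a_j * a_i` and fixing all other generators. -/
def nielsen {n : ℕ} (i j : Fin n) (h : i ≠ j) : MulAut (FreeGroup (Fin n)) :=
  MonoidHom.toMulEquiv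
    (FreeGroup.lift fun k => if k = i then FreeGroup.of j * FreeGroup.of i else FreeGroup.of k)
    (FreeGroup.lift fun k => if k = i then (FreeGroup.of j)⁻¹ * FreeGroup.of i else FreeGroup.of k)
    (by ext k; by_cases hk : k = i <;> simp [hk, h.symm])
    (by ext k; by_cases hk : k = i <;> simp [hk, h.symm])

/-- The right Nielsen transformation `ρ_{ij}`: sends `a_i` to `a_i * a_j`. -/
def rho {n : ℕ} (i j : Fin n) (h : i ≠ j) : MulAut (FreeGroup (Fin n)) :=
  MonoidHom.toMulEquiv
    (FreeGroup.lift fun k => if k = i then FreeGroup.of i * FreeGroup.of j else FreeGroup.of k)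
    (FreeGroup.lift fun k => if k = i then FreeGroup.of i * (FreeGroup.of j)⁻¹ else FreeGroup.of k)
    (by ext k; by_cases hk : k = i <;> simp [hk, h.symm])
    (by ext k; by_cases hk : k = i <;> simp [hk, h.symm])

/-- The automorphism inverting the generator `a_i`. -/
def thetaAut {n : ℕ} (i : Fin n) : MulAut (FreeGroup (Fin n)) :=
  MonoidHom.toMulEquiv
    (FreeGroup.lift fun k => if k = i then (FreeGroup.of i)⁻¹ else FreeGroup.of k)
    (FreeGroup.lift fun k => if k = i then (FreeGroup.of i)⁻¹ else FreeGroup.of k)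
    (by ext k; by_cases hk : k = i <;> simp [hk])
    (by ext k; by_cases hk : k = i <;> simp [hk])

@[simp] lemma nielsen_of {n : ℕ} (i j : Fin n) (h : i ≠ j) (k : Fin n) :
    nielsen i j h (FreeGroup.of k)
      = if k = i then FreeGroup.of j * FreeGroup.of i else FreeGroup.of k := by
  simp [nielsen, MonoidHom.toMulEquiv]

@[simp] lemma nielsen_inv_of {n : ℕ} (i j : Fin n) (h : i ≠ j) (k : Fin n) :
    (nielsen i j h)⁻¹ (FreeGroup.of k)
      = if k = i then (FreeGroup.of j)⁻¹ * FreeGroup.of i else FreeGroup.of k := by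
  simp [nielsen, MonoidHom.toMulEquiv, MulAut.inv_def]

@[simp] lemma rho_of {n : ℕ} (i j : Fin n) (h : i ≠ j) (k : Fin n) :
    rho i j h (FreeGroup.of k)
      = if k = i then FreeGroup.of i * FreeGroup.of j else FreeGroup.of k := by
  simp [rho, MonoidHom.toMulEquiv]

@[simp] lemma thetaAut_of {n : ℕ} (i : Fin n) (k : Fin n) :
    thetaAut i (FreeGroup.of k)
      = if k = i then (FreeGroup.of i)⁻¹ else FreeGroup.of k := by
  simp [thetaAut, MonoidHom.toMulEquiv]

lemma mulAut_ext {α : Type*} {f g : MulAut (FreeGroup α)}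
    (h : ∀ a, f (FreeGroup.of a) = g (FreeGroup.of a)) : f = g :=
  MulEquiv.toMonoidHom_injective (FreeGroup.ext_hom _ _ h)

lemma nielsen_nielsen_comm {n : ℕ} {a b c d : Fin n} (hab : a ≠ b) (hcd : c ≠ d)
    (h1 : a ≠ c) (h2 : b ≠ c) (h3 : d ≠ a) :
    nielsen a b hab * nielsen c d hcd = nielsen c d hcd * nielsen a b hab := by
  apply mulAut_ext; intro k
  show nielsen a b hab (nielsen c d hcd (FreeGroup.of k))
      = nielsen c d hcd (nielsen a b hab (FreeGroup.of k))
  by_cases hk1 : k = a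
  · subst hk1
    simp [h1, h2, h3, map_mul]
  · by_cases hk2 : k = c
    · subst hk2
      simp [Ne.symm h1, h3, hk1, map_mul]
    · simp [hk1, hk2]

lemma nielsen_rho_comm {n : ℕ} {a b c d : Fin n} (hab : a ≠ b) (hcd : c ≠ d)
    (h1 : a ≠ c) (h2 : b ≠ c) (h3 : d ≠ a) :
    nielsen a b hab * rho c d hcd = rho c d hcd * nielsen a b hab := by
  apply mulAut_ext; intro k
  show nielsen a b hab (rho c d hcd (FreeGroup.of k))
      = rho c d hcd (nielsen a b hab (FreeGroup.of k))
  by_cases hk1 : k = a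
  · subst hk1
    simp [h1, h2, h3, map_mul]
  · by_cases hk2 : k = c
    · subst hk2
      simp [Ne.symm h1, h3, hk1, map_mul]
    · simp [hk1, hk2]

lemma nielsen_rho_same_comm {n : ℕ} {t s r : Fin n} (hts : t ≠ s) (htr : t ≠ r) :
    nielsen t s hts * rho t r htr = rho t r htr * nielsen t s hts := by
  apply mulAut_ext; intro k
  show nielsen t s hts (rho t r htr (FreeGroup.of k))
      = rho t r htr (nielsen t s hts (FreeGroup.of k))
  by_cases hk : k = t
  · subst hk
    simp [Ne.symm hts, Ne.symm htr, map_mul, mul_assoc]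
  · simp [hk]

lemma steinberg_rel {n : ℕ} {t s r : Fin n} (hts : t ≠ s) (hsr : s ≠ r) (htr : t ≠ r) :
    nielsen s r hsr * nielsen t s hts
      = nielsen t s hts * (nielsen s r hsr * nielsen t r htr) := by
  apply mulAut_ext; intro k
  show nielsen s r hsr (nielsen t s hts (FreeGroup.of k))
      = nielsen t s hts (nielsen s r hsr (nielsen t r htr (FreeGroup.of k)))
  by_cases hk1 : k = t
  · subst hk1
    simp [hts, htr, Ne.symm hsr, Ne.symm hts, Ne.symm htr, map_mul, mul_assoc]
  · by_cases hk2 : k = s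
    · subst hk2
      simp [hsr, Ne.symm hts, Ne.symm htr, hk1, map_mul]
    · by_cases hk3 : k = r
      · subst hk3
        simp [hk1, hk2, Ne.symm htr, Ne.symm hsr]
      · simp [hk1, hk2, hk3]

lemma theta_rho_rel {n : ℕ} {j r : Fin n} (hjr : j ≠ r) :
    rho j r hjr * thetaAut j = thetaAut j * (nielsen j r hjr)⁻¹ := by
  apply mulAut_ext; intro k
  show rho j r hjr (thetaAut j (FreeGroup.of k))
      = thetaAut j ((nielsen j r hjr)⁻¹ (FreeGroup.of k))
  rw [nielsen_inv_of]
  by_cases hk : k = j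
  · subst hk
    simp [Ne.symm hjr, map_mul, map_inv, mul_inv_rev]
  · simp [hk]

lemma perm_nielsen {n : ℕ} (σ : Equiv.Perm (Fin n)) {a b i j : Fin n}
    (hab : a ≠ b) (hij : i ≠ j) (ha : σ a = i) (hb : σ b = j) :
    (FreeGroup.freeGroupCongr σ : MulAut (FreeGroup (Fin n))) * nielsen a b hab
      = nielsen i j hij * (FreeGroup.freeGroupCongr σ : MulAut (FreeGroup (Fin n))) := by
  apply mulAut_ext; intro k
  show FreeGroup.freeGroupCongr σ (nielsen a b hab (FreeGroup.of k))
      = nielsen i j hij (FreeGroup.freeGroupCongr σ (FreeGroup.of k))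
  by_cases hk : k = a
  · subst hk
    simp [ha, hb, map_mul]
  · have hski : σ k ≠ i := fun hc => hk (σ.injective (by rw [hc, ← ha]))
    simp [hk, hski]

lemma pi_hom_ext {ι : Type*} [Fintype ι] [DecidableEq ι] {N : ι → Type*}
    [∀ i, CommGroup (N i)] {M : Type*} [Monoid M] (f g : (∀ i, N i) →* M)
    (h : ∀ i x, f (Pi.mulSingle i x) = g (Pi.mulSingle i x)) (c : ∀ i, N i) :
    f c = g c := by
  have hc : c = ∏ i, Pi.mulSingle i (c i) := (Finset.univ_prod_mulSingle c).symm
  rw [hc, ← Finset.prod_map_toList, map_list_prod, map_list_prod]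
  congr 1
  simp only [List.map_map]
  exact List.map_congr_left fun i _ => h i (c i)

lemma commute_map {A G : Type*} [Group A] [Group G] (φ : A →* G) {a b : A}
    (h : a * b = b * a) : Commute (φ a) (φ b) := by
  unfold Commute SemiconjBy
  rw [← map_mul, ← map_mul, h]

/-- **Proposition G / Proposition 3.** Let `n ≥ 3`. If `G` is a group that does not contain
a free abelian group of rank `n - 1` (i.e. there is no injective homomorphism
`ℤ^{n-1} → G`), then every homomorphism `φ : Aut(F_n) → G` factors through `Q_{n,m}` for
some `m ≥ 1`; equivalently, there is `m ≥ 1` with `φ(λ_{ij})^m = 1` for all `i ≠ j`. -/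
theorem aut_free_hom_factors_through_Q (n : ℕ) (hn : 3 ≤ n)
    (G : Type*) [Group G]
    (hG : ¬ ∃ ψ : Multiplicative (Fin (n - 1) → ℤ) →* G, Function.Injective ψ)
    (φ : MulAut (FreeGroup (Fin n)) →* G) :
    ∃ m : ℕ, 1 ≤ m ∧ ∀ (i j : Fin n) (h : i ≠ j), (φ (nielsen i j h)) ^ m = 1 := by
  classical
  set r0 : Fin n := ⟨0, by omega⟩ with hr0def
  set j1 : Fin n := ⟨1, by omega⟩ with hj1def
  have hj1r0 : j1 ≠ r0 := by simp [hj1def, hr0def, Fin.ext_iff]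
  set emb : Fin (n - 1) → Fin n := fun t => ⟨t.1 + 1, by omega⟩ with hembdef
  have hembr0 : ∀ t, emb t ≠ r0 := fun t => by simp [hembdef, hr0def, Fin.ext_iff]
  have hembinj : Function.Injective emb := fun t u h =>
    Fin.ext (by have := congrArg Fin.val h; simpa [hembdef] using this)
  have hembj1 : ∀ t : Fin (n - 1), t.1 ≠ 0 → emb t ≠ j1 := fun t ht => by
    simp only [hembdef, hj1def, Fin.ext_iff, ne_eq]
    omega
  set xj : G := φ (nielsen j1 r0 hj1r0) with hxjdef
  set y : Fin (n - 1) → G :=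
    fun t => if t.1 = 0 then φ (rho j1 r0 hj1r0) else φ (nielsen (emb t) r0 (hembr0 t))
    with hydef
  have hyy : ∀ t u : Fin (n - 1), t ≠ u → Commute (y t) (y u) := by
    intro t u htu
    have htu' : t.1 ≠ u.1 := fun hc => htu (Fin.ext hc)
    by_cases ht : t.1 = 0 <;> by_cases hu : u.1 = 0
    · omega
    · simp only [hydef, ht, hu, if_true, if_false]
      exact (commute_map φ (nielsen_rho_comm (hembr0 u) hj1r0 (hembj1 u hu)
        (Ne.symm hj1r0) (Ne.symm (hembr0 u)))).symm
    · simp only [hydef, ht, hu, if_true, if_false]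
      exact commute_map φ (nielsen_rho_comm (hembr0 t) hj1r0 (hembj1 t ht)
        (Ne.symm hj1r0) (Ne.symm (hembr0 t)))
    · simp only [hydef, ht, hu, if_false]
      exact commute_map φ (nielsen_nielsen_comm (hembr0 t) (hembr0 u)
        (fun hc => htu (hembinj hc)) (Ne.symm (hembr0 u)) (Ne.symm (hembr0 t)))
  have hxy : ∀ t, Commute xj (y t) := by
    intro t
    by_cases ht : t.1 = 0
    · simp only [hydef, ht, if_true]
      exact commute_map φ (nielsen_rho_same_comm hj1r0 hj1r0)
    · simp only [hydef, ht, if_false]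
      exact commute_map φ (nielsen_nielsen_comm hj1r0 (hembr0 t)
        (Ne.symm (hembj1 t ht)) (Ne.symm (hembr0 t)) (Ne.symm hj1r0))
  set ϕf : ∀ _ : Fin (n - 1), Multiplicative ℤ →* G := fun t => zpowersHom G (y t) with hϕfdef
  have hcomm : Pairwise fun t u => ∀ (a b : Multiplicative ℤ), Commute (ϕf t a) (ϕf u b) := by
    intro t u htu a b
    simpa [hϕfdef, zpowersHom_apply] using ((hyy t u htu).zpow_zpow _ _)
  set Ψ : (∀ _ : Fin (n - 1), Multiplicative ℤ) →* G :=
    MonoidHom.noncommPiCoprod ϕf hcomm with hΨdef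
  have hΨsingle : ∀ (t : Fin (n - 1)) (z : Multiplicative ℤ),
      Ψ (Pi.mulSingle t z) = y t ^ (Multiplicative.toAdd z) := by
    intro t z
    rw [hΨdef, MonoidHom.noncommPiCoprod_mulSingle]
    rfl
  have hxΨ : ∀ c, Commute xj (Ψ c) :=
    fun c => MonoidHom.commute_noncommPiCoprod ϕf (fun i x => (hxy i).zpow_right _) c
  -- extract a nontrivial kernel element
  have hE : ∃ cc : ∀ _ : Fin (n - 1), Multiplicative ℤ, cc ≠ 1 ∧ Ψ cc = 1 := by
    by_contra hco
    push_neg at hco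
    apply hG
    set E : Multiplicative (Fin (n - 1) → ℤ) →* (∀ _ : Fin (n - 1), Multiplicative ℤ) :=
      MonoidHom.mk' (fun c t => Multiplicative.ofAdd (Multiplicative.toAdd c t))
        (fun a b => rfl) with hEdef
    refine ⟨Ψ.comp E, ?_⟩
    intro a b hab
    simp only [MonoidHom.comp_apply] at hab
    have h1 : Ψ (E (a * b⁻¹)) = 1 := by
      rw [map_mul, map_mul, map_inv, map_inv, hab, mul_inv_cancel]
    have h2 : E (a * b⁻¹) = 1 := by
      by_contra hne
      exact hco _ hne h1
    have h3 : ∀ t, Multiplicative.toAdd a t = Multiplicative.toAdd b t := by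
      intro t
      have h4 : Multiplicative.ofAdd (Multiplicative.toAdd (a * b⁻¹) t) = 1 :=
        congrFun h2 t
      have h5 : Multiplicative.toAdd (a * b⁻¹) t = 0 := by rw [← ofAdd_eq_one]; exact h4
      simp only [toAdd_mul, toAdd_inv, Pi.add_apply, Pi.neg_apply] at h5
      omega
    have : Multiplicative.toAdd a = Multiplicative.toAdd b := funext h3
    exact Multiplicative.toAdd.injective this
  obtain ⟨cc, hcc1, hccΨ⟩ := hE
  have finish1 : ∀ d : ℤ, d ≠ 0 → xj ^ d = 1 → ∃ m : ℕ, 1 ≤ m ∧ xj ^ m = 1 := by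
    intro d hd hxd
    refine ⟨d.natAbs, Int.natAbs_pos.mpr hd, ?_⟩
    have h2 : xj ^ (d.natAbs : ℤ) = 1 := by
      rcases Int.natAbs_eq d with h | h
      · rw [← h]; exact hxd
      · rw [h, zpow_neg, inv_eq_one] at hxd; exact hxd
    rw [← zpow_natCast]
    exact h2
  have main : ∃ m : ℕ, 1 ≤ m ∧ xj ^ m = 1 := by
    by_cases hcase : ∃ s : Fin (n - 1), s.1 ≠ 0 ∧ cc s ≠ 1
    · obtain ⟨s, hs0, hs1⟩ := hcase
      have hd : Multiplicative.toAdd (cc s) ≠ 0 := fun hc =>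
        hs1 (by rw [← ofAdd_toAdd (cc s), hc]; rfl)
      set g : G := φ (nielsen j1 (emb s) (Ne.symm (hembj1 s hs0))) with hgdef
      have hys : y s = φ (nielsen (emb s) r0 (hembr0 s)) := by simp [hydef, hs0]
      have hconj : g⁻¹ * y s * g = y s * xj := by
        have hrel := steinberg_rel (t := j1) (s := emb s) (r := r0)
          (Ne.symm (hembj1 s hs0)) (hembr0 s) hj1r0
        have hφ := congrArg φ hrel
        rw [map_mul, map_mul, map_mul] at hφ
        rw [hys, hxjdef, hgdef]
        rw [mul_assoc, hφ, ← mul_assoc, inv_mul_cancel, one_mul]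
      set F1 : (∀ _ : Fin (n - 1), Multiplicative ℤ) →* G :=
        ((MulAut.conj g⁻¹).toMonoidHom).comp Ψ with hF1def
      set F2 : (∀ _ : Fin (n - 1), Multiplicative ℤ) →* G :=
        MonoidHom.mk' (fun c => Ψ c * xj ^ (Multiplicative.toAdd (c s))) (by
          intro a b
          have hcb : Commute (xj ^ (Multiplicative.toAdd (a s))) (Ψ b) := (hxΨ b).zpow_left _
          show Ψ (a * b) * xj ^ (Multiplicative.toAdd ((a * b) s)) = _
          have htoadd : Multiplicative.toAdd ((a * b) s)
              = Multiplicative.toAdd (a s) + Multiplicative.toAdd (b s) := rfl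
          rw [map_mul, htoadd, zpow_add, mul_assoc (Ψ a), ← mul_assoc (Ψ b), ← hcb.eq,
            mul_assoc, ← mul_assoc (Ψ a)]) with hF2def
      have hsingle : ∀ t z, F1 (Pi.mulSingle t z) = F2 (Pi.mulSingle t z) := by
        intro t z
        have hF1v : F1 (Pi.mulSingle t z)
            = g⁻¹ * (y t ^ Multiplicative.toAdd z) * g := by
          simp [hF1def, hΨsingle, MulAut.conj_apply]
        have hF2v : F2 (Pi.mulSingle t z)
            = y t ^ Multiplicative.toAdd z
              * xj ^ (Multiplicative.toAdd
                  ((Pi.mulSingle t z : ∀ _ : Fin (n - 1), Multiplicative ℤ) s)) := by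
          rw [show F2 (Pi.mulSingle t z)
              = Ψ (Pi.mulSingle t z) * xj ^ (Multiplicative.toAdd
                  ((Pi.mulSingle t z : ∀ _ : Fin (n - 1), Multiplicative ℤ) s)) from rfl,
            hΨsingle]
        rw [hF1v, hF2v]
        by_cases hts : t = s
        · rw [hts, Pi.mulSingle_eq_same]
          have hc2 : (g⁻¹ * y s * g) ^ (Multiplicative.toAdd z)
              = g⁻¹ * y s ^ (Multiplicative.toAdd z) * g := by
            have := conj_zpow (i := Multiplicative.toAdd z) (a := g⁻¹) (b := y s)
            simpa [inv_inv] using this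
          rw [← hc2, hconj, (hxy s).symm.mul_zpow]
        · rw [Pi.mulSingle_eq_of_ne (fun hc => hts hc.symm)]
          simp only [toAdd_one, zpow_zero, mul_one]
          have hgy : Commute g (y t) := by
            by_cases ht : t.1 = 0
            · simp only [hydef, ht, if_true, hgdef]
              exact commute_map φ (nielsen_rho_same_comm (Ne.symm (hembj1 s hs0)) hj1r0)
            · simp only [hydef, ht, if_false, hgdef]
              exact commute_map φ (nielsen_nielsen_comm (Ne.symm (hembj1 s hs0)) (hembr0 t)
                (Ne.symm (hembj1 t ht)) (fun hc => hts (hembinj hc).symm) (Ne.symm hj1r0))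
          have hgyk := hgy.zpow_right (Multiplicative.toAdd z)
          rw [mul_assoc, ← hgyk.eq, inv_mul_cancel_left]
      have hkey := pi_hom_ext F1 F2 hsingle cc
      have hF1cc : F1 cc = 1 := by
        simp [hF1def, hccΨ]
      have hF2cc : F2 cc = xj ^ (Multiplicative.toAdd (cc s)) := by
        rw [show F2 cc = Ψ cc * xj ^ (Multiplicative.toAdd (cc s)) from rfl, hccΨ, one_mul]
      rw [hF1cc, hF2cc] at hkey
      exact finish1 _ hd hkey.symm
    · push_neg at hcase
      set z0 : Fin (n - 1) := ⟨0, by omega⟩ with hz0def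
      have hccz : cc = Pi.mulSingle z0 (cc z0) := by
        funext t
        by_cases ht : t = z0
        · rw [ht, Pi.mulSingle_eq_same]
        · have ht' : t.1 ≠ 0 := fun hc => ht (Fin.ext (by simp [hz0def, hc]))
          rw [Pi.mulSingle_eq_of_ne ht]
          exact hcase t ht'
      have hd : Multiplicative.toAdd (cc z0) ≠ 0 := by
        intro hc
        apply hcc1
        rw [hccz]
        have hone : cc z0 = 1 := by rw [← ofAdd_toAdd (cc z0), hc]; rfl
        rw [hone]
        simp
      have h1 : y z0 ^ (Multiplicative.toAdd (cc z0)) = 1 := by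
        rw [← hΨsingle, ← hccz, hccΨ]
      have hyz0 : y z0 = φ (rho j1 r0 hj1r0) := by simp [hydef, hz0def]
      have hth := congrArg φ (theta_rho_rel hj1r0)
      rw [map_mul, map_mul, map_inv] at hth
      set T : G := φ (thetaAut j1) with hTdef
      have hrhoval : φ (rho j1 r0 hj1r0) = T * xj⁻¹ * T⁻¹ := by
        rw [← hth, mul_assoc, mul_inv_cancel, mul_one]
      rw [hyz0, hrhoval, conj_zpow] at h1
      have h2 : (xj⁻¹) ^ (Multiplicative.toAdd (cc z0)) = 1 := by
        have h3 : T * (xj⁻¹) ^ (Multiplicative.toAdd (cc z0)) * T⁻¹ = T * 1 * T⁻¹ := by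
          rw [h1]; simp
        exact mul_left_cancel (mul_right_cancel h3)
      rw [inv_zpow, ← zpow_neg] at h2
      exact finish1 _ (by omega) h2
  obtain ⟨m, hm1, hmx⟩ := main
  refine ⟨m, hm1, ?_⟩
  intro i j hij
  set τ1 : Equiv.Perm (Fin n) := Equiv.swap r0 j with hτ1def
  set b' : Fin n := τ1 j1 with hb'def
  set τ2 : Equiv.Perm (Fin n) := Equiv.swap b' i with hτ2def
  set σ : Equiv.Perm (Fin n) := τ1.trans τ2 with hσdef
  have hjb' : j ≠ b' := by
    intro hc
    have : τ1 r0 = τ1 j1 := by rw [Equiv.swap_apply_left, hc, hb'def]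
    exact hj1r0 (τ1.injective this).symm
  have hσr0 : σ r0 = j := by
    have h1 : τ1 r0 = j := Equiv.swap_apply_left r0 j
    have h2 : τ2 j = j := Equiv.swap_apply_of_ne_of_ne hjb' (Ne.symm hij)
    simp [hσdef, Equiv.trans_apply, h1, h2]
  have hσj1 : σ j1 = i := by
    have h2 : τ2 b' = i := Equiv.swap_apply_left b' i
    simp [hσdef, Equiv.trans_apply, ← hb'def, h2]
  have hperm := congrArg φ (perm_nielsen σ hj1r0 hij hσj1 hσr0)
  rw [map_mul, map_mul] at hperm
  set P : G := φ (FreeGroup.freeGroupCongr σ : MulAut (FreeGroup (Fin n))) with hPdef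
  have hval : φ (nielsen i j hij) = P * xj * P⁻¹ := by
    rw [hxjdef, hperm, mul_assoc, mul_inv_cancel, mul_one]
  rw [hval, conj_pow, hmx, mul_one, mul_inv_cancel]
end

section
/- Let n ≥ 3 and m ≥ 1. Then Q_{n,m} surjects onto a group that contains a copy of the free Burnside group of exponent m on n−1 generators: there exist a group G, a surjective group homomorphism Q_{n,m} → G, and an injective group homomorphism B_{n−1,m} → G. -/
/-- The quotient `Q_{n,m}` of `Aut(F_n)` by the normal closure of the `m`-th powers of all
Nielsen transformations `λ_{ij}`, `i ≠ j`. -/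
def Qgrp (n m : ℕ) : Type :=
  MulAut (FreeGroup (Fin n)) ⧸
    Subgroup.normalClosure {x | ∃ (i j : Fin n) (h : i ≠ j), x = (nielsen i j h) ^ m}

noncomputable instance (n m : ℕ) : Group (Qgrp n m) :=
  inferInstanceAs (Group (_ ⧸ _))

/-- The free Burnside group `B_{k,m}` of exponent `m` on `k` generators: the quotient of the
free group on `k` generators by the normal closure of the set of `m`-th powers. -/
def Burnside (k m : ℕ) : Type :=
  FreeGroup (Fin k) ⧸ Subgroup.normalClosure {x : FreeGroup (Fin k) | ∃ w, x = w ^ m}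

noncomputable instance (k m : ℕ) : Group (Burnside k m) :=
  inferInstanceAs (Group (_ ⧸ _))

/-!
`Aut(F_n)` acts on `B_{n,m}`, because the normal closure of the `m`-th powers is fully invariant,
and `λ_{ij}^m` acts trivially there since it sends `a_i` to `a_j^m a_i`. Hence `Q_{n,m}` maps onto
the image `G` of this action. Sending the generators of `F_{n-1}` to the `λ_{n,j}^{-1}`, `j < n`,
gives a homomorphism `F_{n-1} → Aut(F_n)` under which a word `w` acts by `a_n ↦ w⁻¹ a_n`, fixing
the other generators. On `B_{n,m}` the power `w^m` then acts trivially, and the induced map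
`B_{n-1,m} → G` is injective because `B_{n-1,m}` is a retract of `B_{n,m}` (kill `a_n`).
-/

open Subgroup

section powNormalClosure

variable (G : Type*) [Group G] (m : ℕ)

def powNormalClosure : Subgroup G :=
  normalClosure {x : G | ∃ w, x = w ^ m}

instance powNormalClosure_normal : (powNormalClosure G m).Normal :=
  normalClosure_normal

variable {G} {H : Type*} [Group H]

theorem powNormalClosure_le_comap (f : G →* H) :
    powNormalClosure G m ≤ (powNormalClosure H m).comap f := by
  have := (powNormalClosure_normal H m).comap f
  refine normalClosure_le_normal ?_
  rintro _ ⟨w, rfl⟩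
  exact subset_normalClosure ⟨f w, map_pow f w m⟩

instance powNormalClosure_characteristic : (powNormalClosure G m).Characteristic :=
  characteristic_iff_le_comap.2 fun φ => powNormalClosure_le_comap m φ.toMonoidHom

theorem pow_mk_powNormalClosure_eq_one (x : G) : (x : G ⧸ powNormalClosure G m) ^ m = 1 := by
  rw [← QuotientGroup.mk_pow, QuotientGroup.eq_one_iff]
  exact subset_normalClosure ⟨x, rfl⟩

end powNormalClosure

def MulAut.quotient {G : Type*} [Group G] (N : Subgroup G) [N.Characteristic] :
    MulAut G →* MulAut (G ⧸ N) where
  toFun φ := QuotientGroup.congr N N φ (characteristic_iff_map_eq.1 ‹_› φ)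
  map_one' := MulEquiv.ext fun x => QuotientGroup.induction_on x fun _ => rfl
  map_mul' _ _ := MulEquiv.ext fun x => QuotientGroup.induction_on x fun _ => rfl

theorem MulAut.quotient_eq_one_of_apply_of {α : Type*} (N : Subgroup (FreeGroup α))
    [N.Characteristic] (φ : MulAut (FreeGroup α))
    (h : ∀ a, (φ (FreeGroup.of a) : FreeGroup α ⧸ N) = FreeGroup.of a) :
    MulAut.quotient N φ = 1 := by
  have hcomp : (QuotientGroup.mk' N).comp φ.toMonoidHom = QuotientGroup.mk' N :=
    FreeGroup.ext_hom _ _ h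
  exact MulEquiv.ext fun x => QuotientGroup.induction_on x fun y => DFunLike.congr_fun hcomp y

section nielsen

variable {n : ℕ} (i j : Fin n) (h : i ≠ j)

theorem nielsen_apply_of (k : Fin n) :
    nielsen i j h (FreeGroup.of k) =
      if k = i then FreeGroup.of j * FreeGroup.of i else FreeGroup.of k :=
  FreeGroup.lift_apply_of

theorem nielsen_inv_apply_of (k : Fin n) :
    (nielsen i j h)⁻¹ (FreeGroup.of k) =
      if k = i then (FreeGroup.of j)⁻¹ * FreeGroup.of i else FreeGroup.of k :=
  FreeGroup.lift_apply_of

theorem nielsen_pow_apply_of_ne (p : ℕ) {k : Fin n} (hk : k ≠ i) :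
    (nielsen i j h ^ p) (FreeGroup.of k) = FreeGroup.of k := by
  induction p with
  | zero => rfl
  | succ p ih => rw [pow_succ, MulAut.mul_apply, nielsen_apply_of, if_neg hk, ih]

theorem nielsen_pow_apply_of_self (p : ℕ) :
    (nielsen i j h ^ p) (FreeGroup.of i) = FreeGroup.of j ^ p * FreeGroup.of i := by
  induction p with
  | zero => simp
  | succ p ih =>
    rw [pow_succ', MulAut.mul_apply, ih, map_mul, map_pow, nielsen_apply_of i j h j,
      if_neg h.symm, nielsen_apply_of i j h i, if_pos rfl, ← mul_assoc, ← pow_succ]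

theorem MulAut.quotient_powNormalClosure_nielsen_pow (m : ℕ) :
    MulAut.quotient (powNormalClosure _ m) (nielsen i j h ^ m) = 1 := by
  refine MulAut.quotient_eq_one_of_apply_of _ _ fun k => ?_
  by_cases hk : k = i
  · subst hk
    rw [nielsen_pow_apply_of_self, QuotientGroup.mk_mul, QuotientGroup.mk_pow,
      pow_mk_powNormalClosure_eq_one, one_mul]
  · rw [nielsen_pow_apply_of_ne i j h m hk]

end nielsen

theorem normalClosure_nielsen_pow_le_ker (n m : ℕ) :
    normalClosure {x | ∃ (i j : Fin n) (h : i ≠ j), x = (nielsen i j h) ^ m} ≤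
      (MulAut.quotient (powNormalClosure (FreeGroup (Fin n)) m)).ker := by
  refine normalClosure_le_normal ?_
  rintro _ ⟨i, j, h, rfl⟩
  exact MulAut.quotient_powNormalClosure_nielsen_pow i j h m

noncomputable def Qgrp.toMulAutBurnside (n m : ℕ) : Qgrp n m →* MulAut (Burnside n m) :=
  QuotientGroup.lift _ _ (normalClosure_nielsen_pow_le_ker n m)

section lastGenerator

variable (k : ℕ)

noncomputable def nielsenLastInv : FreeGroup (Fin k) →* MulAut (FreeGroup (Fin (k + 1))) :=
  FreeGroup.lift fun j => (nielsen (Fin.last k) j.castSucc (Fin.castSucc_lt_last j).ne')⁻¹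

theorem nielsenLastInv_apply_of_castSucc (w : FreeGroup (Fin k)) (j : Fin k) :
    nielsenLastInv k w (FreeGroup.of j.castSucc) = FreeGroup.of j.castSucc := by
  suffices (nielsenLastInv k).range ≤ MulAction.stabilizer _ (FreeGroup.of j.castSucc) from
    this ⟨w, rfl⟩
  refine FreeGroup.range_lift_le ?_
  rintro _ ⟨i, rfl⟩
  exact (nielsen_inv_apply_of _ _ _ _).trans (if_neg (Fin.castSucc_lt_last j).ne)

theorem nielsenLastInv_apply_map_castSucc (w v : FreeGroup (Fin k)) :
    nielsenLastInv k w (FreeGroup.map Fin.castSucc v) = FreeGroup.map Fin.castSucc v := by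
  have hcomp : (nielsenLastInv k w).toMonoidHom.comp (FreeGroup.map Fin.castSucc) =
      FreeGroup.map Fin.castSucc :=
    FreeGroup.ext_hom _ _ fun j => nielsenLastInv_apply_of_castSucc k w j
  exact DFunLike.congr_fun hcomp v

theorem nielsenLastInv_apply_of_last (w : FreeGroup (Fin k)) :
    nielsenLastInv k w (FreeGroup.of (Fin.last k)) =
      (FreeGroup.map Fin.castSucc w)⁻¹ * FreeGroup.of (Fin.last k) := by
  induction w using FreeGroup.induction_on with
  | C1 => simp
  | of j =>
    rw [nielsenLastInv, FreeGroup.lift_apply_of, nielsen_inv_apply_of, if_pos rfl, FreeGroup.map.of]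
  | inv_of j _ =>
    rw [map_inv, nielsenLastInv, FreeGroup.lift_apply_of, inv_inv, nielsen_apply_of, if_pos rfl,
      map_inv, FreeGroup.map.of, inv_inv]
  | mul x y ihx ihy =>
    rw [map_mul, MulAut.mul_apply, ihy, map_mul, map_inv, nielsenLastInv_apply_map_castSucc, ihx,
      map_mul, mul_inv_rev, mul_assoc]

noncomputable def FreeGroup.dropLast : FreeGroup (Fin (k + 1)) →* FreeGroup (Fin k) :=
  FreeGroup.lift (Fin.lastCases 1 FreeGroup.of)

theorem FreeGroup.dropLast_map_castSucc (w : FreeGroup (Fin k)) :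
    FreeGroup.dropLast k (FreeGroup.map Fin.castSucc w) = w := by
  have hcomp : (FreeGroup.dropLast k).comp (FreeGroup.map Fin.castSucc) = MonoidHom.id _ :=
    FreeGroup.ext_hom _ _ fun j => by simp [FreeGroup.dropLast]
  exact DFunLike.congr_fun hcomp w

variable (m : ℕ)

theorem powNormalClosure_le_ker_nielsenLastInv :
    powNormalClosure (FreeGroup (Fin k)) m ≤
      ((MulAut.quotient (powNormalClosure (FreeGroup (Fin (k + 1))) m)).comp
        (nielsenLastInv k)).ker := by
  refine normalClosure_le_normal ?_
  rintro _ ⟨w, rfl⟩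
  refine MulAut.quotient_eq_one_of_apply_of _ _ (Fin.lastCases ?_ fun j => ?_)
  · rw [nielsenLastInv_apply_of_last, QuotientGroup.mk_mul, QuotientGroup.mk_inv, map_pow,
      QuotientGroup.mk_pow, pow_mk_powNormalClosure_eq_one, inv_one, one_mul]
  · rw [nielsenLastInv_apply_of_castSucc]

noncomputable def Burnside.toMulAutSucc : Burnside k m →* MulAut (Burnside (k + 1) m) :=
  QuotientGroup.lift _ _ (powNormalClosure_le_ker_nielsenLastInv k m)

theorem Burnside.toMulAutSucc_injective : Function.Injective (Burnside.toMulAutSucc k m) := by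
  refine (injective_iff_map_eq_one _).2 fun b => QuotientGroup.induction_on b fun w hw => ?_
  have hlast : (nielsenLastInv k w (FreeGroup.of (Fin.last k)) :
      FreeGroup (Fin (k + 1)) ⧸ powNormalClosure _ m) = FreeGroup.of (Fin.last k) :=
    congrArg (· (FreeGroup.of (Fin.last k) : FreeGroup _ ⧸ powNormalClosure _ m)) hw
  rw [nielsenLastInv_apply_of_last, QuotientGroup.mk_mul, mul_eq_right, QuotientGroup.mk_inv,
    inv_eq_one, QuotientGroup.eq_one_iff] at hlast
  refine (QuotientGroup.eq_one_iff (N := powNormalClosure _ m) w).2 ?_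
  rw [← FreeGroup.dropLast_map_castSucc k w]
  exact powNormalClosure_le_comap m _ hlast

theorem Burnside.range_toMulAutSucc_le :
    (Burnside.toMulAutSucc k m).range ≤ (Qgrp.toMulAutBurnside (k + 1) m).range := by
  rintro _ ⟨b, rfl⟩
  induction b using QuotientGroup.induction_on with
  | H w => exact ⟨QuotientGroup.mk (nielsenLastInv k w), rfl⟩

end lastGenerator

theorem Qgrp_surjects_onto_group_containing_burnside_general (n m : ℕ) (hn : 3 ≤ n) :
    ∃ (G : Type) (_ : Group G) (f : Qgrp n m →* G) (g : Burnside (n - 1) m →* G),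
      Function.Surjective f ∧ Function.Injective g := by
  obtain ⟨k, rfl⟩ : ∃ k, n = k + 1 := ⟨n - 1, by omega⟩
  let f := Qgrp.toMulAutBurnside (k + 1) m
  let g := (Burnside.toMulAutSucc k m).codRestrict f.range
    fun b => Burnside.range_toMulAutSucc_le k m ⟨b, rfl⟩
  -- `g` is accepted as a map on `Burnside (k + 1 - 1) m` because `k + 1 - 1` reduces to `k`.
  refine ⟨f.range, inferInstance, f.rangeRestrict, g, f.rangeRestrict_surjective, ?_⟩
  exact fun a b hab => Burnside.toMulAutSucc_injective k m (congrArg Subtype.val hab)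

/-- **Proposition F.** For `n ≥ 3` and `m ≥ 1`, the group `Q_{n,m}` surjects onto a group
that contains a copy of the free Burnside group of exponent `m` on `n - 1` generators. -/
theorem Qgrp_surjects_onto_group_containing_burnside (n m : ℕ) (hn : 3 ≤ n) (hm : 1 ≤ m) :
    ∃ (G : Type) (_ : Group G) (f : Qgrp n m →* G) (g : Burnside (n - 1) m →* G),
      Function.Surjective f ∧ Function.Injective g :=
  Qgrp_surjects_onto_group_containing_burnside_general n m hn
end
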